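/- arXiv:1304.5160 — 13 statements merged into one kernel-verified Lean document; each statement's English description precedes it below -/
import Mathlib

section
/- If f is a positive function on [1,∞) such that (log f)'' is completely monotonic on [1,∞), then the sequence a_n = f(n) for n ≥ 1 is infinitely log-monotonic. -/
/-- The ratio operator on sequences: `R{a_n} = {a_{n+1}/a_n}`. -/
noncomputable def ratioOp (a : ℕ → ℝ) : ℕ → ℝ := fun n => a (n+1) / a n

/-- The forward difference operator on real functions. -/
noncomputable def Dfun (h : ℝ → ℝ) : ℝ → ℝ := fun x => h (x+1) - h x

lemma Dfun_cont {h : ℝ → ℝ} (hc : ContinuousOn h (Set.Ici 1)) :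
    ContinuousOn (Dfun h) (Set.Ici 1) := by
  apply ContinuousOn.sub _ hc
  exact hc.comp (continuous_id.add continuous_const).continuousOn
    (fun x hx => by simp only [Set.mem_Ici] at hx ⊢; linarith)

lemma Dfun_iter_cont {h : ℝ → ℝ} (hc : ContinuousOn h (Set.Ici 1)) (k : ℕ) :
    ContinuousOn (Dfun^[k] h) (Set.Ici 1) := by
  induction k generalizing h with
  | zero => exact hc
  | succ k ih => rw [Function.iterate_succ_apply]; exact ih (Dfun_cont hc)

lemma Dfun_deriv {h h' : ℝ → ℝ} (hd : ∀ x > (1:ℝ), HasDerivAt h (h' x) x) :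
    ∀ x > (1:ℝ), HasDerivAt (Dfun h) (Dfun h' x) x := by
  intro x hx
  have h1 : HasDerivAt (fun y => h (y+1)) (h' (x+1)) x := by
    have := (hd (x+1) (by linarith)).comp x ((hasDerivAt_id x).add_const 1)
    rw [mul_one] at this
    exact this
  exact h1.sub (hd x hx)

lemma Dfun_iter_deriv {h h' : ℝ → ℝ} (hd : ∀ x > (1:ℝ), HasDerivAt h (h' x) x) (k : ℕ) :
    ∀ x > (1:ℝ), HasDerivAt (Dfun^[k] h) (Dfun^[k] h' x) x := by
  induction k generalizing h h' with
  | zero => exact hd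
  | succ k ih =>
    intro x hx
    rw [Function.iterate_succ_apply, Function.iterate_succ_apply]
    exact ih (Dfun_deriv hd) x hx

theorem stmt_1 (f : ℝ → ℝ) (hf : ∀ x ≥ (1:ℝ), 0 < f x)
    (hsm : ContDiffOn ℝ (⊤ : ℕ∞) (fun x => Real.log (f x)) (Set.Ici 1))
    (hcm : ∀ k : ℕ, 2 ≤ k → ∀ x ≥ (1:ℝ),
      0 ≤ (-1:ℝ)^k * iteratedDerivWithin k (fun x => Real.log (f x)) (Set.Ici 1) x)
    (a : ℕ → ℝ) (ha : ∀ n : ℕ, 1 ≤ n → a n = f n) :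
    ∀ r : ℕ,
      (∀ n : ℕ, 1 ≤ n →
        ((ratioOp^[2*r]) a (n+1))^2 ≤ (ratioOp^[2*r]) a n * (ratioOp^[2*r]) a (n+2)) ∧
      (∀ n : ℕ, 1 ≤ n →
        ((ratioOp^[2*r+1]) a (n+1))^2 ≥ (ratioOp^[2*r+1]) a n * (ratioOp^[2*r+1]) a (n+2)) := by
  set g : ℝ → ℝ := fun x => Real.log (f x) with hgdef
  set S : ℕ → ℝ → ℝ := fun m => iteratedDerivWithin m g (Set.Ici 1) with hSdef
  have hud : UniqueDiffOn ℝ (Set.Ici (1:ℝ)) := uniqueDiffOn_Ici 1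
  have hScont : ∀ m : ℕ, ContinuousOn (S m) (Set.Ici 1) := fun m =>
    hsm.continuousOn_iteratedDerivWithin (by exact_mod_cast le_top) hud
  have hSderiv : ∀ m : ℕ, ∀ x > (1:ℝ), HasDerivAt (S m) (S (m+1) x) x := by
    intro m x hx
    have hxm : x ∈ Set.Ici (1:ℝ) := le_of_lt hx
    have hlt : (m : WithTop ℕ∞) < ((⊤ : ℕ∞) : WithTop ℕ∞) := by
      exact_mod_cast ENat.coe_lt_top m
    have hdw : DifferentiableWithinAt ℝ (S m) (Set.Ici 1) x :=
      (hsm.differentiableOn_iteratedDerivWithin hlt hud) x hxm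
    have hmem : Set.Ici (1:ℝ) ∈ nhds x := Ici_mem_nhds hx
    have h1 := hdw.hasDerivWithinAt.hasDerivAt hmem
    have h2 : S (m+1) x = derivWithin (S m) (Set.Ici 1) x :=
      congrFun iteratedDerivWithin_succ x
    rw [h2]; exact h1
  -- the key sign result for iterated differences of iterated derivatives
  have key : ∀ k m : ℕ, 2 ≤ m + k → ∀ x, 1 ≤ x → 0 ≤ (-1:ℝ)^(m+k) * Dfun^[k] (S m) x := by
    intro k
    induction k with
    | zero =>
      intro m hm x hx
      simpa using hcm m (by simpa using hm) x hx
    | succ k ih =>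
      intro m hm x hx
      have hmono : MonotoneOn (fun y => (-1:ℝ)^(m+k+1) * Dfun^[k] (S m) y) (Set.Ici 1) := by
        apply monotoneOn_of_deriv_nonneg (convex_Ici 1)
        · exact continuousOn_const.mul (Dfun_iter_cont (hScont m) k)
        · intro y hy
          rw [interior_Ici] at hy
          exact ((Dfun_iter_deriv (hSderiv m) k y hy).const_mul
            ((-1:ℝ)^(m+k+1))).differentiableAt.differentiableWithinAt
        · intro y hy
          rw [interior_Ici] at hy
          have hder := (Dfun_iter_deriv (hSderiv m) k y hy).const_mul ((-1:ℝ)^(m+k+1))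
          rw [hder.deriv]
          have h3 := ih (m+1) (by omega) y (le_of_lt hy)
          have he : (m+1) + k = m + k + 1 := by omega
          rw [he] at h3
          exact h3
      have h1 : (fun y => (-1:ℝ)^(m+k+1) * Dfun^[k] (S m) y) x ≤
          (fun y => (-1:ℝ)^(m+k+1) * Dfun^[k] (S m) y) (x+1) :=
        hmono hx (by simp only [Set.mem_Ici]; linarith) (by linarith)
      simp only at h1
      have h2 : Dfun^[k+1] (S m) x = Dfun^[k] (S m) (x+1) - Dfun^[k] (S m) x := by
        rw [Function.iterate_succ_apply']; rfl
      have he : m + (k+1) = m + k + 1 := by omega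
      rw [he, h2, mul_sub]
      linarith
  have hg0 : S 0 = g := iteratedDerivWithin_zero
  have key2 : ∀ k : ℕ, 2 ≤ k → ∀ x : ℝ, 1 ≤ x → 0 ≤ (-1:ℝ)^k * Dfun^[k] g x := by
    intro k hk x hx
    have := key k 0 (by omega) x hx
    rwa [hg0, zero_add] at this
  -- the bridge: ratio iterates are exponentials of difference iterates
  have hexp : ∀ r : ℕ, ∀ n : ℕ, 1 ≤ n → (ratioOp^[r]) a n = Real.exp (Dfun^[r] g n) := by
    intro r
    induction r with
    | zero =>
      intro n hn
      simp only [Function.iterate_zero, id]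
      rw [ha n hn, hgdef]
      rw [Real.exp_log (hf n (by exact_mod_cast hn))]
    | succ r ih =>
      intro n hn
      rw [Function.iterate_succ_apply']
      show (ratioOp^[r]) a (n+1) / (ratioOp^[r]) a n = _
      rw [ih (n+1) (by omega), ih n hn, ← Real.exp_sub]
      congr 1
      rw [Function.iterate_succ_apply']
      show _ = Dfun (Dfun^[r] g) ↑n
      simp only [Dfun]
      push_cast
      ring
  intro r
  constructor
  · intro n hn
    have hn1 : (1:ℝ) ≤ (n:ℝ) := by exact_mod_cast hn
    rw [hexp (2*r) n hn, hexp (2*r) (n+1) (by omega), hexp (2*r) (n+2) (by omega),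
      ← Real.exp_add, sq, ← Real.exp_add]
    apply Real.exp_le_exp.mpr
    have hk := key2 (2*r+2) (by omega) (n:ℝ) hn1
    have hsign : ((-1:ℝ))^(2*r+2) = 1 := by
      rw [pow_add]; norm_num [pow_mul]
    rw [hsign, one_mul] at hk
    have hEq : Dfun^[2*r+2] g (n:ℝ) =
        Dfun^[2*r] g ((n:ℝ)+2) - 2 * Dfun^[2*r] g ((n:ℝ)+1) + Dfun^[2*r] g (n:ℝ) := by
      have : (2*r+2) = 2 + 2*r := by omega
      rw [this, Function.iterate_add_apply]
      show Dfun (Dfun (Dfun^[2*r] g)) (n:ℝ) = _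
      simp only [Dfun]
      ring_nf
    rw [hEq] at hk
    push_cast
    linarith
  · intro n hn
    have hn1 : (1:ℝ) ≤ (n:ℝ) := by exact_mod_cast hn
    rw [ge_iff_le, hexp (2*r+1) n hn, hexp (2*r+1) (n+1) (by omega),
      hexp (2*r+1) (n+2) (by omega), ← Real.exp_add, sq, ← Real.exp_add]
    apply Real.exp_le_exp.mpr
    have hk := key2 (2*r+3) (by omega) (n:ℝ) hn1
    have hsign : ((-1:ℝ))^(2*r+3) = -1 := by
      rw [pow_add]; norm_num [pow_mul]
    rw [hsign, neg_one_mul, le_neg, neg_zero] at hk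
    have hEq : Dfun^[2*r+3] g (n:ℝ) =
        Dfun^[2*r+1] g ((n:ℝ)+2) - 2 * Dfun^[2*r+1] g ((n:ℝ)+1) + Dfun^[2*r+1] g (n:ℝ) := by
      have : (2*r+3) = 2 + (2*r+1) := by omega
      rw [this, Function.iterate_add_apply]
      show Dfun (Dfun (Dfun^[2*r+1] g)) (n:ℝ) = _
      simp only [Dfun]
      ring_nf
    rw [hEq] at hk
    push_cast
    linarith
end

section
/- The Riemann zeta function ζ(x) is logarithmically completely monotonic on (1,∞); that is, for every integer k ≥ 1 and every x > 1, (-1)^k (log ζ(x))^{(k)} ≥ 0 (in fact > 0). -/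
open LSeries ArithmeticFunction Complex Filter

open scoped LSeries.notation

/-- The auxiliary sums `∑ Λ(n) (log n)^m n^{-x}`. -/
noncomputable def lcmG (m : ℕ) (x : ℝ) : ℝ :=
  ∑' n : ℕ, (Λ n) * (Real.log n) ^ m * (n : ℝ) ^ (-x)

lemma lcm_abscissa : abscissaOfAbsConv ↗Λ ≤ 1 := by
  refine abscissaOfAbsConv_le_of_forall_lt_LSeriesSummable fun y hy => ?_
  exact LSeriesSummable_vonMangoldt (by simpa using hy)

lemma lcm_abscissa' {m : ℕ} {x : ℝ} (hx : 1 < x) :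
    abscissaOfAbsConv (logMul^[m] ↗Λ) < ((x : ℂ)).re := by
  rw [absicssaOfAbsConv_logPowMul]
  refine lcm_abscissa.trans_lt ?_
  simp only [ofReal_re]
  exact_mod_cast hx

lemma lcm_iterate (m : ℕ) (f : ℕ → ℂ) (n : ℕ) :
    (logMul^[m] f) n = (Complex.log n) ^ m * f n := by
  induction m with
  | zero => simp
  | succ m ih =>
    rw [Function.iterate_succ', Function.comp_apply, logMul, ih, pow_succ]
    ring

lemma lcm_term (m : ℕ) (x : ℝ) (n : ℕ) :
    LSeries.term (logMul^[m] ↗Λ) (x : ℂ) n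
      = (((Λ n) * (Real.log n) ^ m * (n : ℝ) ^ (-x) : ℝ) : ℂ) := by
  rcases eq_or_ne n 0 with rfl | hn
  · simp [LSeries.term]
  · rw [LSeries.term_of_ne_zero hn, lcm_iterate, ← Complex.natCast_log]
    have hcast : ((n : ℝ) : ℂ) = (n : ℂ) := by norm_cast
    rw [Real.rpow_neg (by positivity), ← hcast, ← Complex.ofReal_cpow (by positivity)]
    push_cast
    field_simp

lemma lcm_summable (m : ℕ) {x : ℝ} (hx : 1 < x) :
    Summable fun n : ℕ => (Λ n) * (Real.log n) ^ m * (n : ℝ) ^ (-x) := by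
  have h : LSeriesSummable (logMul^[m] ↗Λ) (x : ℂ) :=
    LSeriesSummable_of_abscissaOfAbsConv_lt_re (lcm_abscissa' hx)
  have := h.congr (fun n => lcm_term m x n)
  exact Complex.summable_ofReal.mp this

lemma lcm_LSeries (m : ℕ) {x : ℝ} (hx : 1 < x) :
    LSeries (logMul^[m] ↗Λ) (x : ℂ) = ((lcmG m x : ℝ) : ℂ) := by
  rw [LSeries, lcmG, Complex.ofReal_tsum]
  exact tsum_congr fun n => lcm_term m x n

lemma lcm_pos (m : ℕ) {x : ℝ} (hx : 1 < x) : 0 < lcmG m x := by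
  refine Summable.tsum_pos (lcm_summable m hx) (fun n => ?_) 2 ?_
  · have h1 : (0:ℝ) ≤ Λ n := vonMangoldt_nonneg
    have h2 : (0:ℝ) ≤ (Real.log n) ^ m := pow_nonneg (Real.log_natCast_nonneg n) m
    positivity
  · have h2 : Λ 2 = Real.log 2 := vonMangoldt_apply_prime Nat.prime_two
    rw [h2]
    have hl : (0:ℝ) < Real.log 2 := Real.log_pos one_lt_two
    have : (0:ℝ) < ((2:ℕ):ℝ) ^ (-x) := Real.rpow_pos_of_pos (by norm_num) _
    positivity

lemma lcm_hasDerivAt (m : ℕ) {x : ℝ} (hx : 1 < x) :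
    HasDerivAt (fun y : ℝ => lcmG m y) (-(lcmG (m + 1) x)) x := by
  have hC : HasDerivAt (LSeries (logMul^[m] ↗Λ))
      (-(LSeries (logMul (logMul^[m] ↗Λ)) (x : ℂ))) (x : ℂ) :=
    LSeries_hasDerivAt (lcm_abscissa' hx)
  have hiter : logMul (logMul^[m] ↗Λ) = logMul^[m + 1] ↗Λ := by
    rw [Function.iterate_succ', Function.comp_def]
  rw [hiter] at hC
  have hR := hC.real_of_complex
  have hval : (-(LSeries (logMul^[m+1] ↗Λ) (x : ℂ))).re = -(lcmG (m + 1) x) := by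
    rw [lcm_LSeries (m+1) hx]; simp
  rw [hval] at hR
  refine hR.congr_of_eventuallyEq ?_
  filter_upwards [Ioi_mem_nhds hx] with y hy
  rw [lcm_LSeries m hy]
  simp

theorem stmt_2 (zeta : ℝ → ℝ) (hzeta : ∀ x : ℝ, 1 < x → zeta x = ∑' n : ℕ, ((n:ℝ)+1) ^ (-x)) :
    ∀ k : ℕ, 1 ≤ k → ∀ x : ℝ, 1 < x →
      0 < (-1:ℝ)^k * iteratedDeriv k (fun x => Real.log (zeta x)) x := by
  -- relate `zeta` to `riemannZeta`
  have hz : ∀ x : ℝ, 1 < x → riemannZeta (x : ℂ) = ((zeta x : ℝ) : ℂ) := by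
    intro x hx
    rw [zeta_eq_tsum_one_div_nat_add_one_cpow (by simpa using hx), hzeta x hx,
      Complex.ofReal_tsum]
    refine tsum_congr fun n => ?_
    rw [Complex.ofReal_cpow (by positivity), Complex.ofReal_neg]
    push_cast
    rw [cpow_neg, one_div]
  -- positivity of zeta
  have hzsum : ∀ x : ℝ, 1 < x → Summable fun n : ℕ => ((n:ℝ)+1) ^ (-x) := by
    intro x hx
    have h := Real.summable_nat_rpow.mpr (show -x < -1 by linarith)
    have h2 := (summable_nat_add_iff (f := fun n : ℕ => (n:ℝ) ^ (-x)) 1).mpr h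
    refine h2.congr fun n => ?_
    push_cast
    ring_nf
  have hzpos : ∀ x : ℝ, 1 < x → 0 < zeta x := by
    intro x hx
    rw [hzeta x hx]
    refine Summable.tsum_pos (hzsum x hx) (fun n => by positivity) 0 (by positivity)
  -- the key derivative of log ∘ zeta
  have hlogderiv : ∀ x : ℝ, 1 < x →
      HasDerivAt (fun y : ℝ => Real.log (zeta y)) (-(lcmG 0 x)) x := by
    intro x hx
    have hne1 : (x : ℂ) ≠ 1 := by
      intro h
      have : x = 1 := by exact_mod_cast h
      linarith
    have hdiff := (differentiableAt_riemannZeta hne1).hasDerivAt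
    have hR := hdiff.real_of_complex
    have hRz : HasDerivAt zeta ((deriv riemannZeta (x : ℂ)).re) x := by
      refine hR.congr_of_eventuallyEq ?_
      filter_upwards [Ioi_mem_nhds hx] with y hy
      rw [hz y hy]; simp
    -- identity for the derivative
    have hLS0 : LSeries ↗Λ (x : ℂ) = ((lcmG 0 x : ℝ) : ℂ) := by
      simpa using lcm_LSeries 0 hx
    have hzne : riemannZeta (x : ℂ) ≠ 0 :=
      riemannZeta_ne_zero_of_one_lt_re (by simpa using hx)
    have hid := LSeries_vonMangoldt_eq_deriv_riemannZeta_div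
      (s := (x : ℂ)) (by simpa using hx)
    rw [hLS0, hz x hx] at hid
    have hzne' : ((zeta x : ℝ) : ℂ) ≠ 0 := by
      rw [hz x hx] at hzne; exact hzne
    have hd : deriv riemannZeta (x : ℂ) = ((-(lcmG 0 x * zeta x) : ℝ) : ℂ) := by
      field_simp at hid
      push_cast
      linear_combination hid
    have hdre : (deriv riemannZeta (x : ℂ)).re = -(lcmG 0 x * zeta x) := by
      rw [hd]; simp
    rw [hdre] at hRz
    have hlog := (Real.hasDerivAt_log (ne_of_gt (hzpos x hx))).comp x hRz
    have : zeta x ≠ 0 := ne_of_gt (hzpos x hx)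
    refine hlog.congr_deriv ?_
    rw [mul_neg, mul_comm (lcmG 0 x), inv_mul_cancel_left₀ this]
  -- induction: iteratedDeriv (k+1) (log ∘ zeta) x = (-1)^(k+1) * lcmG k x on (1,∞)
  have key : ∀ k : ℕ, ∀ x : ℝ, 1 < x →
      iteratedDeriv (k + 1) (fun x => Real.log (zeta x)) x = (-1:ℝ)^(k+1) * lcmG k x := by
    intro k
    induction k with
    | zero =>
      intro x hx
      rw [iteratedDeriv_one, (hlogderiv x hx).deriv]
      ring
    | succ k ih =>
      intro x hx
      rw [iteratedDeriv_succ]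
      have hEq : iteratedDeriv (k + 1) (fun x => Real.log (zeta x))
          =ᶠ[nhds x] fun y => (-1:ℝ)^(k+1) * lcmG k y := by
        filter_upwards [Ioi_mem_nhds hx] with y hy
        exact ih y hy
      rw [hEq.deriv_eq]
      have hD := ((lcm_hasDerivAt k hx).const_mul ((-1:ℝ)^(k+1))).deriv
      rw [hD]
      ring
  intro k hk x hx
  obtain ⟨j, rfl⟩ : ∃ j, k = j + 1 := ⟨k - 1, (Nat.succ_pred_eq_of_pos hk).symm⟩
  rw [key j x hx, ← mul_assoc, ← mul_pow]
  simp only [neg_mul_neg, one_mul, one_pow]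
  exact lcm_pos j hx
end

section
/- The sequence {|B_{2n}|}_{n≥1} of absolute values of even-index Bernoulli numbers is infinitely log-monotonic. -/
open Real Finset

namespace StmtAux

/-- iterated forward difference (step 1) on ℕ → ℝ -/
noncomputable abbrev dd : (ℕ → ℝ) → ℕ → ℝ := fwdDiff (1:ℕ)

lemma dd_apply (f : ℕ → ℝ) (n : ℕ) : dd f n = f (n+1) - f n := rfl

lemma dd_iter_succ_apply' (f : ℕ → ℝ) (K n : ℕ) :
    dd^[K+1] f n = dd^[K] f (n+1) - dd^[K] f n := by
  rw [Function.iterate_succ_apply']; rfl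

lemma ratio_pos_log (b : ℕ → ℝ) (hb : ∀ m, 1 ≤ m → 0 < b m) (K : ℕ) :
    ∀ n, 1 ≤ n → 0 < (ratioOp^[K] b) n ∧
      Real.log ((ratioOp^[K] b) n) = dd^[K] (fun m => Real.log (b m)) n := by
  induction K with
  | zero => intro n hn; exact ⟨hb n hn, rfl⟩
  | succ K ih =>
    intro n hn
    obtain ⟨h1, e1⟩ := ih n hn
    obtain ⟨h2, e2⟩ := ih (n+1) (by omega)
    have hr : (ratioOp^[K+1] b) n = (ratioOp^[K] b) (n+1) / (ratioOp^[K] b) n := by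
      rw [Function.iterate_succ_apply']; rfl
    refine ⟨by rw [hr]; positivity, ?_⟩
    rw [hr, Real.log_div (ne_of_gt h2) (ne_of_gt h1), e1, e2, dd_iter_succ_apply']

lemma dd_iter_add2 (f : ℕ → ℝ) (K n : ℕ) :
    dd^[K+2] f n = dd^[K] f (n+2) - 2 * dd^[K] f (n+1) + dd^[K] f n := by
  rw [show K+2 = (K+1)+1 from rfl, dd_iter_succ_apply', dd_iter_succ_apply',
    dd_iter_succ_apply']
  ring

end StmtAux


namespace StmtAux

noncomputable abbrev d2 : (ℝ → ℝ) → ℝ → ℝ := fwdDiff (2:ℝ)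

/-- closed form for iterated differences of inverse -/
lemma d2_inv (m : ℕ) : ∀ x : ℝ, 0 < x →
    d2^[m] (fun y => y⁻¹) x
      = (-1)^m * 2^m * (Nat.factorial m : ℝ) / ∏ i ∈ range (m+1), (x + 2*i) := by
  induction m with
  | zero => intro x hx; simp
  | succ m ih =>
    intro x hx
    have key : d2^[m+1] (fun y => y⁻¹) x
        = d2^[m] (fun y => y⁻¹) (x+2) - d2^[m] (fun y => y⁻¹) x := by
      rw [Function.iterate_succ_apply']; rfl
    rw [key, ih (x+2) (by linarith), ih x hx]
    have h1 : (∏ i ∈ range (m+2), (x + 2*(i:ℝ))) = x * ∏ i ∈ range (m+1), ((x+2) + 2*(i:ℝ)) := by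
      rw [Finset.prod_range_succ']
      have hcg : (∏ i ∈ range (m+1), (x + 2*((i:ℝ)+1))) = ∏ i ∈ range (m+1), ((x+2) + 2*(i:ℝ)) :=
        Finset.prod_congr rfl (fun i _ => by ring)
      push_cast
      rw [hcg]
      ring
    have h2 : (∏ i ∈ range (m+2), (x + 2*(i:ℝ))) = (∏ i ∈ range (m+1), (x + 2*(i:ℝ))) * (x + 2*((m:ℝ)+1)) := by
      rw [Finset.prod_range_succ]; push_cast; ring_nf
    have hA : (0:ℝ) < ∏ i ∈ range (m+1), ((x+2) + 2*(i:ℝ)) :=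
      Finset.prod_pos (fun i _ => by positivity)
    have hB : (0:ℝ) < ∏ i ∈ range (m+1), (x + 2*(i:ℝ)) :=
      Finset.prod_pos (fun i _ => by positivity)
    have hC : (0:ℝ) < ∏ i ∈ range (m+2), (x + 2*(i:ℝ)) :=
      Finset.prod_pos (fun i _ => by positivity)
    set A := ∏ i ∈ range (m+1), ((x+2) + 2*(i:ℝ))
    set B := ∏ i ∈ range (m+1), (x + 2*(i:ℝ))
    set C := ∏ i ∈ range (m+2), (x + 2*(i:ℝ))
    have hfact : (Nat.factorial (m+1) : ℝ) = ((m:ℝ)+1) * (Nat.factorial m : ℝ) := by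
      rw [Nat.factorial_succ]; push_cast; ring
    have hAx : A = C / x := by rw [eq_div_iff (ne_of_gt hx)]; rw [h1]; ring
    have hBxx : B = C / (x + 2*((m:ℝ)+1)) := by
      rw [eq_div_iff (by positivity)]; rw [h2]
    rw [hAx, hBxx, hfact]
    field_simp
    ring


end StmtAux
namespace StmtAux
open intervalIntegral

lemma uIcc02 : Set.uIcc (0:ℝ) 2 = Set.Icc 0 2 := Set.uIcc_of_le (by norm_num)

lemma d2_log_eq_integral {y : ℝ} (hy : 0 < y) :
    d2 Real.log y = ∫ t in (0:ℝ)..2, (y + t)⁻¹ := by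
  have h : (∫ t in (0:ℝ)..2, (y + t)⁻¹) = ∫ u in (y+0)..(y+2), u⁻¹ :=
    intervalIntegral.integral_comp_add_left (fun u => u⁻¹) y
  rw [h, add_zero, integral_inv_of_pos hy (by linarith),
    Real.log_div (by linarith) (ne_of_gt hy)]
  rfl

lemma d2_inv_intervalIntegrable (m : ℕ) {s : ℝ} (hs : 0 < s) :
    IntervalIntegrable (fun t => d2^[m] (fun u => u⁻¹) (s+t)) MeasureTheory.volume 0 2 := by
  apply ContinuousOn.intervalIntegrable
  apply ContinuousOn.congr
    (f := fun t => (-1)^m * 2^m * (Nat.factorial m : ℝ) / ∏ i ∈ range (m+1), ((s+t) + 2*i))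
  · apply ContinuousOn.div continuousOn_const
    · exact (continuous_finset_prod _ fun i _ => by continuity).continuousOn
    · intro t ht
      rw [uIcc02] at ht
      exact ne_of_gt (Finset.prod_pos fun i _ => by
        have := ht.1; positivity)
  · intro t ht
    rw [uIcc02] at ht
    exact d2_inv m (s+t) (by have := ht.1; linarith)

lemma d2_iter_log_rep (m : ℕ) : ∀ x : ℝ, 0 < x →
    d2^[m] (d2 Real.log) x = ∫ t in (0:ℝ)..2, d2^[m] (fun u => u⁻¹) (x+t) := by
  induction m with
  | zero =>
    intro x hx
    simpa using d2_log_eq_integral hx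
  | succ m ih =>
    intro x hx
    have key : d2^[m+1] (d2 Real.log) x
        = d2^[m] (d2 Real.log) (x+2) - d2^[m] (d2 Real.log) x := by
      rw [Function.iterate_succ_apply']; rfl
    rw [key, ih (x+2) (by linarith), ih x hx,
      ← intervalIntegral.integral_sub
        (d2_inv_intervalIntegrable m (show (0:ℝ) < x + 2 by linarith))
        (d2_inv_intervalIntegrable m hx)]
    apply intervalIntegral.integral_congr
    intro t ht
    dsimp only
    rw [Function.iterate_succ_apply']
    show _ = d2^[m] (fun u => u⁻¹) ((x+t)+2) - d2^[m] (fun u => u⁻¹) (x+t)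
    rw [show x+2+t = x+t+2 by ring]

lemma d2_iter_log_sign (m : ℕ) {x : ℝ} (hx : 0 < x) :
    0 ≤ (-1:ℝ)^(m+2) * d2^[m+1] Real.log x := by
  rw [Function.iterate_succ_apply, d2_iter_log_rep m x hx]
  have h2 : (∫ t in (0:ℝ)..2, d2^[m] (fun u => u⁻¹) (x+t))
      = ∫ t in (0:ℝ)..2, (-1:ℝ)^m * (2^m * (Nat.factorial m : ℝ) / ∏ i ∈ range (m+1), ((x+t) + 2*i)) := by
    apply intervalIntegral.integral_congr
    intro t ht
    rw [uIcc02] at ht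
    dsimp only
    rw [d2_inv m (x+t) (by have := ht.1; linarith)]
    ring
  rw [h2, intervalIntegral.integral_const_mul, ← mul_assoc]
  have h3 : (-1:ℝ)^(m+2) * (-1)^m = 1 := by
    rw [← pow_add]
    have he : m + 2 + m = 2*(m+1) := by ring
    rw [he, pow_mul]
    norm_num
  rw [h3, one_mul]
  apply intervalIntegral.integral_nonneg (by norm_num)
  intro u hu
  have h4 : (0:ℝ) < ∏ i ∈ range (m+1), ((x+u) + 2*(i:ℝ)) :=
    Finset.prod_pos fun i _ => by have := hu.1; positivity
  positivity

end StmtAux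

namespace StmtAux

lemma dd_bridge (φ : ℝ → ℝ) (c : ℝ) (j : ℕ) : ∀ n : ℕ,
    dd^[j] (fun m : ℕ => φ (2*(m:ℝ) + c)) n = d2^[j] φ (2*(n:ℝ) + c) := by
  induction j with
  | zero => intro n; rfl
  | succ j ih =>
    intro n
    rw [dd_iter_succ_apply', ih, ih, Function.iterate_succ_apply']
    show _ = d2^[j] φ ((2*(n:ℝ)+c) + 2) - d2^[j] φ (2*(n:ℝ)+c)
    push_cast
    rw [show 2*((n:ℝ)+1)+c = (2*(n:ℝ)+c)+2 by ring]

lemma fact_sign (j : ℕ) (hj : 1 ≤ j) (n : ℕ) (c : ℝ) (hc : 0 < c) :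
    0 ≤ (-1:ℝ)^(j+1) * dd^[j] (fun m : ℕ => Real.log (2*(m:ℝ) + c)) n := by
  obtain ⟨m, rfl⟩ : ∃ m, j = m + 1 := ⟨j - 1, by omega⟩
  rw [dd_bridge]
  exact d2_iter_log_sign m (by positivity)

lemma dd_iter_zero (K : ℕ) : dd^[K] (fun _ => (0:ℝ)) = fun _ => 0 := by
  induction K with
  | zero => rfl
  | succ K ih =>
    rw [Function.iterate_succ_apply', ih]
    funext n
    show (0:ℝ) - 0 = 0
    ring

lemma dd_linear (c d : ℝ) (K : ℕ) (hK : 2 ≤ K) (n : ℕ) :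
    dd^[K] (fun m : ℕ => c * (m:ℝ) + d) n = 0 := by
  obtain ⟨K', rfl⟩ : ∃ K', K = K' + 2 := ⟨K - 2, by omega⟩
  rw [Function.iterate_add_apply]
  have hstep : ∀ m : ℕ, dd (fun m : ℕ => c * (m:ℝ) + d) m = c := by
    intro m
    show (c*(((m+1):ℕ):ℝ)+d) - (c*(m:ℝ)+d) = c
    push_cast
    ring
  have h2 : dd^[2] (fun m : ℕ => c * (m:ℝ) + d) = fun _ => 0 := by
    funext m
    rw [show (2:ℕ) = 1+1 from rfl, dd_iter_succ_apply', Function.iterate_one, hstep, hstep]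
    ring
  rw [h2, dd_iter_zero]

lemma dd_congr {F G : ℕ → ℝ} {K n : ℕ} (h : ∀ m, n ≤ m → m ≤ n + K → F m = G m) :
    dd^[K] F n = dd^[K] G n := by
  rw [fwdDiff_iter_eq_sum_shift, fwdDiff_iter_eq_sum_shift]
  apply Finset.sum_congr rfl
  intro k hk
  rw [Finset.mem_range] at hk
  congr 1
  exact h (n + k • 1) (by omega) (by simp; omega)

lemma dd_logfact :
    dd (fun m : ℕ => Real.log ((2*m).factorial)) =
      fun n : ℕ => Real.log (2*(n:ℝ)+1) + Real.log (2*(n:ℝ)+2) := by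
  funext n
  show Real.log ((2*(n+1)).factorial) - Real.log ((2*n).factorial) = _
  have h1 : 2*(n+1) = (2*n+1) + 1 := by ring
  rw [h1, Nat.factorial_succ, Nat.factorial_succ]
  have hf : (0:ℝ) < (2*n).factorial := by exact_mod_cast Nat.factorial_pos _
  push_cast
  rw [Real.log_mul (by positivity) (by positivity), Real.log_mul (by positivity) (by positivity)]
  ring

lemma logfact_sign (K : ℕ) (hK : 2 ≤ K) (n : ℕ) :
    0 ≤ (-1:ℝ)^K * dd^[K] (fun m : ℕ => Real.log ((2*m).factorial)) n := by
  obtain ⟨j, rfl⟩ : ∃ j, K = j + 1 := ⟨K - 1, by omega⟩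
  have hj : 1 ≤ j := by omega
  rw [Function.iterate_succ_apply, dd_logfact]
  have hsplit : (fun m : ℕ => Real.log (2*(m:ℝ)+1) + Real.log (2*(m:ℝ)+2))
      = (fun m : ℕ => Real.log (2*(m:ℝ)+1)) + (fun m : ℕ => Real.log (2*(m:ℝ)+2)) := rfl
  rw [hsplit, fwdDiff_iter_add]
  have h1 := fact_sign j hj n 1 (by norm_num)
  have h2 := fact_sign j hj n 2 (by norm_num)
  show 0 ≤ (-1:ℝ)^(j+1) * (dd^[j] _ n + dd^[j] _ n)
  rw [mul_add]
  exact add_nonneg h1 h2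

end StmtAux


namespace StmtAux

noncomputable def Zr (k : ℕ) : ℝ := ∑' i : ℕ, 1 / (i:ℝ)^(2*k)

noncomputable def rho (p : Nat.Primes) (j : ℕ) : ℝ := (((p:ℕ):ℝ) ^ (2*(j+1)))⁻¹

noncomputable def xp (p : Nat.Primes) (n : ℕ) : ℝ := (((p:ℕ):ℝ) ^ (2*n))⁻¹

noncomputable def gterm (p : Nat.Primes) (j : ℕ) (n : ℕ) : ℝ := (rho p j)^n / (j+1)

noncomputable def gp (p : Nat.Primes) (n : ℕ) : ℝ := ∑' j, gterm p j n

noncomputable def zet (n : ℕ) : ℝ := ∑' p : Nat.Primes, gp p n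

lemma p_two_le (p : Nat.Primes) : (2:ℝ) ≤ ((p:ℕ):ℝ) := by
  exact_mod_cast p.prop.two_le

lemma p_pos (p : Nat.Primes) : (0:ℝ) < ((p:ℕ):ℝ) := lt_of_lt_of_le two_pos (p_two_le p)

lemma rho_pos (p : Nat.Primes) (j : ℕ) : 0 < rho p j := by
  have := p_pos p; unfold rho; positivity

lemma rho_lt_one (p : Nat.Primes) (j : ℕ) : rho p j < 1 := by
  unfold rho
  rw [inv_lt_one_iff₀]
  right
  exact one_lt_pow₀ (by have := p_two_le p; nlinarith [p_two_le p])
    (by omega)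

lemma xp_pos (p : Nat.Primes) (n : ℕ) : 0 < xp p n := by
  have := p_pos p; unfold xp; positivity

lemma xp_le_half (p : Nat.Primes) {n : ℕ} (hn : 1 ≤ n) : xp p n ≤ 1/2 := by
  unfold xp
  rw [inv_le_comm₀ (by have := p_pos p; positivity) (by norm_num)]
  calc (1/2 : ℝ)⁻¹ = 2 := by norm_num
  _ ≤ ((p:ℕ):ℝ) := p_two_le p
  _ ≤ ((p:ℕ):ℝ)^(2*n) := le_self_pow₀ (by linarith [p_two_le p]) (by omega)

lemma xp_lt_one (p : Nat.Primes) {n : ℕ} (hn : 1 ≤ n) : xp p n < 1 :=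
  lt_of_le_of_lt (xp_le_half p hn) (by norm_num)

lemma rho_pow_eq (p : Nat.Primes) (j n : ℕ) : (rho p j)^n = (xp p n)^(j+1) := by
  unfold rho xp
  rw [← inv_pow, ← inv_pow, ← pow_mul, ← pow_mul, mul_assoc, mul_assoc,
    Nat.mul_comm (j+1) n]

lemma inner_hasSum (p : Nat.Primes) {n : ℕ} (hn : 1 ≤ n) :
    HasSum (fun j => gterm p j n) (-Real.log (1 - xp p n)) := by
  have h := hasSum_pow_div_log_of_abs_lt_one
    (x := xp p n) (by rw [abs_of_pos (xp_pos p n)]; exact xp_lt_one p hn)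
  convert h using 2 with j
  unfold gterm
  rw [rho_pow_eq]

lemma gp_eq (p : Nat.Primes) {n : ℕ} (hn : 1 ≤ n) :
    gp p n = -Real.log (1 - xp p n) := (inner_hasSum p hn).tsum_eq

lemma gp_nonneg (p : Nat.Primes) {n : ℕ} (hn : 1 ≤ n) : 0 ≤ gp p n := by
  rw [gp_eq p hn, neg_nonneg]
  apply Real.log_nonpos
  · have := xp_le_half p hn; linarith
  · have := xp_pos p n; linarith

lemma neg_log_le (x : ℝ) (hx : 0 < x) (hx2 : x ≤ 1/2) : -Real.log (1 - x) ≤ 2*x := by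
  have h1 : (0:ℝ) < 1 - x := by linarith
  have h2 : -Real.log (1 - x) = Real.log (1-x)⁻¹ := by rw [Real.log_inv]
  rw [h2]
  have h3 := Real.log_le_sub_one_of_pos (inv_pos.mpr h1)
  have h4 : (1-x)⁻¹ - 1 = x / (1-x) := by field_simp; ring
  have h5 : x / (1-x) ≤ 2*x := by
    rw [div_le_iff₀ h1]
    nlinarith
  linarith

lemma summable_xp {n : ℕ} (hn : 1 ≤ n) : Summable (fun p : Nat.Primes => xp p n) := by
  have h : Summable (fun i : ℕ => 1/(i:ℝ)^(2*n)) :=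
    Real.summable_one_div_nat_pow.mpr (by omega)
  exact (h.comp_injective Subtype.val_injective).congr (fun p => by simp [xp, one_div])

lemma summable_gp {n : ℕ} (hn : 1 ≤ n) : Summable (fun p : Nat.Primes => gp p n) := by
  apply Summable.of_nonneg_of_le (fun p => gp_nonneg p hn)
    (fun p => ?_) ((summable_xp hn).mul_left 2)
  rw [gp_eq p hn]
  exact neg_log_le _ (xp_pos p n) (xp_le_half p hn)

end StmtAux

namespace StmtAux

noncomputable def Fz (m : ℕ) : ℕ →*₀ ℂ where
  toFun := fun i => ((i:ℂ)^(2*(m+1)))⁻¹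
  map_zero' := by
    show (((0:ℕ):ℂ)^(2*(m+1)))⁻¹ = 0
    rw [Nat.cast_zero, zero_pow (by omega), inv_zero]
  map_one' := by simp
  map_mul' := by
    intro x y
    push_cast
    rw [mul_pow, mul_inv]

lemma Fz_norm_summable (m : ℕ) : Summable (fun i : ℕ => ‖Fz m i‖) := by
  have h : Summable (fun i : ℕ => 1/(i:ℝ)^(2*(m+1))) :=
    Real.summable_one_div_nat_pow.mpr (by omega)
  apply h.congr
  intro i
  simp [Fz, one_div]

lemma logZ (m : ℕ) : Real.log (Zr (m+1)) = zet (m+1) := by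
  have hE := EulerProduct.exp_tsum_primes_log_eq_tsum (f := Fz m) (Fz_norm_summable m)
  have hRHS : (∑' i : ℕ, Fz m i) = ((Zr (m+1) : ℝ) : ℂ) := by
    unfold Zr
    rw [Complex.ofReal_tsum]
    apply tsum_congr
    intro i
    simp only [Fz, Zr, MonoidWithZeroHom.coe_mk, ZeroHom.coe_mk]
    push_cast
    ring
  have hterm : ∀ p : Nat.Primes, -Complex.log (1 - Fz m (p:ℕ))
      = ((-Real.log (1 - xp p (m+1)) : ℝ) : ℂ) := by
    intro p
    have h1 : (Fz m (p:ℕ)) = ((xp p (m+1) : ℝ) : ℂ) := by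
      simp only [Fz, xp, MonoidWithZeroHom.coe_mk, ZeroHom.coe_mk]
      push_cast
      ring
    rw [h1, ← Complex.ofReal_one, ← Complex.ofReal_sub,
      ← Complex.ofReal_log (by have := xp_lt_one p (show 1 ≤ m+1 by omega); linarith),
      ← Complex.ofReal_neg]
  have hLHS : (∑' p : Nat.Primes, -Complex.log (1 - Fz m (p:ℕ)))
      = ((zet (m+1) : ℝ) : ℂ) := by
    rw [tsum_congr hterm, ← Complex.ofReal_tsum]
    norm_cast
    unfold zet
    apply tsum_congr
    intro p
    rw [gp_eq p (show 1 ≤ m+1 by omega)]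
  rw [hLHS, hRHS, ← Complex.ofReal_exp] at hE
  have hexp : Real.exp (zet (m+1)) = Zr (m+1) := by exact_mod_cast hE
  rw [← hexp, Real.log_exp]

lemma Zr_ge_one (m : ℕ) : 1 ≤ Zr (m+1) := by
  have hsum : Summable (fun i : ℕ => 1/(i:ℝ)^(2*(m+1))) :=
    Real.summable_one_div_nat_pow.mpr (by omega)
  have h := Summable.le_tsum hsum 1 (fun i _ => by positivity)
  unfold Zr
  simpa using h

end StmtAux

namespace StmtAux

lemma bern_link (m : ℕ) :
    |(bernoulli (2*(m+1)) : ℝ)| * (2*Real.pi)^(2*(m+1))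
      = 2 * Zr (m+1) * ((2*(m+1)).factorial : ℝ) := by
  have hs := hasSum_zeta_nat (k := m+1) (by omega)
  have hZ : Zr (m+1) = (-1:ℝ)^(m+1+1) * 2^(2*(m+1)-1) * Real.pi^(2*(m+1))
      * (bernoulli (2*(m+1)):ℝ) / ((2*(m+1)).factorial : ℝ) := by
    unfold Zr
    exact hs.tsum_eq
  have he : 2*(m+1)-1 = 2*m+1 := by omega
  rw [he] at hZ
  have habs : Zr (m+1) = |Zr (m+1)| := (abs_of_nonneg (by linarith [Zr_ge_one m])).symm
  have hfac : (0:ℝ) < ((2*(m+1)).factorial : ℝ) := by exact_mod_cast Nat.factorial_pos _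
  have hZ2 : Zr (m+1) = 2^(2*m+1) * Real.pi^(2*(m+1))
      * |(bernoulli (2*(m+1)):ℝ)| / ((2*(m+1)).factorial : ℝ) := by
    rw [habs, hZ, abs_div, abs_mul, abs_mul, abs_mul, abs_pow, abs_neg, abs_one, one_pow,
      one_mul, abs_pow, abs_of_nonneg (by norm_num : (0:ℝ) ≤ 2),
      abs_pow, abs_of_nonneg Real.pi_pos.le, abs_of_nonneg hfac.le]
  rw [hZ2]
  rw [mul_pow]
  have h2 : (2:ℝ)^(2*(m+1)) = 2 * 2^(2*m+1) := by
    rw [← pow_succ']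
    congr 1
  rw [h2]
  field_simp

lemma bern_abs_pos (m : ℕ) : 0 < |(bernoulli (2*(m+1)) : ℝ)| := by
  have h := bern_link m
  have hfac : (0:ℝ) < ((2*(m+1)).factorial : ℝ) := by exact_mod_cast Nat.factorial_pos _
  have hZ := Zr_ge_one m
  have hpow : (0:ℝ) < (2*Real.pi)^(2*(m+1)) := by positivity
  nlinarith [abs_nonneg ((bernoulli (2*(m+1)) : ℝ))]

noncomputable def Lnice (n : ℕ) : ℝ :=
  Real.log ((2*n).factorial : ℝ) + zet n + ((-(2 * Real.log (2*Real.pi))) * (n:ℝ) + Real.log 2)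

lemma log_abs_bern (n : ℕ) (hn : 1 ≤ n) :
    Real.log |(bernoulli (2*n) : ℝ)| = Lnice n := by
  obtain ⟨m, rfl⟩ : ∃ m, n = m + 1 := ⟨n - 1, by omega⟩
  have h := bern_link m
  have hfac : (0:ℝ) < ((2*(m+1)).factorial : ℝ) := by exact_mod_cast Nat.factorial_pos _
  have hZpos : (0:ℝ) < Zr (m+1) := by linarith [Zr_ge_one m]
  have hpow : (0:ℝ) < (2*Real.pi)^(2*(m+1)) := by positivity
  have hB : |(bernoulli (2*(m+1)) : ℝ)|
      = 2 * Zr (m+1) * ((2*(m+1)).factorial : ℝ) / (2*Real.pi)^(2*(m+1)) := by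
    field_simp at h ⊢
    linarith [h]
  rw [hB, Real.log_div (by positivity) (ne_of_gt hpow),
    Real.log_mul (by positivity) (ne_of_gt hfac),
    Real.log_mul (by norm_num) (ne_of_gt hZpos),
    Real.log_pow, logZ m]
  unfold Lnice
  push_cast
  ring

lemma zet_sign (K n : ℕ) (hn : 1 ≤ n) : 0 ≤ (-1:ℝ)^K * dd^[K] zet n := by
  have hrep : dd^[K] zet n = ∑' (p : Nat.Primes), ∑' (j : ℕ),
      ((rho p j - 1)^K * (rho p j)^n / ((j:ℝ)+1)) := by
    rw [fwdDiff_iter_eq_sum_shift]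
    have step1 : ∀ k ∈ range (K+1), (((-1:ℤ)^(K-k) * (K.choose k) : ℤ)) • zet (n + k • 1)
        = ∑' (p : Nat.Primes), (((-1:ℝ)^(K-k) * (K.choose k))) * gp p (n+k) := by
      intro k hk
      rw [show n + k • 1 = n + k by simp, zsmul_eq_mul]
      push_cast
      unfold zet
      rw [← tsum_mul_left]
    rw [Finset.sum_congr rfl step1,
      ← Summable.tsum_finsetSum (fun k hk => Summable.mul_left _ (summable_gp (show 1 ≤ n+k by omega)))]
    apply tsum_congr
    intro p
    have step2 : ∀ k ∈ range (K+1), ((-1:ℝ)^(K-k) * (K.choose k)) * gp p (n+k)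
        = ∑' (j:ℕ), ((-1:ℝ)^(K-k) * (K.choose k)) * gterm p j (n+k) := by
      intro k hk
      unfold gp
      rw [← tsum_mul_left]
    rw [Finset.sum_congr rfl step2,
      ← Summable.tsum_finsetSum (fun k hk =>
        Summable.mul_left _ ((inner_hasSum p (show 1 ≤ n+k by omega)).summable))]
    apply tsum_congr
    intro j
    have hstep : ∑ k ∈ range (K+1), ((-1:ℝ)^(K-k) * (K.choose k)) * gterm p j (n+k)
        = (∑ k ∈ range (K+1), (rho p j)^k * (-1:ℝ)^(K-k) * (K.choose k))
            * ((rho p j)^n / ((j:ℝ)+1)) := by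
      rw [Finset.sum_mul]
      apply Finset.sum_congr rfl
      intro k hk
      unfold gterm
      rw [pow_add]
      push_cast
      ring
    rw [hstep, ← add_pow]
    rw [show rho p j + -1 = rho p j - 1 by ring]
    ring
  rw [hrep, ← tsum_mul_left]
  apply tsum_nonneg
  intro p
  rw [← tsum_mul_left]
  apply tsum_nonneg
  intro j
  have h1 : (-1:ℝ)^K * ((rho p j - 1)^K * (rho p j)^n/((j:ℝ)+1))
      = (1 - rho p j)^K * (rho p j)^n/((j:ℝ)+1) := by
    rw [← mul_div_assoc, ← mul_assoc, ← mul_pow]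
    congr 2
    ring
  rw [h1]
  apply div_nonneg _ (by positivity)
  exact mul_nonneg (pow_nonneg (by linarith [rho_lt_one p j]) K)
    (pow_nonneg (rho_pos p j).le n)

end StmtAux


namespace StmtAux

lemma master (a : ℕ → ℝ) (ha : ∀ n : ℕ, 1 ≤ n → a n = |(bernoulli (2*n) : ℝ)|)
    (K n : ℕ) (hK : 2 ≤ K) (hn : 1 ≤ n) :
    0 ≤ (-1:ℝ)^K * dd^[K] (fun m => Real.log (a m)) n := by
  have hcg : dd^[K] (fun m => Real.log (a m)) n = dd^[K] Lnice n := by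
    apply dd_congr
    intro m h1 h2
    have hm : 1 ≤ m := le_trans hn h1
    rw [ha m hm, log_abs_bern m hm]
  rw [hcg]
  have hsplit : Lnice = (fun m : ℕ => Real.log (((2*m).factorial : ℕ) : ℝ))
      + (zet + fun m : ℕ => (-(2 * Real.log (2*Real.pi))) * (m:ℝ) + Real.log 2) := by
    funext m
    simp only [Pi.add_apply, Lnice]
    ring
  rw [hsplit, fwdDiff_iter_add, fwdDiff_iter_add]
  have hlin : dd^[K] (fun m : ℕ => (-(2 * Real.log (2*Real.pi))) * (m:ℝ) + Real.log 2) n = 0 :=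
    dd_linear _ _ K hK n
  show 0 ≤ (-1:ℝ)^K * (dd^[K] _ n + (dd^[K] zet n + dd^[K] _ n))
  rw [hlin, add_zero, mul_add]
  exact add_nonneg (logfact_sign K hK n) (zet_sign K n hn)

end StmtAux

theorem stmt_4 (a : ℕ → ℝ) (ha : ∀ n : ℕ, 1 ≤ n → a n = |(bernoulli (2*n) : ℝ)|) :
    ∀ r : ℕ,
      (∀ n : ℕ, 1 ≤ n →
        ((ratioOp^[2*r]) a (n+1))^2 ≤ (ratioOp^[2*r]) a n * (ratioOp^[2*r]) a (n+2)) ∧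
      (∀ n : ℕ, 1 ≤ n →
        ((ratioOp^[2*r+1]) a (n+1))^2 ≥ (ratioOp^[2*r+1]) a n * (ratioOp^[2*r+1]) a (n+2)) := by
  have hpos : ∀ m, 1 ≤ m → 0 < a m := by
    intro m hm
    rw [ha m hm]
    obtain ⟨k, rfl⟩ : ∃ k, m = k + 1 := ⟨m-1, by omega⟩
    exact StmtAux.bern_abs_pos k
  intro r
  constructor
  · intro n hn
    obtain ⟨hp0, he0⟩ := StmtAux.ratio_pos_log a hpos (2*r) n hn
    obtain ⟨hp1, he1⟩ := StmtAux.ratio_pos_log a hpos (2*r) (n+1) (by omega)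
    obtain ⟨hp2, he2⟩ := StmtAux.ratio_pos_log a hpos (2*r) (n+2) (by omega)
    have hsign := StmtAux.master a ha (2*r+2) n (by omega) hn
    have hone : (-1:ℝ)^(2*r+2) = 1 := Even.neg_one_pow ⟨r+1, by ring⟩
    rw [hone, one_mul, StmtAux.dd_iter_add2, ← he0, ← he1, ← he2] at hsign
    have hlog : Real.log (((ratioOp^[2*r]) a (n+1))^2)
        ≤ Real.log ((ratioOp^[2*r]) a n * (ratioOp^[2*r]) a (n+2)) := by
      rw [Real.log_pow, Real.log_mul (ne_of_gt hp0) (ne_of_gt hp2)]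
      push_cast
      linarith
    exact (Real.log_le_log_iff (by positivity) (by positivity)).mp hlog
  · intro n hn
    obtain ⟨hp0, he0⟩ := StmtAux.ratio_pos_log a hpos (2*r+1) n hn
    obtain ⟨hp1, he1⟩ := StmtAux.ratio_pos_log a hpos (2*r+1) (n+1) (by omega)
    obtain ⟨hp2, he2⟩ := StmtAux.ratio_pos_log a hpos (2*r+1) (n+2) (by omega)
    have hsign := StmtAux.master a ha (2*r+3) n (by omega) hn
    have hone : (-1:ℝ)^(2*r+3) = -1 := Odd.neg_one_pow ⟨r+1, by ring⟩
    have h3 : 2*r+3 = (2*r+1)+2 := by omega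
    rw [hone, neg_one_mul, h3, StmtAux.dd_iter_add2, ← he0, ← he1, ← he2] at hsign
    have hlog : Real.log ((ratioOp^[2*r+1]) a n * (ratioOp^[2*r+1]) a (n+2))
        ≤ Real.log (((ratioOp^[2*r+1]) a (n+1))^2) := by
      rw [Real.log_pow, Real.log_mul (ne_of_gt hp0) (ne_of_gt hp2)]
      push_cast
      linarith
    exact (Real.log_le_log_iff (by positivity) (by positivity)).mp hlog
end

section
/- The sequence {C_n}_{n≥1} of Catalan numbers is infinitely log-monotonic. -/
open Real intervalIntegral Finset

namespace Stmt5Aux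

/-- forward difference operator -/
noncomputable def fd (f : ℕ → ℝ) : ℕ → ℝ := fun n => f (n+1) - f n

lemma fd_iter_succ' (f : ℕ → ℝ) (k n : ℕ) :
    fd^[k+1] f n = fd^[k] f (n+1) - fd^[k] f n := by
  rw [Function.iterate_succ_apply']; rfl

noncomputable def phiC (n : ℕ) : ℝ := Real.log (2*(2*(n:ℝ)+1)) - Real.log ((n:ℝ)+2)

noncomputable def PP (j n : ℕ) (u : ℝ) : ℝ := ∏ i ∈ Finset.range (j+1), ((n:ℝ) + u + i)⁻¹

noncomputable def SS (j n : ℕ) : ℝ := ∫ u in (1/2:ℝ)..2, PP j n u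

lemma PP_pos (j n : ℕ) {u : ℝ} (hu : 0 < u) : 0 < PP j n u := by
  apply Finset.prod_pos
  intro i _
  have : (0:ℝ) ≤ (n:ℝ) + (i:ℝ) := by positivity
  positivity

lemma uIcc_eq : Set.uIcc (1/2:ℝ) 2 = Set.Icc (1/2:ℝ) 2 := Set.uIcc_of_le (by norm_num)

lemma contPP (j n : ℕ) : ContinuousOn (PP j n) (Set.uIcc (1/2:ℝ) 2) := by
  rw [uIcc_eq]
  apply continuousOn_finset_prod
  intro i _
  apply ContinuousOn.inv₀ (by fun_prop)
  intro u hu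
  have h1 : (1/2:ℝ) ≤ u := hu.1
  have : (0:ℝ) ≤ (n:ℝ) + (i:ℝ) := by positivity
  nlinarith

lemma intPP (j n : ℕ) : IntervalIntegrable (PP j n) MeasureTheory.volume (1/2:ℝ) 2 :=
  (contPP j n).intervalIntegrable

lemma SS_nonneg (j n : ℕ) : 0 ≤ SS j n := by
  apply intervalIntegral.integral_nonneg (by norm_num)
  intro u hu
  exact le_of_lt (PP_pos j n (by linarith [hu.1]))

lemma PP_shift (j n : ℕ) {u : ℝ} (hu : (1/2:ℝ) ≤ u) :
    PP j (n+1) u = PP (j+1) n u * ((n:ℝ) + u) := by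
  have hx : ((n:ℝ) + u) ≠ 0 := by positivity
  unfold PP
  rw [Finset.prod_range_succ' (fun i => ((n:ℝ) + u + i)⁻¹) (j+1)]
  push_cast
  rw [mul_assoc]
  rw [show ((n:ℝ) + u + 0)⁻¹ * ((n:ℝ) + u) = 1 by rw [add_zero, inv_mul_cancel₀ hx]]
  rw [mul_one]
  apply Finset.prod_congr rfl
  intro i _
  push_cast
  ring_nf

lemma PP_last (j n : ℕ) {u : ℝ} (hu : (1/2:ℝ) ≤ u) :
    PP j n u = PP (j+1) n u * ((n:ℝ) + u + (j+1)) := by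
  have hx : ((n:ℝ) + u + ((j:ℝ)+1)) ≠ 0 := by positivity
  unfold PP
  rw [Finset.prod_range_succ (fun i => ((n:ℝ) + u + i)⁻¹) (j+1)]
  push_cast
  rw [mul_assoc, inv_mul_cancel₀ hx, mul_one]

lemma SS_step (j n : ℕ) : SS j (n+1) - SS j n = -(((j:ℝ)+1) * SS (j+1) n) := by
  unfold SS
  rw [← intervalIntegral.integral_sub (intPP j (n+1)) (intPP j n)]
  rw [show -(((j:ℝ)+1) * ∫ u in (1/2:ℝ)..2, PP (j+1) n u)
      = ∫ u in (1/2:ℝ)..2, (-((j:ℝ)+1)) * PP (j+1) n u by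
    rw [intervalIntegral.integral_const_mul]; ring]
  apply intervalIntegral.integral_congr
  intro u hu
  rw [uIcc_eq] at hu
  show PP j (n+1) u - PP j n u = -((j:ℝ)+1) * PP (j+1) n u
  rw [PP_shift j n hu.1, PP_last j n hu.1]
  ring


lemma int_inv_shift (c : ℝ) (hc : 0 ≤ c) :
    ∫ u in (1/2:ℝ)..2, (u + c)⁻¹ = Real.log (2+c) - Real.log (1/2+c) := by
  rw [intervalIntegral.integral_comp_add_right (fun x => x⁻¹) c]
  rw [integral_inv_of_pos (by linarith) (by linarith)]
  rw [Real.log_div (by linarith) (by linarith)]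

lemma int_inv_shift' (c : ℝ) (hc : 0 ≤ c) :
    IntervalIntegrable (fun u => (u + c)⁻¹) MeasureTheory.volume (1/2:ℝ) 2 := by
  apply ContinuousOn.intervalIntegrable
  apply ContinuousOn.inv₀ (by fun_prop)
  intro u hu
  rw [uIcc_eq] at hu
  have := hu.1
  intro h; nlinarith

lemma SS_one (n : ℕ) :
    SS 1 n = (Real.log (2+(n:ℝ)) - Real.log (1/2+(n:ℝ)))
           - (Real.log (2+((n:ℝ)+1)) - Real.log (1/2+((n:ℝ)+1))) := by
  have hn : (0:ℝ) ≤ (n:ℝ) := Nat.cast_nonneg n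
  unfold SS
  rw [show (∫ u in (1/2:ℝ)..2, PP 1 n u)
      = ∫ u in (1/2:ℝ)..2, ((u + (n:ℝ))⁻¹ - (u + ((n:ℝ)+1))⁻¹) from ?_]
  · rw [intervalIntegral.integral_sub (int_inv_shift' _ hn) (int_inv_shift' _ (by linarith))]
    rw [int_inv_shift _ hn, int_inv_shift _ (by linarith)]
  · apply intervalIntegral.integral_congr
    intro u hu
    rw [uIcc_eq] at hu
    have h1 : (1/2:ℝ) ≤ u := hu.1
    show PP 1 n u = _
    unfold PP
    rw [show (1:ℕ)+1 = 2 from rfl, Finset.prod_range_succ, Finset.prod_range_one]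
    push_cast
    have ha : (n:ℝ) + u ≠ 0 := by positivity
    have hb : (n:ℝ) + u + 1 ≠ 0 := by positivity
    field_simp
    ring

lemma fd_phi (n : ℕ) : fd phiC n = SS 1 n := by
  rw [SS_one]
  show phiC (n+1) - phiC n = _
  unfold phiC
  push_cast
  have hn : (0:ℝ) ≤ (n:ℝ) := Nat.cast_nonneg n
  have e1 : Real.log (2*(2*((n:ℝ)+1)+1)) = Real.log 4 + Real.log (1/2+((n:ℝ)+1)) := by
    rw [← Real.log_mul (by norm_num) (by positivity)]
    norm_num; ring_nf
  have e2 : Real.log (2*(2*(n:ℝ)+1)) = Real.log 4 + Real.log (1/2+(n:ℝ)) := by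
    rw [← Real.log_mul (by norm_num) (by positivity)]
    norm_num; ring_nf
  have e3 : Real.log ((n:ℝ)+1+2) = Real.log (2+((n:ℝ)+1)) := by ring_nf
  have e4 : Real.log ((n:ℝ)+2) = Real.log (2+(n:ℝ)) := by ring_nf
  rw [e1, e2, e3, e4]
  ring

lemma fd_iter_phi (j : ℕ) : ∀ n, fd^[j+1] phiC n
    = (-1:ℝ)^j * (Nat.factorial (j+1) : ℝ) * SS (j+1) n := by
  induction j with
  | zero => intro n; simpa [Nat.factorial] using fd_phi n
  | succ j ih =>
    intro n
    rw [fd_iter_succ', ih n, ih (n+1)]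
    have := SS_step (j+1) n
    rw [show (j+1+1) = j+2 from rfl] at this ⊢
    rw [show ((-1:ℝ))^(j+1) = -(-1:ℝ)^j by ring]
    have hf : (Nat.factorial (j+2) : ℝ) = ((j:ℝ)+2) * (Nat.factorial (j+1) : ℝ) := by
      rw [Nat.factorial_succ]; push_cast; ring
    rw [hf]
    push_cast at this
    linear_combination ((-1:ℝ))^j * ((Nat.factorial (j+1)):ℝ) * this


lemma catalan_pos' (n : ℕ) : 0 < catalan n := by
  have h := succ_mul_catalan_eq_centralBinom n
  have h2 := Nat.centralBinom_pos n
  rcases Nat.eq_zero_or_pos (catalan n) with h0 | h0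
  · rw [h0, Nat.mul_zero] at h; omega
  · exact h0

noncomputable def Lc : ℕ → ℝ := fun n => Real.log (catalan n)

lemma cat_succ (n : ℕ) : (n+2) * catalan (n+1) = 2*(2*n+1) * catalan n := by
  have h1 := Nat.succ_mul_centralBinom_succ n
  have h2 := succ_mul_catalan_eq_centralBinom n
  have h3 := succ_mul_catalan_eq_centralBinom (n+1)
  apply Nat.eq_of_mul_eq_mul_left (show 0 < n+1 by omega)
  calc (n+1) * ((n+2) * catalan (n+1)) = (n+1) * ((n+1+1) * catalan (n+1)) := by ring_nf
    _ = (n+1) * Nat.centralBinom (n+1) := by rw [h3]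
    _ = 2*(2*n+1) * Nat.centralBinom n := h1
    _ = 2*(2*n+1) * ((n+1) * catalan n) := by rw [h2]
    _ = (n+1) * (2*(2*n+1) * catalan n) := by ring

lemma fd_Lc : fd Lc = phiC := by
  funext n
  show Real.log (catalan (n+1)) - Real.log (catalan n) = _
  have hc1 : (0:ℝ) < (catalan n : ℝ) := by exact_mod_cast catalan_pos' n
  have hc2 : (0:ℝ) < (catalan (n+1) : ℝ) := by exact_mod_cast catalan_pos' (n+1)
  have hn : (0:ℝ) ≤ (n:ℝ) := Nat.cast_nonneg n
  have key : ((n:ℝ)+2) * (catalan (n+1) : ℝ) = (2*(2*(n:ℝ)+1)) * (catalan n : ℝ) := by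
    have := cat_succ n
    exact_mod_cast congrArg (Nat.cast : ℕ → ℝ) this
  have := congrArg Real.log key
  rw [Real.log_mul (by positivity) (ne_of_gt hc2),
      Real.log_mul (by positivity) (ne_of_gt hc1)] at this
  unfold phiC
  linarith

lemma fd_iter_Lc_even (r n : ℕ) : 0 ≤ fd^[2*r+2] Lc n := by
  have h : fd^[2*r+2] Lc = fd^[2*r+1] (fd Lc) := Function.iterate_succ_apply fd (2*r+1) Lc
  rw [h, fd_Lc, fd_iter_phi (2*r) n]
  have : ((-1:ℝ))^(2*r) = 1 := by
    rw [pow_mul]; norm_num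
  rw [this]
  have := SS_nonneg (2*r+1) n
  positivity

lemma fd_iter_Lc_odd (r n : ℕ) : fd^[2*r+3] Lc n ≤ 0 := by
  have h : fd^[2*r+3] Lc = fd^[2*r+2] (fd Lc) := Function.iterate_succ_apply fd (2*r+2) Lc
  rw [h, fd_Lc, fd_iter_phi (2*r+1) n]
  have h1 : ((-1:ℝ))^(2*r+1) = -1 := by
    rw [pow_succ, pow_mul]; norm_num
  rw [h1]
  have h2 := SS_nonneg (2*r+2) n
  have h3 : (0:ℝ) ≤ (Nat.factorial (2*r+2) : ℝ) := Nat.cast_nonneg _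
  nlinarith

lemma rat (a : ℕ → ℝ) (ha : ∀ n : ℕ, 1 ≤ n → a n = (catalan n : ℝ)) :
    ∀ k n, 1 ≤ n → 0 < (ratioOp^[k]) a n ∧
      Real.log ((ratioOp^[k]) a n) = fd^[k] Lc n := by
  intro k
  induction k with
  | zero =>
    intro n hn
    have := catalan_pos' n
    constructor
    · simp only [Function.iterate_zero, id, ha n hn]
      exact_mod_cast this
    · simp only [Function.iterate_zero, id, ha n hn]; rfl
  | succ k ih =>
    intro n hn
    have h1 := ih n hn
    have h2 := ih (n+1) (by omega)
    have he : (ratioOp^[k+1]) a n = (ratioOp^[k]) a (n+1) / (ratioOp^[k]) a n := by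
      rw [Function.iterate_succ_apply']; rfl
    constructor
    · rw [he]; exact div_pos h2.1 h1.1
    · rw [he, Real.log_div (ne_of_gt h2.1) (ne_of_gt h1.1), h1.2, h2.2, fd_iter_succ']

end Stmt5Aux

theorem stmt_5 (a : ℕ → ℝ) (ha : ∀ n : ℕ, 1 ≤ n → a n = (catalan n : ℝ)) :
    ∀ r : ℕ,
      (∀ n : ℕ, 1 ≤ n →
        ((ratioOp^[2*r]) a (n+1))^2 ≤ (ratioOp^[2*r]) a n * (ratioOp^[2*r]) a (n+2)) ∧
      (∀ n : ℕ, 1 ≤ n →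
        ((ratioOp^[2*r+1]) a (n+1))^2 ≥ (ratioOp^[2*r+1]) a n * (ratioOp^[2*r+1]) a (n+2)) := by
  open Stmt5Aux in
  intro r
  have fd2 : ∀ (k n : ℕ), fd^[k+2] Lc n
      = fd^[k] Lc (n+2) - 2 * fd^[k] Lc (n+1) + fd^[k] Lc n := by
    intro k n
    rw [fd_iter_succ', fd_iter_succ', fd_iter_succ']
    ring
  constructor
  · intro n hn
    obtain ⟨p1, l1⟩ := rat a ha (2*r) n hn
    obtain ⟨p2, l2⟩ := rat a ha (2*r) (n+1) (by omega)
    obtain ⟨p3, l3⟩ := rat a ha (2*r) (n+2) (by omega)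
    have hkey := fd_iter_Lc_even r n
    rw [fd2 (2*r) n] at hkey
    have hlog : Real.log (((ratioOp^[2*r]) a (n+1))^2)
        ≤ Real.log ((ratioOp^[2*r]) a n * (ratioOp^[2*r]) a (n+2)) := by
      rw [Real.log_pow, Real.log_mul (ne_of_gt p1) (ne_of_gt p3), l1, l2, l3]
      push_cast
      linarith
    have := Real.exp_le_exp.mpr hlog
    rwa [Real.exp_log (by positivity), Real.exp_log (by positivity)] at this
  · intro n hn
    obtain ⟨p1, l1⟩ := rat a ha (2*r+1) n hn
    obtain ⟨p2, l2⟩ := rat a ha (2*r+1) (n+1) (by omega)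
    obtain ⟨p3, l3⟩ := rat a ha (2*r+1) (n+2) (by omega)
    have hkey := fd_iter_Lc_odd r n
    rw [show 2*r+3 = (2*r+1)+2 by ring, fd2 (2*r+1) n] at hkey
    have hlog : Real.log ((ratioOp^[2*r+1]) a n * (ratioOp^[2*r+1]) a (n+2))
        ≤ Real.log (((ratioOp^[2*r+1]) a (n+1))^2) := by
      rw [Real.log_pow, Real.log_mul (ne_of_gt p1) (ne_of_gt p3), l1, l2, l3]
      push_cast
      linarith
    have := Real.exp_le_exp.mpr hlog
    rwa [Real.exp_log (by positivity), Real.exp_log (by positivity)] at this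
end

section
/- For every real x ≥ 1 and every integer k ≥ 2, (-1)^k [log Γ(2x+1)]^{(k)} > (-1)^k [log Γ(x+1)]^{(k)} + (-1)^k [log Γ(x+2)]^{(k)}. -/
open Real Filter Set Topology Finset

noncomputable def Sk (k : ℕ) (x : ℝ) : ℝ := ∑' m : ℕ, 1 / (x + m) ^ k

noncomputable def psi (x : ℝ) : ℝ :=
  -Real.eulerMascheroniConstant + ∑' m : ℕ, (x - 1) / ((1 + m) * (x + m))

lemma aux_pos {x : ℝ} (hx : 0 < x) (m : ℕ) : (0:ℝ) < x + m := by
  have : (0:ℝ) ≤ m := Nat.cast_nonneg m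
  linarith

lemma one_add_pos (m : ℕ) : (0:ℝ) < 1 + m := aux_pos one_pos m

lemma denom_bound {c x : ℝ} (hcx : c ≤ x) (hc1 : c ≤ 1) (m : ℕ) :
    c * (1 + m) ≤ x + m := by
  have h0 : (0:ℝ) ≤ m := Nat.cast_nonneg m
  nlinarith

lemma summable_aux {k : ℕ} (hk : 2 ≤ k) {x : ℝ} (hx : 0 < x) :
    Summable (fun m : ℕ => 1 / (x + m) ^ k) := by
  rw [← summable_nat_add_iff 1]
  have h : Summable (fun m : ℕ => 1 / ((m : ℝ) + 1) ^ k) := by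
    have h2 := (summable_one_div_nat_pow (p := k)).mpr hk
    have h3 := (summable_nat_add_iff 1).mpr h2
    simpa using h3
  refine h.of_nonneg_of_le (fun m => ?_) (fun m => ?_)
  · have h0 := aux_pos hx (m + 1)
    positivity
  · have h0 : ((m:ℝ) + 1) ≤ x + ((m+1 : ℕ) : ℝ) := by push_cast; linarith
    gcongr

lemma summable_one_add {k : ℕ} (hk : 2 ≤ k) :
    Summable (fun m : ℕ => 1 / ((1:ℝ) + m) ^ k) := summable_aux hk one_pos

/-- The sequence `log n - H_{n+1}` tends to `-γ`. -/
lemma tendsto_c :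
    Tendsto (fun n : ℕ => Real.log n - ∑ m ∈ Finset.range (n+1), 1 / ((1:ℝ) + m))
      atTop (𝓝 (-Real.eulerMascheroniConstant)) := by
  have h1 : Tendsto (fun n : ℕ => (harmonic (n+1) : ℝ) - Real.log (n+2)) atTop
      (𝓝 Real.eulerMascheroniConstant) := by
    have h := Real.tendsto_eulerMascheroniSeq.comp (tendsto_add_atTop_nat 1)
    refine h.congr fun n => ?_
    simp only [Real.eulerMascheroniSeq, Function.comp]
    push_cast
    ring_nf
  have h2 : Tendsto (fun n : ℕ => Real.log n - Real.log (n+2)) atTop (𝓝 0) := by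
    have hr : Tendsto (fun n : ℕ => ((n:ℝ)+2) / n) atTop (𝓝 1) := by
      have h : Tendsto (fun n : ℕ => (1:ℝ) + 2 / (n:ℝ)) atTop (𝓝 ((1:ℝ) + 0)) :=
        tendsto_const_nhds.add (tendsto_const_div_atTop_nhds_zero_nat 2)
      rw [add_zero] at h
      refine (h.congr' ?_ : Tendsto (fun n : ℕ => ((n:ℝ)+2) / n) atTop (𝓝 (1:ℝ)))
      filter_upwards [eventually_gt_atTop 0] with n hn
      have hn0 : (n:ℝ) ≠ 0 := Nat.cast_ne_zero.mpr hn.ne'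
      field_simp
    have hlog : Tendsto (fun n : ℕ => Real.log (((n:ℝ)+2) / n)) atTop (𝓝 0) := by
      have h := (Real.continuousAt_log one_ne_zero).tendsto.comp hr
      simpa [Function.comp_def] using h
    have h3 : Tendsto (fun n : ℕ => -Real.log (((n:ℝ)+2) / n)) atTop (𝓝 0) := by
      simpa using hlog.neg
    refine h3.congr' ?_
    filter_upwards [eventually_gt_atTop 0] with n hn
    have hn' : (0:ℝ) < n := Nat.cast_pos.mpr hn
    rw [Real.log_div (by positivity) (by positivity)]
    ring
  have key : Tendsto (fun n : ℕ =>
      (Real.log n - Real.log (n+2)) - ((harmonic (n+1) : ℝ) - Real.log (n+2)))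
      atTop (𝓝 (0 - Real.eulerMascheroniConstant)) := h2.sub h1
  rw [zero_sub] at key
  refine key.congr fun n => ?_
  have hh : (harmonic (n+1) : ℝ) = ∑ m ∈ Finset.range (n+1), 1 / ((1:ℝ) + m) := by
    rw [harmonic]
    push_cast
    refine Finset.sum_congr rfl fun m _ => ?_
    rw [one_div, add_comm]
  rw [hh]
  ring

/-- Termwise decomposition. -/
lemma term_decomp {y : ℝ} (hy : 0 < y) (m : ℕ) :
    1 / ((1:ℝ) + m) - 1 / (y + m) = (y - 1) / ((1 + m) * (y + m)) := by
  have h1 := one_add_pos m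
  have h2 := aux_pos hy m
  first
  | (field_simp; ring)
  | field_simp

lemma F1_decomp {y : ℝ} (hy : 0 < y) (n : ℕ) :
    Real.log n - ∑ m ∈ Finset.range (n+1), 1 / (y + m)
      = (Real.log n - ∑ m ∈ Finset.range (n+1), 1 / ((1:ℝ) + m))
        + ∑ m ∈ Finset.range (n+1), (y - 1) / ((1 + m) * (y + m)) := by
  have h : ∑ m ∈ Finset.range (n+1), (y - 1) / ((1 + (m:ℝ)) * (y + m))
      = ∑ m ∈ Finset.range (n+1), (1 / ((1:ℝ) + m) - 1 / (y + m)) :=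
    Finset.sum_congr rfl fun m _ => (term_decomp hy m).symm
  rw [h, Finset.sum_sub_distrib]
  ring

/-- Uniform convergence of digamma partial sums on `Ioo (x₀/2) (x₀+1)`. -/
lemma tendstoUniformlyOn_F1 {x₀ : ℝ} (hx₀ : 0 < x₀) :
    TendstoUniformlyOn
      (fun (n : ℕ) (y : ℝ) => Real.log n - ∑ m ∈ Finset.range (n+1), 1 / (y + m))
      psi atTop (Set.Ioo (x₀/2) (x₀+1)) := by
  set c : ℝ := min (x₀/2) 1 with hc
  have hc0 : 0 < c := lt_min (by linarith) one_pos
  have hc1 : c ≤ 1 := min_le_right _ _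
  have hu : Summable (fun m : ℕ => (x₀ + 2) / c * (1 / ((1:ℝ) + m) ^ 2)) :=
    (summable_one_add le_rfl).mul_left _
  have hbound : ∀ (m : ℕ), ∀ y ∈ Set.Ioo (x₀/2) (x₀+1),
      ‖(y - 1) / ((1 + (m:ℝ)) * (y + m))‖ ≤ (x₀ + 2) / c * (1 / ((1:ℝ) + m) ^ 2) := by
    intro m y hy
    have hy0 : 0 < y := lt_trans (by linarith) hy.1
    have h1 := one_add_pos m
    have h2 := aux_pos hy0 m
    have hcy : c ≤ y := le_trans (min_le_left _ _) hy.1.le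
    have hd : c * (1 + m) ≤ y + m := denom_bound hcy hc1 m
    have habs : |y - 1| ≤ x₀ + 2 := by
      rw [abs_le]
      constructor
      · linarith [hy.1]
      · linarith [hy.2]
    rw [norm_div, Real.norm_eq_abs, Real.norm_eq_abs,
      abs_of_pos (by positivity : (0:ℝ) < (1 + (m:ℝ)) * (y + m))]
    have hden : c * (1 + (m:ℝ)) ^ 2 ≤ (1 + (m:ℝ)) * (y + m) := by
      nlinarith
    calc |y - 1| / ((1 + (m:ℝ)) * (y + m)) ≤ (x₀ + 2) / (c * (1 + (m:ℝ)) ^ 2) := by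
          apply div_le_div₀ (by linarith) habs (by positivity) hden
      _ = (x₀ + 2) / c * (1 / ((1:ℝ) + m) ^ 2) := by
          field_simp
  have hT0 := tendstoUniformlyOn_tsum_nat hu hbound
  have hT : TendstoUniformlyOn
      (fun (n : ℕ) (y : ℝ) => ∑ m ∈ Finset.range (n+1), (y - 1) / ((1 + (m:ℝ)) * (y + m)))
      (fun y : ℝ => ∑' m : ℕ, (y - 1) / ((1 + (m:ℝ)) * (y + m))) atTop
      (Set.Ioo (x₀/2) (x₀+1)) :=
    fun v hv => (tendsto_add_atTop_nat 1).eventually (hT0 v hv)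
  have hC : TendstoUniformlyOn
      (fun (n : ℕ) (_ : ℝ) => Real.log n - ∑ m ∈ Finset.range (n+1), 1 / ((1:ℝ) + m))
      (fun _ : ℝ => -Real.eulerMascheroniConstant) atTop (Set.Ioo (x₀/2) (x₀+1)) :=
    tendsto_c.tendstoUniformlyOn_const _
  have hsum := hC.add hT
  have hlim : ((fun _ : ℝ => -Real.eulerMascheroniConstant)
      + (fun y : ℝ => ∑' m : ℕ, (y - 1) / ((1 + (m:ℝ)) * (y + m)))) = psi := by
    funext y; simp [psi]
  rw [hlim] at hsum
  refine hsum.congr ?_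
  filter_upwards with n y hy
  have hy0 : 0 < y := lt_trans (by linarith [hy.1]) hy.1
  simp only [Pi.add_apply]
  exact (F1_decomp hy0 n).symm

/-- Each `logGammaSeq · n` has the partial digamma sum as derivative. -/
lemma hasDerivAt_logGammaSeq {y : ℝ} (hy : 0 < y) (n : ℕ) :
    HasDerivAt (fun t => Real.BohrMollerup.logGammaSeq t n)
      (Real.log n - ∑ m ∈ Finset.range (n+1), 1 / (y + m)) y := by
  have h1 : HasDerivAt (fun t : ℝ => t * Real.log n + Real.log (Nat.factorial n))
      (Real.log n) y := by
    simpa using ((hasDerivAt_id y).mul_const (Real.log n)).add_const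
      (Real.log (Nat.factorial n))
  have h2 : HasDerivAt (fun t : ℝ => ∑ m ∈ Finset.range (n+1), Real.log (t + m))
      (∑ m ∈ Finset.range (n+1), 1 / (y + m)) y := by
    refine HasDerivAt.fun_sum fun m _ => ?_
    have h3 : HasDerivAt (fun t : ℝ => t + (m:ℝ)) 1 y := (hasDerivAt_id y).add_const _
    have h4 := h3.log (aux_pos hy m).ne'
    simpa using h4
  have h5 := h1.fun_sub h2
  simpa [Real.BohrMollerup.logGammaSeq] using h5

/-- Each partial digamma sum has the partial trigamma sum as derivative. -/
lemma hasDerivAt_F1 {y : ℝ} (hy : 0 < y) (n : ℕ) :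
    HasDerivAt (fun t : ℝ => Real.log n - ∑ m ∈ Finset.range (n+1), 1 / (t + m))
      (∑ m ∈ Finset.range (n+1), 1 / (y + m) ^ 2) y := by
  have h2 : HasDerivAt (fun t : ℝ => ∑ m ∈ Finset.range (n+1), 1 / (t + m))
      (∑ m ∈ Finset.range (n+1), -(1 / (y + m) ^ 2)) y := by
    refine HasDerivAt.fun_sum fun m _ => ?_
    have h3 : HasDerivAt (fun t : ℝ => t + (m:ℝ)) 1 y := (hasDerivAt_id y).add_const _
    have h4 := h3.fun_inv (aux_pos hy m).ne'
    simp only [one_div]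
    simpa [neg_div] using h4
  have h5 := (hasDerivAt_const y (Real.log n)).fun_sub h2
  simpa using h5

lemma hasDerivAt_log_Gamma {x : ℝ} (hx : 0 < x) :
    HasDerivAt (fun y => Real.log (Real.Gamma y)) (psi x) x := by
  have hmem : x ∈ Set.Ioo (x/2) (x+1) := ⟨by linarith, by linarith⟩
  refine hasDerivAt_of_tendstoUniformlyOn
    (f := fun (n : ℕ) (t : ℝ) => Real.BohrMollerup.logGammaSeq t n)
    isOpen_Ioo (tendstoUniformlyOn_F1 hx) ?_ ?_ hmem
  · filter_upwards with n y hy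
    exact hasDerivAt_logGammaSeq (lt_trans (by linarith [hy.1]) hy.1) n
  · intro y hy
    exact Real.BohrMollerup.tendsto_log_gamma (lt_trans (by linarith [hy.1]) hy.1)

lemma tendstoUniformlyOn_F2 {x₀ : ℝ} (hx₀ : 0 < x₀) :
    TendstoUniformlyOn
      (fun (n : ℕ) (y : ℝ) => ∑ m ∈ Finset.range (n+1), 1 / (y + m) ^ 2)
      (Sk 2) atTop (Set.Ioo (x₀/2) (x₀+1)) := by
  set c : ℝ := min (x₀/2) 1 with hc
  have hc0 : 0 < c := lt_min (by linarith) one_pos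
  have hc1 : c ≤ 1 := min_le_right _ _
  have hu : Summable (fun m : ℕ => 1 / c ^ 2 * (1 / ((1:ℝ) + m) ^ 2)) :=
    (summable_one_add le_rfl).mul_left _
  have hbound : ∀ (m : ℕ), ∀ y ∈ Set.Ioo (x₀/2) (x₀+1),
      ‖1 / (y + (m:ℝ)) ^ 2‖ ≤ 1 / c ^ 2 * (1 / ((1:ℝ) + m) ^ 2) := by
    intro m y hy
    have hy0 : 0 < y := lt_trans (by linarith) hy.1
    have h1 := one_add_pos m
    have h2 := aux_pos hy0 m
    have hcy : c ≤ y := le_trans (min_le_left _ _) hy.1.le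
    have hd : c * (1 + m) ≤ y + m := denom_bound hcy hc1 m
    rw [Real.norm_eq_abs, abs_of_pos (by positivity)]
    have heq : 1 / c ^ 2 * (1 / ((1:ℝ) + m) ^ 2) = 1 / (c * (1 + m)) ^ 2 := by
      rw [mul_pow]; field_simp
    rw [heq]
    first
    | (gcongr; positivity)
    | gcongr
  have hT0 := tendstoUniformlyOn_tsum_nat hu hbound
  exact fun v hv => (tendsto_add_atTop_nat 1).eventually (hT0 v hv)

lemma hasDerivAt_psi {x : ℝ} (hx : 0 < x) : HasDerivAt psi (Sk 2 x) x := by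
  have hmem : x ∈ Set.Ioo (x/2) (x+1) := ⟨by linarith, by linarith⟩
  refine hasDerivAt_of_tendstoUniformlyOn
    (f := fun (n : ℕ) (t : ℝ) => Real.log n - ∑ m ∈ Finset.range (n+1), 1 / (t + m))
    isOpen_Ioo (tendstoUniformlyOn_F2 hx) ?_ ?_ hmem
  · filter_upwards with n y hy
    exact hasDerivAt_F1 (lt_trans (by linarith [hy.1]) hy.1) n
  · intro y hy
    exact (tendstoUniformlyOn_F1 hx).tendsto_at hy

lemma hasDerivAt_Sk {k : ℕ} (hk : 2 ≤ k) {x : ℝ} (hx : 0 < x) :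
    HasDerivAt (Sk k) (-(k:ℝ) * Sk (k+1) x) x := by
  obtain ⟨j, rfl⟩ : ∃ j, k = j + 2 := ⟨k - 2, by omega⟩
  set c : ℝ := min (x/2) 1 with hc
  have hc0 : 0 < c := lt_min (by linarith) one_pos
  have hc1 : c ≤ 1 := min_le_right _ _
  have hu : Summable (fun m : ℕ => ((j:ℝ)+2) / c ^ (j+3) * (1 / ((1:ℝ) + m) ^ (j+3))) :=
    (summable_one_add (by omega)).mul_left _
  have hxmem : x ∈ Set.Ioi (x/2) := Set.mem_Ioi.mpr (by linarith)
  have key : HasDerivAt (fun z : ℝ => ∑' m : ℕ, 1 / (z + (m:ℝ)) ^ (j+2))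
      (∑' m : ℕ, -((j:ℝ)+2) / (x + (m:ℝ)) ^ (j+3)) x := by
    refine hasDerivAt_tsum_of_isPreconnected
      (g := fun (m : ℕ) (z : ℝ) => 1 / (z + (m:ℝ)) ^ (j+2))
      (g' := fun (m : ℕ) (z : ℝ) => -((j:ℝ)+2) / (z + (m:ℝ)) ^ (j+3))
      hu isOpen_Ioi isPreconnected_Ioi
      (fun m y hy => ?_) (fun m y hy => ?_) hxmem
      (summable_aux hk hx) hxmem
    · have hy0 : 0 < y := lt_trans (by linarith) hy
      have h2 := aux_pos hy0 m
      have h3 : HasDerivAt (fun t : ℝ => t + (m:ℝ)) 1 y := (hasDerivAt_id y).add_const _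
      have h4 := (h3.fun_pow (j+2)).fun_inv (pow_ne_zero _ h2.ne')
      have he : -(((j+2 : ℕ):ℝ) * (y + (m:ℝ)) ^ (j + 2 - 1) * 1) / ((y + (m:ℝ)) ^ (j + 2)) ^ 2
          = -((j:ℝ)+2) / (y + (m:ℝ)) ^ (j+3) := by
        rw [show j + 2 - 1 = j + 1 from rfl]
        rw [div_eq_div_iff (by positivity) (by positivity)]
        push_cast
        ring
      rw [he] at h4
      simpa [one_div] using h4
    · have hy0 : 0 < y := lt_trans (by linarith) hy
      have h2 := aux_pos hy0 m
      have hcy : c ≤ y := le_trans (min_le_left _ _) (le_of_lt hy)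
      have hd : c * (1 + m) ≤ y + m := denom_bound hcy hc1 m
      have h1 := one_add_pos m
      rw [Real.norm_eq_abs, abs_div, abs_neg, abs_of_pos (by positivity : (0:ℝ) < (j:ℝ)+2),
        abs_of_pos (by positivity : (0:ℝ) < (y + (m:ℝ)) ^ (j+3))]
      have heq : ((j:ℝ)+2) / c ^ (j+3) * (1 / ((1:ℝ) + m) ^ (j+3))
          = ((j:ℝ)+2) / (c * (1 + m)) ^ (j+3) := by
        rw [mul_pow]; field_simp
      rw [heq]
      first
      | (gcongr; positivity)
      | gcongr
  have heq2 : (∑' m : ℕ, -((j:ℝ)+2) / (x + (m:ℝ)) ^ (j+3))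
      = -(((j+2:ℕ):ℝ)) * Sk (j+2+1) x := by
    rw [Sk, ← tsum_mul_left]
    refine tsum_congr fun m => ?_
    push_cast
    ring
  rw [heq2] at key
  exact key

/-- affine inner function derivative -/
lemma hasDerivAt_affine (a b y : ℝ) : HasDerivAt (fun t : ℝ => a * t + b) a y := by
  simpa using ((hasDerivAt_id y).const_mul a).add_const b

lemma iterated_formula {a b : ℝ} (ha : 0 < a) (hb : 0 < b) :
    ∀ (k : ℕ) (x : ℝ), 0 < x →
      iteratedDeriv (k+2) (fun y => Real.log (Real.Gamma (a*y+b))) x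
        = (-1:ℝ)^k * a^(k+2) * (Nat.factorial (k+1) : ℝ) * Sk (k+2) (a*x+b) := by
  intro k
  induction k with
  | zero =>
    intro x hx
    have hax : ∀ y : ℝ, 0 < y → 0 < a * y + b := fun y hy => by positivity
    rw [iteratedDeriv_succ, iteratedDeriv_one]
    have hev : deriv (fun y => Real.log (Real.Gamma (a*y+b)))
        =ᶠ[𝓝 x] fun y => psi (a*y+b) * a := by
      filter_upwards [eventually_gt_nhds hx] with y hy
      have h := (hasDerivAt_log_Gamma (hax y hy)).comp y (hasDerivAt_affine a b y)
      exact h.deriv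
    rw [hev.deriv_eq]
    have h2 : HasDerivAt (fun y : ℝ => psi (a*y+b) * a) (Sk 2 (a*x+b) * a * a) x :=
      by have h := (hasDerivAt_psi (hax x hx)).comp x (hasDerivAt_affine a b x); exact h.mul_const a
    rw [h2.deriv]
    norm_num [Nat.factorial]
    ring
  | succ k ih =>
    intro x hx
    have hax : ∀ y : ℝ, 0 < y → 0 < a * y + b := fun y hy => by positivity
    rw [iteratedDeriv_succ]
    have hev : iteratedDeriv (k+2) (fun y => Real.log (Real.Gamma (a*y+b)))
        =ᶠ[𝓝 x] fun y => (-1:ℝ)^k * a^(k+2) * (Nat.factorial (k+1) : ℝ) * Sk (k+2) (a*y+b) := by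
      filter_upwards [eventually_gt_nhds hx] with y hy
      exact ih y hy
    rw [hev.deriv_eq]
    have h2 : HasDerivAt
        (fun y : ℝ => (-1:ℝ)^k * a^(k+2) * (Nat.factorial (k+1) : ℝ) * Sk (k+2) (a*y+b))
        ((-1:ℝ)^k * a^(k+2) * (Nat.factorial (k+1) : ℝ)
          * (-(((k+2:ℕ)):ℝ) * Sk (k+2+1) (a*x+b) * a)) x := by
      have h3 := (hasDerivAt_Sk (k := k+2) (by omega) (hax x hx)).comp x (hasDerivAt_affine a b x)
      exact h3.const_mul _
    rw [h2.deriv]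
    push_cast [Nat.factorial_succ]
    ring

lemma key_ineq {k : ℕ} (hk : 2 ≤ k) {x : ℝ} (hx : 1 ≤ x) :
    Sk k (x+1) + Sk k (x+2) < 2^k * Sk k (2*x+1) := by
  have hx0 : (0:ℝ) < x := by linarith
  have h21 : (0:ℝ) < 2*x+1 := by linarith
  have hhalf : (0:ℝ) < x + 1/2 := by linarith
  have hx1 : (0:ℝ) < x + 1 := by linarith
  have hx2 : (0:ℝ) < x + 2 := by linarith
  have hk0 : k ≠ 0 := by omega
  have heven : ∀ j : ℕ, 1 / (2*x+1 + ((2*j : ℕ):ℝ)) ^ k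
      = 1/2^k * (1 / ((x+1/2) + (j:ℝ)) ^ k) := by
    intro j
    have h : (2*x+1 + ((2*j : ℕ):ℝ)) = 2 * ((x+1/2) + j) := by push_cast; ring
    rw [h, mul_pow, div_mul_div_comm, one_mul]
  have hodd : ∀ j : ℕ, 1 / (2*x+1 + ((2*j+1 : ℕ):ℝ)) ^ k
      = 1/2^k * (1 / ((x+1) + (j:ℝ)) ^ k) := by
    intro j
    have h : (2*x+1 + ((2*j+1 : ℕ):ℝ)) = 2 * ((x+1) + j) := by push_cast; ring
    rw [h, mul_pow, div_mul_div_comm, one_mul]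
  have hse : Summable (fun j : ℕ => 1 / (2*x+1 + ((2*j : ℕ):ℝ)) ^ k) := by
    refine Summable.congr ((summable_aux hk hhalf).mul_left (1/2^k)) fun j => ?_
    rw [heven j]
  have hso : Summable (fun j : ℕ => 1 / (2*x+1 + ((2*j+1 : ℕ):ℝ)) ^ k) := by
    refine Summable.congr ((summable_aux hk hx1).mul_left (1/2^k)) fun j => ?_
    rw [hodd j]
  have hsplit : (∑' j : ℕ, 1 / (2*x+1 + ((2*j : ℕ):ℝ)) ^ k)
      + (∑' j : ℕ, 1 / (2*x+1 + ((2*j+1 : ℕ):ℝ)) ^ k) = Sk k (2*x+1) :=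
    tsum_even_add_odd (f := fun m : ℕ => 1 / (2*x+1 + (m:ℝ)) ^ k) hse hso
  have he2 : (∑' j : ℕ, 1 / (2*x+1 + ((2*j : ℕ):ℝ)) ^ k) = 1/2^k * Sk k (x+1/2) := by
    rw [Sk, ← tsum_mul_left]
    exact tsum_congr heven
  have ho2 : (∑' j : ℕ, 1 / (2*x+1 + ((2*j+1 : ℕ):ℝ)) ^ k) = 1/2^k * Sk k (x+1) := by
    rw [Sk, ← tsum_mul_left]
    exact tsum_congr hodd
  have hmain : 2^k * Sk k (2*x+1) = Sk k (x+1/2) + Sk k (x+1) := by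
    rw [← hsplit, he2, ho2]
    have h2k : (2:ℝ)^k ≠ 0 := by positivity
    first
    | (field_simp; ring)
    | field_simp
  rw [hmain]
  have hlt : Sk k (x+2) < Sk k (x+1/2) := by
    refine Summable.tsum_lt_tsum (f := fun m : ℕ => 1 / (x+2 + (m:ℝ)) ^ k)
      (g := fun m : ℕ => 1 / (x+1/2 + (m:ℝ)) ^ k) (i := 0) (fun m => ?_) ?_
      (summable_aux hk hx2) (summable_aux hk hhalf)
    · have h1 := aux_pos hhalf m
      have h2 := aux_pos hx2 m
      have hpow : (x + 1/2 + (m:ℝ)) ^ k ≤ (x + 2 + (m:ℝ)) ^ k :=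
        pow_le_pow_left₀ h1.le (by linarith) k
      exact one_div_le_one_div_of_le (by positivity) hpow
    · have h1 := aux_pos hhalf 0
      have h2 := aux_pos hx2 0
      simp only [Nat.cast_zero, add_zero]
      have hpow : (x + 1/2) ^ k < (x + 2) ^ k :=
        pow_lt_pow_left₀ (by linarith) (by linarith) hk0
      exact one_div_lt_one_div_of_lt (by positivity) hpow
  linarith

theorem stmt_6 :
    ∀ x : ℝ, 1 ≤ x → ∀ k : ℕ, 2 ≤ k →
      (-1:ℝ)^k * iteratedDeriv k (fun y => Real.log (Real.Gamma (2*y+1))) x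
        > (-1:ℝ)^k * iteratedDeriv k (fun y => Real.log (Real.Gamma (y+1))) x
          + (-1:ℝ)^k * iteratedDeriv k (fun y => Real.log (Real.Gamma (y+2))) x := by
  intro x hx k hk
  obtain ⟨j, rfl⟩ : ∃ j, k = j + 2 := ⟨k - 2, by omega⟩
  have hx0 : (0:ℝ) < x := by linarith
  have e1 := iterated_formula (a := 2) (b := 1) two_pos one_pos j x hx0
  have e2 := iterated_formula (a := 1) (b := 1) one_pos one_pos j x hx0
  have e3 := iterated_formula (a := 1) (b := 2) one_pos two_pos j x hx0
  simp only [one_mul, one_pow, mul_one] at e2 e3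
  rw [e1, e2, e3]
  have hkey := key_ineq (k := j+2) (by omega) hx
  have hfac : (0:ℝ) < (Nat.factorial (j+1) : ℝ) := by
    exact_mod_cast Nat.factorial_pos (j+1)
  have hsign : ((-1:ℝ))^(j+2) * (-1)^j = 1 := by
    rw [← pow_add]
    exact Even.neg_one_pow ⟨j+1, by ring⟩
  have g1 : (-1:ℝ)^(j+2) * ((-1:ℝ)^j * 2^(j+2) * (Nat.factorial (j+1) : ℝ) * Sk (j+2) (2*x+1))
      = 2^(j+2) * (Nat.factorial (j+1) : ℝ) * Sk (j+2) (2*x+1) := by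
    linear_combination (2^(j+2) * (Nat.factorial (j+1) : ℝ) * Sk (j+2) (2*x+1)) * hsign
  have g2 : (-1:ℝ)^(j+2) * ((-1:ℝ)^j * (Nat.factorial (j+1) : ℝ) * Sk (j+2) (x+1))
      = (Nat.factorial (j+1) : ℝ) * Sk (j+2) (x+1) := by
    linear_combination ((Nat.factorial (j+1) : ℝ) * Sk (j+2) (x+1)) * hsign
  have g3 : (-1:ℝ)^(j+2) * ((-1:ℝ)^j * (Nat.factorial (j+1) : ℝ) * Sk (j+2) (x+2))
      = (Nat.factorial (j+1) : ℝ) * Sk (j+2) (x+2) := by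
    linear_combination ((Nat.factorial (j+1) : ℝ) * Sk (j+2) (x+2)) * hsign
  rw [g1, g2, g3]
  have hmul := mul_lt_mul_of_pos_left hkey hfac
  nlinarith [hmul]
end

section
/- The sequence {binom(2n,n)}_{n≥1} of central binomial coefficients is infinitely log-monotonic. -/
namespace Stmt7Aux

/-- Backward difference operator (negated forward difference). -/
noncomputable def Dop (f : ℕ → ℝ) : ℕ → ℝ := fun n => f n - f (n+1)

/-- Discrete complete monotonicity. -/
def CM (f : ℕ → ℝ) : Prop := ∀ m n, 0 ≤ (Dop^[m]) f n

lemma Dop_succ' (f : ℕ → ℝ) (m n : ℕ) :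
    Dop^[m+1] f n = Dop^[m] f n - Dop^[m] f (n+1) := by
  rw [Function.iterate_succ_apply']; rfl

lemma Dop_shift (f : ℕ → ℝ) (m n : ℕ) :
    Dop^[m] (fun k => f (k+1)) n = Dop^[m] f (n+1) := by
  induction m generalizing f n with
  | zero => rfl
  | succ m ih =>
      rw [Function.iterate_succ_apply, Function.iterate_succ_apply]
      have h : Dop (fun k => f (k+1)) = fun k => Dop f (k+1) := rfl
      rw [h, ih]

lemma Dop_add (f g : ℕ → ℝ) (m n : ℕ) :
    Dop^[m] (fun k => f k + g k) n = Dop^[m] f n + Dop^[m] g n := by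
  induction m generalizing f g n with
  | zero => rfl
  | succ m ih =>
      rw [Function.iterate_succ_apply, Function.iterate_succ_apply,
        Function.iterate_succ_apply]
      have h : Dop (fun k => f k + g k) = fun k => Dop f k + Dop g k := by
        funext k; simp only [Dop]; ring
      rw [h, ih]

lemma CM.shift {f : ℕ → ℝ} (hf : CM f) : CM (fun k => f (k+1)) := by
  intro m n; rw [Dop_shift]; exact hf m (n+1)

lemma CM.dop {f : ℕ → ℝ} (hf : CM f) : CM (Dop f) := by
  intro m n; rw [← Function.iterate_succ_apply]; exact hf (m+1) n

lemma Dop_zero_fun (m n : ℕ) : Dop^[m] (fun _ => (0:ℝ)) n = 0 := by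
  induction m generalizing n with
  | zero => rfl
  | succ m ih =>
      rw [Function.iterate_succ_apply]
      have h : Dop (fun _ => (0:ℝ)) = fun _ => (0:ℝ) := by
        funext k; simp [Dop]
      rw [h, ih]

lemma CM_const {c : ℝ} (hc : 0 ≤ c) : CM (fun _ => c) := by
  intro m n
  cases m with
  | zero => exact hc
  | succ m =>
      rw [Function.iterate_succ_apply]
      have h : Dop (fun _ => c) = fun _ => (0:ℝ) := by
        funext k; simp [Dop]
      rw [h, Dop_zero_fun]

lemma cm_mul_aux : ∀ (m : ℕ) (f g : ℕ → ℝ), CM f → CM g →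
    ∀ n, 0 ≤ Dop^[m] (fun k => f k * g k) n := by
  intro m
  induction m with
  | zero => intro f g hf hg n; exact mul_nonneg (hf 0 n) (hg 0 n)
  | succ m ih =>
      intro f g hf hg n
      rw [Function.iterate_succ_apply]
      have hrw : Dop (fun k => f k * g k)
          = fun k => f k * Dop g k + Dop f k * g (k+1) := by
        funext k; simp only [Dop]; ring
      rw [hrw, Dop_add (fun k => f k * Dop g k) (fun k => Dop f k * g (k+1))]
      exact add_nonneg (ih f (Dop g) hf hg.dop n)
        (ih (Dop f) (fun k => g (k+1)) hf.dop hg.shift n)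

lemma CM.mul {f g : ℕ → ℝ} (hf : CM f) (hg : CM g) :
    CM (fun k => f k * g k) := fun m n => cm_mul_aux m f g hf hg n

lemma CM.pow {f : ℕ → ℝ} (hf : CM f) : ∀ k, CM (fun n => f n ^ k) := by
  intro k
  induction k with
  | zero =>
      have h : (fun n => f n ^ 0) = fun _ => (1:ℝ) := by funext n; simp
      rw [h]; exact CM_const zero_le_one
  | succ k ih =>
      have h : (fun n => f n ^ (k+1)) = fun n => f n ^ k * f n := by
        funext n; rw [pow_succ]
      rw [h]; exact ih.mul hf

/-- The auxiliary product `∏_{j<m} (n+j+γ)⁻¹`. -/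
noncomputable def Pfun (γ : ℝ) (m n : ℕ) : ℝ :=
  ∏ j ∈ Finset.range m, ((n:ℝ) + (j:ℝ) + γ)⁻¹

lemma Pfun_pos {γ : ℝ} (hγ : 0 < γ) (m n : ℕ) : 0 < Pfun γ m n := by
  apply Finset.prod_pos
  intro j _
  have : (0:ℝ) < (n:ℝ) + (j:ℝ) + γ := by positivity
  exact inv_pos.mpr this

lemma P_succ_right (γ : ℝ) (m n : ℕ) :
    Pfun γ (m+1) n = Pfun γ m n * ((n:ℝ) + (m:ℝ) + γ)⁻¹ := by
  unfold Pfun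
  rw [Finset.prod_range_succ]

lemma P_succ_left (γ : ℝ) (m n : ℕ) :
    Pfun γ (m+1) n = ((n:ℝ) + γ)⁻¹ * Pfun γ m (n+1) := by
  unfold Pfun
  rw [Finset.prod_range_succ']
  have h0 : ((n:ℝ) + ((0:ℕ):ℝ) + γ)⁻¹ = ((n:ℝ)+γ)⁻¹ := by norm_num
  rw [h0, mul_comm]
  congr 1
  apply Finset.prod_congr rfl
  intro j _
  congr 1
  push_cast
  ring

lemma P_key {γ : ℝ} (hγ : 0 < γ) (m n : ℕ) :
    Pfun γ (m+1) n - Pfun γ (m+1) (n+1) = ((m:ℝ) + 1) * Pfun γ (m+2) n := by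
  have ha : ((n:ℝ) + γ) ≠ 0 := by positivity
  have hb : (((n+1:ℕ)):ℝ) + (m:ℝ) + γ ≠ 0 := by positivity
  rw [P_succ_left γ m n, P_succ_left γ (m+1) n, P_succ_right γ m (n+1)]
  set y := Pfun γ m (n+1) with hy
  field_simp
  push_cast
  ring

lemma Dop_inv {γ : ℝ} (hγ : 0 < γ) :
    ∀ m n, Dop^[m] (fun k => ((k:ℝ) + γ)⁻¹) n
      = (m.factorial : ℝ) * Pfun γ (m+1) n := by
  intro m
  induction m with
  | zero =>
      intro n
      show ((n:ℝ) + γ)⁻¹ = _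
      simp [Pfun, Finset.prod_range_one]
  | succ m ih =>
      intro n
      rw [Dop_succ', ih n, ih (n+1), ← mul_sub, P_key hγ, Nat.factorial_succ]
      push_cast
      ring

lemma CM_inv {γ : ℝ} (hγ : 0 < γ) : CM (fun k => ((k:ℝ) + γ)⁻¹) := by
  intro m n
  rw [Dop_inv hγ]
  exact mul_nonneg (by positivity) (Pfun_pos hγ (m+1) n).le

/-- The sequence `c n = log(2n+2) - log(2n+1)`. -/
noncomputable def cseq (n : ℕ) : ℝ :=
  Real.log (2*(n:ℝ)+2) - Real.log (2*(n:ℝ)+1)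

/-- Terms of the power-series expansion of `cseq`. -/
noncomputable def gfun (k n : ℕ) : ℝ :=
  ((k:ℝ)+1)⁻¹ * ((2:ℝ)⁻¹ * ((n:ℝ)+1)⁻¹)^(k+1)

lemma gfun_CM (k : ℕ) : CM (gfun k) := by
  have h1 : CM (fun n : ℕ => (2:ℝ)⁻¹ * ((n:ℝ)+1)⁻¹) :=
    (CM_const (by norm_num : (0:ℝ) ≤ (2:ℝ)⁻¹)).mul (CM_inv one_pos)
  have h3 := (CM_const (by positivity : (0:ℝ) ≤ ((k:ℝ)+1)⁻¹)).mul
    (h1.pow (k+1))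
  exact h3

lemma hasSum_g (n : ℕ) : HasSum (fun k => gfun k n) (cseq n) := by
  set x : ℝ := (2:ℝ)⁻¹ * ((n:ℝ)+1)⁻¹ with hx
  have hx1 : |x| < 1 := by
    rw [abs_of_pos (by positivity)]
    have h1 : ((n:ℝ)+1)⁻¹ ≤ 1 := by
      rw [inv_le_one_iff₀]; right; linarith [Nat.cast_nonneg (α := ℝ) n]
    calc x ≤ (2:ℝ)⁻¹ * 1 := by
            apply mul_le_mul_of_nonneg_left h1 (by norm_num)
      _ < 1 := by norm_num
  have h := Real.hasSum_pow_div_log_of_abs_lt_one hx1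
  have heq : -Real.log (1 - x) = cseq n := by
    have h1 : (1:ℝ) - x = (2*(n:ℝ)+1) / (2*(n:ℝ)+2) := by
      rw [hx]; field_simp; ring
    rw [h1, Real.log_div (by positivity) (by positivity)]
    unfold cseq; ring
  rw [heq] at h
  have hfun : (fun k : ℕ => x ^ (k + 1) / ((k:ℝ) + 1)) = fun k => gfun k n := by
    funext k
    unfold gfun
    rw [div_eq_inv_mul]
  rw [hfun] at h
  exact h

lemma hasSum_Dop (m n : ℕ) :
    HasSum (fun k => Dop^[m] (gfun k) n) (Dop^[m] cseq n) := by
  induction m generalizing n with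
  | zero => exact hasSum_g n
  | succ m ih =>
      have h3 := (ih n).sub (ih (n+1))
      have h4 : (fun k => Dop^[m+1] (gfun k) n)
          = fun k => Dop^[m] (gfun k) n - Dop^[m] (gfun k) (n+1) := by
        funext k; rw [Dop_succ']
      rw [Dop_succ', h4]
      exact h3

lemma Dop_c_nonneg (m n : ℕ) : 0 ≤ Dop^[m] cseq n :=
  hasSum_le (fun k => gfun_CM k m n) hasSum_zero (hasSum_Dop m n)

/-- Iterated forward differences of `log ∘ centralBinom`. -/
noncomputable def Eseq : ℕ → ℕ → ℝ
  | 0 => fun n => Real.log (Nat.centralBinom n : ℝ)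
  | (m+1) => fun n => Eseq m (n+1) - Eseq m n

lemma E1_eq (n : ℕ) : Eseq 1 n = Real.log 4 - cseq n := by
  have h := Nat.succ_mul_centralBinom_succ n
  have hc1 : (0:ℝ) < (Nat.centralBinom (n+1) : ℝ) := by
    exact_mod_cast Nat.centralBinom_pos (n+1)
  have hc0 : (0:ℝ) < (Nat.centralBinom n : ℝ) := by
    exact_mod_cast Nat.centralBinom_pos n
  have hR : ((n:ℝ)+1) * (Nat.centralBinom (n+1) : ℝ)
      = 2*(2*(n:ℝ)+1) * (Nat.centralBinom n : ℝ) := by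
    exact_mod_cast h
  have hlog := congrArg Real.log hR
  rw [Real.log_mul (by positivity) hc1.ne',
      Real.log_mul (by positivity) hc0.ne',
      Real.log_mul (by norm_num) (by positivity)] at hlog
  show Eseq 0 (n+1) - Eseq 0 n = _
  show Real.log (Nat.centralBinom (n+1) : ℝ) - Real.log (Nat.centralBinom n : ℝ) = _
  unfold cseq
  have h4 : Real.log 4 = Real.log 2 + Real.log 2 := by
    rw [← Real.log_mul (by norm_num) (by norm_num)]; norm_num
  have h22 : Real.log (2*(n:ℝ)+2) = Real.log 2 + Real.log ((n:ℝ)+1) := by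
    rw [← Real.log_mul (by norm_num) (by positivity)]; ring_nf
  linarith [hlog]

lemma E_eq (m n : ℕ) : Eseq (m+2) n = (-1:ℝ)^m * Dop^[m+1] cseq n := by
  induction m generalizing n with
  | zero =>
      show Eseq 1 (n+1) - Eseq 1 n = _
      rw [E1_eq, E1_eq]
      have h1 : Dop^[0+1] cseq n = cseq n - cseq (n+1) := rfl
      rw [h1, pow_zero, one_mul]
      ring
  | succ m ih =>
      show Eseq (m+2) (n+1) - Eseq (m+2) n = _
      rw [ih (n+1), ih n, Dop_succ' cseq (m+1) n]
      ring

lemma Eseq_add2 (m n : ℕ) :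
    Eseq (m+2) n = Eseq m (n+2) - Eseq m (n+1) - (Eseq m (n+1) - Eseq m n) := rfl

lemma E_even (r n : ℕ) : 0 ≤ Eseq (2*r+2) n := by
  rw [E_eq (2*r) n, pow_mul]
  norm_num
  exact Dop_c_nonneg (2*r+1) n

lemma E_odd (r n : ℕ) : Eseq (2*r+1+2) n ≤ 0 := by
  rw [E_eq (2*r+1) n, pow_succ, pow_mul]
  norm_num
  exact Dop_c_nonneg (2*r+1+1) n

lemma ratio_exp (a : ℕ → ℝ) (ha : ∀ n : ℕ, 1 ≤ n → a n = (Nat.centralBinom n : ℝ)) :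
    ∀ k n, 1 ≤ n → (ratioOp^[k]) a n = Real.exp (Eseq k n) := by
  intro k
  induction k with
  | zero =>
      intro n hn
      have hc0 : (0:ℝ) < (Nat.centralBinom n : ℝ) := by
        exact_mod_cast Nat.centralBinom_pos n
      show a n = Real.exp (Real.log (Nat.centralBinom n : ℝ))
      rw [ha n hn, Real.exp_log hc0]
  | succ k ih =>
      intro n hn
      rw [Function.iterate_succ_apply']
      show (ratioOp^[k] a (n+1)) / (ratioOp^[k] a n) = _
      rw [ih (n+1) (by omega), ih n hn, ← Real.exp_sub]
      rfl

end Stmt7Aux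

open Stmt7Aux

theorem stmt_7 (a : ℕ → ℝ) (ha : ∀ n : ℕ, 1 ≤ n → a n = (Nat.centralBinom n : ℝ)) :
    ∀ r : ℕ,
      (∀ n : ℕ, 1 ≤ n →
        ((ratioOp^[2*r]) a (n+1))^2 ≤ (ratioOp^[2*r]) a n * (ratioOp^[2*r]) a (n+2)) ∧
      (∀ n : ℕ, 1 ≤ n →
        ((ratioOp^[2*r+1]) a (n+1))^2 ≥ (ratioOp^[2*r+1]) a n * (ratioOp^[2*r+1]) a (n+2)) := by
  intro r
  constructor
  · intro n hn
    rw [ratio_exp a ha (2*r) (n+1) (by omega), ratio_exp a ha (2*r) n hn,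
        ratio_exp a ha (2*r) (n+2) (by omega),
        sq, ← Real.exp_add, ← Real.exp_add, Real.exp_le_exp]
    have h0 := E_even r n
    rw [Eseq_add2 (2*r) n] at h0
    linarith
  · intro n hn
    rw [ge_iff_le, ratio_exp a ha (2*r+1) (n+1) (by omega), ratio_exp a ha (2*r+1) n hn,
        ratio_exp a ha (2*r+1) (n+2) (by omega),
        sq, ← Real.exp_add, ← Real.exp_add, Real.exp_le_exp]
    have h0 := E_odd r n
    rw [Eseq_add2 (2*r+1) n] at h0
    linarith
end

section
/- Let k be a positive integer and {a_n}_{n≥k} a sequence of positive reals that is ratio log-concave. If a_{k+1}^{1/(k+1)}/a_k^{1/k} > a_{k+2}^{1/(k+2)}/a_{k+1}^{1/(k+1)}, then the sequence {a_n^{1/n}}_{n≥k} is strictly log-concave, i.e., (a_n^{1/n})^2 > a_{n+1}^{1/(n+1)} a_{n-1}^{1/(n-1)} for all n > k. -/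
theorem stmt_8 (k : ℕ) (hk : 1 ≤ k) (a : ℕ → ℝ) (hpos : ∀ n, k ≤ n → 0 < a n)
    (hrlc : ∀ n, k ≤ n →
      (a (n+1) / a n) * (a (n+3) / a (n+2)) ≤ (a (n+2) / a (n+1))^2)
    (hinit : a (k+2) ^ (1/((k:ℝ)+2)) / a (k+1) ^ (1/((k:ℝ)+1))
      < a (k+1) ^ (1/((k:ℝ)+1)) / a k ^ (1/(k:ℝ))) :
    ∀ n, k < n →
      a (n+1) ^ (1/((n:ℝ)+1)) * a (n-1) ^ (1/((n:ℝ)-1)) < (a n ^ (1/(n:ℝ)))^2 := by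
  have hk0 : (0:ℝ) < (k:ℝ) := by exact_mod_cast hk
  set L : ℕ → ℝ := fun n => Real.log (a n) with hLdef
  -- concavity of differences (third difference nonpositive)
  have hconc : ∀ m, k ≤ m → 0 ≤ L m - 3*L (m+1) + 3*L (m+2) - L (m+3) := by
    intro m hm
    have p0 := hpos m hm
    have p1 := hpos (m+1) (by omega)
    have p2 := hpos (m+2) (by omega)
    have p3 := hpos (m+3) (by omega)
    have h := hrlc m hm
    have hlog := Real.log_le_log (by positivity) h
    rw [Real.log_mul (by positivity) (by positivity),
        Real.log_div p1.ne' p0.ne', Real.log_div p3.ne' p2.ne',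
        Real.log_pow, Real.log_div p2.ne' p1.ne'] at hlog
    simp only [hLdef]
    push_cast at hlog
    linarith
  set G : ℕ → ℝ := fun m => 2*(m:ℝ)*((m:ℝ)+2)*L (m+1)
      - ((m:ℝ)+1)*((m:ℝ)+2)*L m - (m:ℝ)*((m:ℝ)+1)*L (m+2) with hGdef
  have hmono : ∀ m, k ≤ m → G m ≤ G (m+1) := by
    intro m hm
    have hc := hconc m hm
    have hid : G (m+1) - G m
        = ((m:ℝ)+1)*((m:ℝ)+2) * (L m - 3*L (m+1) + 3*L (m+2) - L (m+3)) := by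
      simp only [hGdef]
      push_cast
      ring
    nlinarith [mul_nonneg (by positivity : (0:ℝ) ≤ ((m:ℝ)+1)*((m:ℝ)+2)) hc]
  have hGk_le : ∀ m, k ≤ m → G k ≤ G m := by
    intro m hm
    induction m with
    | zero => omega
    | succ p ih =>
      rcases Nat.lt_or_ge k (p+1) with h | h
      · have hkp : k ≤ p := by omega
        exact le_trans (ih hkp) (hmono p hkp)
      · have : k = p + 1 := by omega
        rw [this]
  -- initial positivity of G k
  have pk := hpos k le_rfl
  have pk1 := hpos (k+1) (by omega)
  have pk2 := hpos (k+2) (by omega)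
  have e0 : a k ^ (1/(k:ℝ)) = Real.exp (L k * (1/(k:ℝ))) :=
    Real.rpow_def_of_pos pk _
  have e1 : a (k+1) ^ (1/((k:ℝ)+1)) = Real.exp (L (k+1) * (1/((k:ℝ)+1))) :=
    Real.rpow_def_of_pos pk1 _
  have e2 : a (k+2) ^ (1/((k:ℝ)+2)) = Real.exp (L (k+2) * (1/((k:ℝ)+2))) :=
    Real.rpow_def_of_pos pk2 _
  rw [e0, e1, e2, ← Real.exp_sub, ← Real.exp_sub] at hinit
  have hin := Real.exp_lt_exp.mp hinit
  have hGkpos : 0 < G k := by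
    have hKpos : (0:ℝ) < (k:ℝ)*((k:ℝ)+1)*((k:ℝ)+2) := by positivity
    have hid : G k = ((k:ℝ)*((k:ℝ)+1)*((k:ℝ)+2)) *
        (2*(L (k+1) * (1/((k:ℝ)+1))) - L (k+2) * (1/((k:ℝ)+2)) - L k * (1/(k:ℝ))) := by
      simp only [hGdef]
      field_simp
      ring
    rw [hid]
    apply mul_pos hKpos
    linarith
  -- main conclusion
  intro n hn
  obtain ⟨m, rfl⟩ : ∃ m, n = m + 1 := ⟨n-1, by omega⟩
  have hkm : k ≤ m := by omega
  have hm0 : (0:ℝ) < (m:ℝ) := by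
    have : 1 ≤ m := by omega
    exact_mod_cast this
  have hGm : 0 < G m := lt_of_lt_of_le hGkpos (hGk_le m hkm)
  have hKpos : (0:ℝ) < (m:ℝ)*((m:ℝ)+1)*((m:ℝ)+2) := by positivity
  have hid : G m = ((m:ℝ)*((m:ℝ)+1)*((m:ℝ)+2)) *
      (2*(L (m+1) * (1/((m:ℝ)+1))) - L (m+2) * (1/((m:ℝ)+2)) - L m * (1/(m:ℝ))) := by
    simp only [hGdef]
    field_simp
    ring
  rw [hid] at hGm
  have hdiff : 0 < 2*(L (m+1) * (1/((m:ℝ)+1))) - L (m+2) * (1/((m:ℝ)+2)) - L m * (1/(m:ℝ)) := by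
    by_contra hle
    push_neg at hle
    nlinarith
  have pm := hpos m hkm
  have pm1 := hpos (m+1) (by omega)
  have pm2 := hpos (m+2) (by omega)
  have hsub : m + 1 - 1 = m := rfl
  rw [hsub]
  have c1 : ((m+1 : ℕ):ℝ) = (m:ℝ)+1 := by push_cast; ring
  rw [c1]
  have hfix1 : (m:ℝ) + 1 + 1 = (m:ℝ) + 2 := by ring
  have hfix2 : (m:ℝ) + 1 - 1 = (m:ℝ) := by ring
  rw [hfix1, hfix2]
  have f0 : a m ^ (1/(m:ℝ)) = Real.exp (L m * (1/(m:ℝ))) :=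
    Real.rpow_def_of_pos pm _
  have f1 : a (m+1) ^ (1/((m:ℝ)+1)) = Real.exp (L (m+1) * (1/((m:ℝ)+1))) :=
    Real.rpow_def_of_pos pm1 _
  have f2 : a (m+1+1) ^ (1/((m:ℝ)+2)) = Real.exp (L (m+2) * (1/((m:ℝ)+2))) :=
    Real.rpow_def_of_pos pm2 _
  rw [f0, f1, f2, ← Real.exp_add, sq, ← Real.exp_add]
  exact Real.exp_lt_exp.mpr (by linarith)
end

section
/- Let k be a positive integer and {a_n}_{n≥k} a ratio log-concave sequence of positive reals satisfying a_{k+1}^{1/(k+1)}/a_k^{1/k} > a_{k+2}^{1/(k+2)}/a_{k+1}^{1/(k+1)}. Then for all n > k, k·log(a_{k+1}/a_k) > ((k^2+k)/2)(log(a_{n+1}/a_n) - log(a_n/a_{n-1})) + log a_k. -/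
theorem stmt_10 (k : ℕ) (hk : 1 ≤ k) (a : ℕ → ℝ) (hpos : ∀ n, k ≤ n → 0 < a n)
    (hrlc : ∀ n, k ≤ n →
      (a (n+1) / a n) * (a (n+3) / a (n+2)) ≤ (a (n+2) / a (n+1))^2)
    (hinit : a (k+2) ^ (1/((k:ℝ)+2)) / a (k+1) ^ (1/((k:ℝ)+1))
      < a (k+1) ^ (1/((k:ℝ)+1)) / a k ^ (1/(k:ℝ))) :
    ∀ n, k < n →
      (k:ℝ) * Real.log (a (k+1) / a k)
        > (((k:ℝ)^2 + k) / 2) * (Real.log (a (n+1) / a n) - Real.log (a n / a (n-1)))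
          + Real.log (a k) := by
  have hk0 : (0:ℝ) < k := by exact_mod_cast hk
  set d : ℕ → ℝ := fun n => Real.log (a (n+2) / a (n+1)) - Real.log (a (n+1) / a n) with hd
  -- monotonicity of d
  have hstep : ∀ m, k ≤ m → d (m+1) ≤ d m := by
    intro m hm
    have p0 := hpos m hm
    have p1 := hpos (m+1) (by omega)
    have p2 := hpos (m+2) (by omega)
    have p3 := hpos (m+3) (by omega)
    have hlhs : 0 < (a (m+1) / a m) * (a (m+3) / a (m+2)) := by positivity
    have hlog := Real.log_le_log hlhs (hrlc m hm)
    rw [Real.log_mul (by positivity) (by positivity), Real.log_pow] at hlog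
    simp only [hd]
    push_cast at hlog
    have e1 : m + 1 + 2 = m + 3 := by ring
    have e2 : m + 1 + 1 = m + 2 := by ring
    rw [e1, e2]
    linarith
  have hdmono : ∀ n, k ≤ n → d n ≤ d k := by
    intro n hn
    induction n with
    | zero => omega
    | succ m ih =>
      rcases Nat.lt_or_ge k (m+1) with h | h
      · have hm : k ≤ m := Nat.lt_succ_iff.mp h
        exact le_trans (hstep m hm) (ih hm)
      · have : m + 1 = k := le_antisymm h hn
        rw [this]
  -- base inequality from hinit
  have pA := hpos k le_rfl
  have pB := hpos (k+1) (by omega)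
  have pC := hpos (k+2) (by omega)
  set A := Real.log (a k) with hA
  set B := Real.log (a (k+1)) with hB
  set C := Real.log (a (k+2)) with hC
  have hltpos : 0 < a (k+2) ^ (1/((k:ℝ)+2)) / a (k+1) ^ (1/((k:ℝ)+1)) := by positivity
  have hlog := Real.log_lt_log hltpos hinit
  rw [Real.log_div (by positivity) (by positivity),
      Real.log_div (by positivity) (by positivity),
      Real.log_rpow pC, Real.log_rpow pB, Real.log_rpow pA] at hlog
  -- hlog : 1/(k+2) * C - 1/(k+1) * B < 1/(k+1) * B - 1/k * A
  have key : (k:ℝ)*((k:ℝ)+1)*C + ((k:ℝ)+1)*((k:ℝ)+2)*A < 2*(k:ℝ)*((k:ℝ)+2)*B := by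
    have hkne : (k:ℝ) ≠ 0 := ne_of_gt hk0
    have h1 : ((k:ℝ)+1) ≠ 0 := by positivity
    have h2 : ((k:ℝ)+2) ≠ 0 := by positivity
    rw [← hA, ← hB, ← hC] at hlog
    rw [one_div_mul_eq_div, one_div_mul_eq_div, one_div_mul_eq_div,
        div_sub_div _ _ h2 h1, div_sub_div _ _ h1 hkne,
        div_lt_div_iff₀ (by positivity) (by positivity)] at hlog
    nlinarith [hlog]
  have hbase : (((k:ℝ)^2 + (k:ℝ)) / 2) * d k < (k:ℝ)*(B - A) - A := by
    simp only [hd]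
    rw [Real.log_div (ne_of_gt pC) (ne_of_gt pB), Real.log_div (ne_of_gt pB) (ne_of_gt pA),
        ← hA, ← hB, ← hC]
    nlinarith [key]
  intro n hn
  obtain ⟨m, rfl⟩ : ∃ m, n = m + 1 := ⟨n - 1, by omega⟩
  have hm : k ≤ m := by omega
  have hdm : d m ≤ d k := hdmono m hm
  have hnn : (0:ℝ) ≤ ((k:ℝ)^2 + (k:ℝ)) / 2 := by positivity
  have hmul := mul_le_mul_of_nonneg_left hdm hnn
  have e1 : m + 1 - 1 = m := by omega
  have e2 : m + 1 + 1 = m + 2 := by ring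
  rw [e1, e2]
  have hgoal : (((k:ℝ)^2 + (k:ℝ)) / 2) * (Real.log (a (m+2) / a (m+1)) - Real.log (a (m+1) / a m))
      = (((k:ℝ)^2 + (k:ℝ)) / 2) * d m := by simp [hd]
  have hBA : Real.log (a (k+1) / a k) = B - A := by
    rw [Real.log_div (ne_of_gt pB) (ne_of_gt pA)]
  rw [hBA, hgoal]
  linarith
end

section
/- Let k be a positive integer and {a_n}_{n≥k} a sequence of positive reals that is ratio log-convex (i.e., {a_{n+1}/a_n} is log-convex). If a_{k+1}^{1/(k+1)}/a_k^{1/k} < a_{k+2}^{1/(k+2)}/a_{k+1}^{1/(k+1)}, then the sequence {a_n^{1/n}}_{n≥k} is strictly log-convex. -/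
theorem stmt_11 (k : ℕ) (hk : 1 ≤ k) (a : ℕ → ℝ) (hpos : ∀ n, k ≤ n → 0 < a n)
    (hrlv : ∀ n, k ≤ n →
      (a (n+2) / a (n+1))^2 ≤ (a (n+1) / a n) * (a (n+3) / a (n+2)))
    (hinit : a (k+1) ^ (1/((k:ℝ)+1)) / a k ^ (1/(k:ℝ))
      < a (k+2) ^ (1/((k:ℝ)+2)) / a (k+1) ^ (1/((k:ℝ)+1))) :
    ∀ n, k < n →
      (a n ^ (1/(n:ℝ)))^2 < a (n+1) ^ (1/((n:ℝ)+1)) * a (n-1) ^ (1/((n:ℝ)-1)) := by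
  set L : ℕ → ℝ := fun n => Real.log (a n) with hLdef
  have hβ : ∀ n, k ≤ n →
      2 * (L (n+2) - L (n+1)) ≤ (L (n+1) - L n) + (L (n+3) - L (n+2)) := by
    intro n hn
    have h0 := hpos n hn
    have h1 := hpos (n+1) (by omega)
    have h2 := hpos (n+2) (by omega)
    have h3 := hpos (n+3) (by omega)
    have h := hrlv n hn
    have hlog := Real.log_le_log (by positivity) h
    rw [Real.log_pow, Real.log_mul (by positivity) (by positivity),
        Real.log_div h2.ne' h1.ne', Real.log_div h1.ne' h0.ne',
        Real.log_div h3.ne' h2.ne'] at hlog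
    push_cast at hlog
    simp only [hLdef]
    linarith
  set D : ℕ → ℝ := fun n => 2 * L (n+1) + (n:ℝ)*((n:ℝ)+1)*(L (n+2) - L (n+1))
      - ((n:ℝ)+1)*((n:ℝ)+2)*(L (n+1) - L n) with hDdef
  have hDmono : ∀ n, k ≤ n → D n ≤ D (n+1) := by
    intro n hn
    have h := hβ n hn
    have hgap : 0 ≤ (L (n+1) - L n) + (L (n+3) - L (n+2)) - 2*(L (n+2) - L (n+1)) := by
      linarith
    have hc : (0:ℝ) ≤ ((n:ℝ)+1)*((n:ℝ)+2) := by positivity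
    have hprod := mul_nonneg hc hgap
    have heq : D (n+1) - D n = ((n:ℝ)+1)*((n:ℝ)+2) *
        ((L (n+1) - L n) + (L (n+3) - L (n+2)) - 2*(L (n+2) - L (n+1))) := by
      simp only [hDdef]
      push_cast
      ring
    linarith
  have hDge : ∀ n, k ≤ n → D k ≤ D n := by
    intro n hn
    induction n, hn using Nat.le_induction with
    | base => exact le_refl _
    | succ n hn ih => exact ih.trans (hDmono n hn)
  have hkR : (1:ℝ) ≤ (k:ℝ) := by exact_mod_cast hk
  have hDk : 0 < D k := by
    have h0 := hpos k le_rfl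
    have h1 := hpos (k+1) (by omega)
    have h2 := hpos (k+2) (by omega)
    have hlog := Real.log_lt_log (by positivity) hinit
    rw [Real.log_div (by positivity) (by positivity),
        Real.log_div (by positivity) (by positivity),
        Real.log_rpow h0, Real.log_rpow h1, Real.log_rpow h2] at hlog
    push_cast at hlog
    have heq : D k = ((1/((k:ℝ)+2))*L (k+2) - 2*(1/((k:ℝ)+1))*L (k+1) + (1/(k:ℝ))*L k)
        * ((k:ℝ)*((k:ℝ)+1)*((k:ℝ)+2)) := by
      simp only [hDdef]
      field_simp
      ring
    rw [heq]
    apply mul_pos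
    · simp only [hLdef]
      linarith
    · positivity
  intro n hn
  obtain ⟨m, rfl⟩ : ∃ m, n = m + 1 := ⟨n-1, by omega⟩
  have hm : k ≤ m := by omega
  have hm1 : (1:ℝ) ≤ (m:ℝ) := by exact_mod_cast (hk.trans hm)
  have h0 := hpos m hm
  have h1 := hpos (m+1) (by omega)
  have h2 := hpos (m+2) (by omega)
  have hDm : 0 < D m := lt_of_lt_of_le hDk (hDge m hm)
  have hc : (0:ℝ) < (m:ℝ)*((m:ℝ)+1)*((m:ℝ)+2) := by positivity
  have heq : D m = ((1/((m:ℝ)+2))*L (m+2) + (1/(m:ℝ))*L m - 2*(1/((m:ℝ)+1))*L (m+1))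
      * ((m:ℝ)*((m:ℝ)+1)*((m:ℝ)+2)) := by
    simp only [hDdef]
    field_simp
    ring
  have hx : 0 < (1/((m:ℝ)+2))*L (m+2) + (1/(m:ℝ))*L m - 2*(1/((m:ℝ)+1))*L (m+1) := by
    rw [heq] at hDm
    by_contra hcon
    push_neg at hcon
    nlinarith [mul_nonneg (neg_nonneg.mpr hcon) hc.le]
  -- simplify index and cast expressions in the goal
  have hidx : m + 1 - 1 = m := rfl
  rw [hidx]
  have hcast : ((m+1:ℕ):ℝ) = (m:ℝ) + 1 := by push_cast; ring
  rw [hcast]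
  have hsub : (m:ℝ) + 1 - 1 = (m:ℝ) := by ring
  rw [hsub]
  apply (Real.log_lt_log_iff (by positivity) (by positivity)).mp
  rw [Real.log_pow, Real.log_mul (by positivity) (by positivity),
      Real.log_rpow h1, Real.log_rpow h2, Real.log_rpow h0]
  push_cast
  simp only [hLdef] at hx
  ring_nf at hx ⊢
  linarith
end

section
/- For every positive integer m, the sequence {H_{n,m}}_{n≥1} of generalized harmonic numbers is ratio log-convex; equivalently, the quantity H_{n+2,m} H_{n,m} / H_{n+1,m}^2 is strictly increasing in n ≥ 1. -/
theorem stmt_14 (m : ℕ) (hm : 1 ≤ m) (H : ℕ → ℝ)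
    (hH : ∀ n : ℕ, H n = ∑ k ∈ Finset.Icc 1 n, (1:ℝ) / (k:ℝ)^m) :
    ∀ n : ℕ, 1 ≤ n →
      H (n+2) * H n / (H (n+1))^2 < H (n+3) * H (n+1) / (H (n+2))^2 := by
  have hstep : ∀ k : ℕ, H (k+1) = H k + 1 / ((k:ℝ)+1)^m := by
    intro k
    rw [hH, hH, Finset.sum_Icc_succ_top (by omega)]
    push_cast
    ring
  intro n hn
  have hm0 : m ≠ 0 := by omega
  have hpos : 0 < H n := by
    rw [hH]
    apply Finset.sum_pos
    · intro i hi
      have hi1 : 1 ≤ i := (Finset.mem_Icc.mp hi).1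
      have : (0:ℝ) < (i:ℝ) := by exact_mod_cast hi1
      positivity
    · exact ⟨1, Finset.mem_Icc.mpr ⟨le_refl 1, hn⟩⟩
  set a := H n with ha
  set x : ℝ := 1 / ((n:ℝ)+1)^m with hxdef
  set y : ℝ := 1 / ((n:ℝ)+2)^m with hydef
  set z : ℝ := 1 / ((n:ℝ)+3)^m with hzdef
  have hn1 : (0:ℝ) < (n:ℝ)+1 := by positivity
  have hn2 : (0:ℝ) < (n:ℝ)+2 := by positivity
  have hn3 : (0:ℝ) < (n:ℝ)+3 := by positivity
  have hx : 0 < x := by positivity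
  have hy : 0 < y := by positivity
  have hz : 0 < z := by positivity
  have hxy : y < x := by
    apply one_div_lt_one_div_of_lt (by positivity)
    exact pow_lt_pow_left₀ (by linarith) (by positivity) hm0
  have hyz : z < y := by
    apply one_div_lt_one_div_of_lt (by positivity)
    exact pow_lt_pow_left₀ (by linarith) (by positivity) hm0
  have hxz : y * y < x * z := by
    rw [hxdef, hydef, hzdef, div_mul_div_comm, div_mul_div_comm, one_mul]
    apply one_div_lt_one_div_of_lt (by positivity)
    rw [← mul_pow, ← mul_pow]
    exact pow_lt_pow_left₀ (by nlinarith) (by positivity) hm0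
  have h2y : 2 * y < x + z := by
    nlinarith [mul_pos (sub_pos.mpr hxy) (sub_pos.mpr hyz)]
  have e1 : H (n+1) = a + x := by
    exact hstep n
  have e2 : H (n+2) = a + x + y := by
    have := hstep (n+1); rw [show n+2 = (n+1)+1 from rfl, this, e1]; push_cast; ring
  have e3 : H (n+3) = a + x + y + z := by
    have := hstep (n+2); rw [show n+3 = (n+2)+1 from rfl, this, e2]; push_cast; ring
  rw [e1, e2, e3]
  rw [div_lt_div_iff₀ (by positivity) (by positivity)]
  nlinarith [mul_pos (pow_pos (by linarith : (0:ℝ) < a + x) 3) (by linarith : (0:ℝ) < x + z - 2*y),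
    mul_pos (mul_pos (pow_pos (by linarith : (0:ℝ) < a + x) 2) hy) (sub_pos.mpr hxy),
    mul_pos (mul_pos (by linarith : (0:ℝ) < a + x) (pow_pos hy 2)) (by linarith : (0:ℝ) < 3*x - y),
    mul_pos hx (pow_pos hy 3)]
end

section
/- Let {a_n}_{n≥0} be a sequence of positive reals satisfying a_n = u(n) a_{n-1} + v(n) a_{n-2} for n ≥ 2, where u(n) > 0 and v(n) > 0 and u(n)^3 > u(n+1) v(n) for n ≥ 2. If there is an integer N ≥ 0 and a function g such that for all n ≥ N+2: (i) a_n/a_{n-1} ≥ g(n) ≥ u(n), and (ii) g(n)^4 - u(n) g(n)^3 - u(n+1) v(n) g(n) - v(n) v(n+1) > 0, then the sequence {a_n}_{n≥N} is ratio log-concave. -/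
theorem stmt_15 (u v : ℕ → ℝ) (a : ℕ → ℝ) (hpos : ∀ n, 0 < a n)
    (hrec : ∀ n : ℕ, 2 ≤ n → a n = u n * a (n-1) + v n * a (n-2))
    (hu : ∀ n : ℕ, 2 ≤ n → 0 < u n) (hv : ∀ n : ℕ, 2 ≤ n → 0 < v n)
    (hu3 : ∀ n : ℕ, 2 ≤ n → u (n+1) * v n < (u n)^3)
    (N : ℕ) (g : ℕ → ℝ)
    (hg1 : ∀ n : ℕ, N + 2 ≤ n → u n ≤ g n ∧ g n ≤ a n / a (n-1))
    (hg2 : ∀ n : ℕ, N + 2 ≤ n →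
      0 < (g n)^4 - u n * (g n)^3 - u (n+1) * v n * g n - v n * v (n+1)) :
    ∀ n : ℕ, N + 2 ≤ n → a (n+1) * (a (n-1))^3 ≤ (a n)^3 * a (n-2) := by
  intro n hn
  have hn2 : 2 ≤ n := by omega
  have hun : 0 < u n := hu n hn2
  have hvn : 0 < v n := hv n hn2
  have hUn : 0 < u (n+1) := hu (n+1) (by omega)
  have hVn : 0 < v (n+1) := hv (n+1) (by omega)
  have hrecn := hrec n hn2
  have hrecn1 := hrec (n+1) (by omega)
  have e1 : n + 1 - 1 = n := rfl
  have e2 : n + 1 - 2 = n - 1 := by omega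
  rw [e1, e2] at hrecn1
  obtain ⟨hg1a, hg1b⟩ := hg1 n hn
  have hg2n := hg2 n hn
  have hy : 0 < a (n-1) := hpos _
  have hx : 0 < a n := hpos _
  have hxy : g n * a (n-1) ≤ a n := (le_div_iff₀ hy).mp hg1b
  have hu3n := hu3 n hn2
  have hkey : v n * a (n-2) = a n - u n * a (n-1) := by linarith
  have hG0 : 0 < g n := lt_of_lt_of_le hun hg1a
  have hG3 : u (n+1) * v n < (g n)^3 :=
    lt_of_lt_of_le hu3n (pow_le_pow_left₀ hun.le hg1a 3)
  have h1 : 0 ≤ a n - g n * a (n-1) := by linarith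
  have h2 : 0 ≤ a n - u n * a (n-1) := by nlinarith
  have hmain : v n * (a (n+1) * (a (n-1))^3) ≤ v n * ((a n)^3 * a (n-2)) := by
    have hrhs : v n * ((a n)^3 * a (n-2)) = (a n)^3 * (a n - u n * a (n-1)) := by
      rw [← hkey]; ring
    rw [hrhs, hrecn1]
    nlinarith [mul_nonneg (mul_nonneg h1 h2) (sq_nonneg (a n)),
      mul_nonneg (mul_nonneg (mul_nonneg (mul_nonneg h1 h2) hG0.le) hy.le) hx.le,
      mul_nonneg (mul_nonneg (mul_nonneg h1 h2) (sq_nonneg (g n))) (sq_nonneg (a (n-1))),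
      mul_nonneg h1 (mul_nonneg (le_of_lt (sub_pos.mpr hG3)) (pow_pos hy 3).le),
      mul_pos hg2n (pow_pos hy 4)]
  exact le_of_mul_le_mul_left hmain hvn
end

section
/- The sequence {M_n}_{n≥4} of Motzkin numbers is ratio log-concave; that is, for all n ≥ 6, M_n^3 M_{n-2} > M_{n+1} M_{n-1}^3. Consequently the sequence {M_n^{1/n}}_{n≥1} is strictly log-concave. -/
set_option maxHeartbeats 4000000


lemma g1 (x : ℝ) (hx : 0 ≤ x) :
    (x+21) * (96*(x+19)^4 - 144*(x+19)^3 + 270*(x+19)^2 - 540*(x+19) + 800)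
      * (96*(x+18)^4 - 144*(x+18)^3 + 270*(x+18)^2 - 540*(x+18) + 1400)
    ≤ (2*x+39) * (32*(x+19)^4) * (96*(x+18)^4 - 144*(x+18)^3 + 270*(x+18)^2 - 540*(x+18) + 1400)
      + (3*x+54) * (32*(x+18)^4) * (32*(x+19)^4) := by
  nlinarith [pow_nonneg hx 2, pow_nonneg hx 3, pow_nonneg hx 4, pow_nonneg hx 5, hx]

lemma g2 (x : ℝ) (hx : 0 ≤ x) :
    (2*x+39) * (32*(x+19)^4) * (96*(x+18)^4 - 144*(x+18)^3 + 270*(x+18)^2 - 540*(x+18) + 800)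
      + (3*x+54) * (32*(x+18)^4) * (32*(x+19)^4)
    ≤ (x+21) * (96*(x+19)^4 - 144*(x+19)^3 + 270*(x+19)^2 - 540*(x+19) + 1400)
      * (96*(x+18)^4 - 144*(x+18)^3 + 270*(x+18)^2 - 540*(x+18) + 800) := by
  nlinarith [pow_nonneg hx 2, pow_nonneg hx 3, pow_nonneg hx 4, pow_nonneg hx 5, hx]

lemma g3 (x : ℝ) (hx : 0 ≤ x) :
    (96*(x+20)^4 - 144*(x+20)^3 + 270*(x+20)^2 - 540*(x+20) + 1400)
      * (96*(x+18)^4 - 144*(x+18)^3 + 270*(x+18)^2 - 540*(x+18) + 1400)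
      * (32*(x+19)^4)^2
    < (32*(x+20)^4) * (96*(x+19)^4 - 144*(x+19)^3 + 270*(x+19)^2 - 540*(x+19) + 800)^2
      * (32*(x+18)^4) := by
  nlinarith [pow_nonneg hx 2, pow_nonneg hx 3, pow_nonneg hx 4, pow_nonneg hx 5,
    pow_nonneg hx 6, pow_nonneg hx 7, pow_nonneg hx 8, pow_nonneg hx 9,
    pow_nonneg hx 10, pow_nonneg hx 11, pow_nonneg hx 12, pow_nonneg hx 13, hx]

lemma g4 (x : ℝ) (hx : 0 ≤ x) :
    (96*(x+18)^4 - 144*(x+18)^3 + 270*(x+18)^2 - 540*(x+18) + 1400) * (32*(x+19)^4)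
    ≤ (32*(x+18)^4) * (96*(x+19)^4 - 144*(x+19)^3 + 270*(x+19)^2 - 540*(x+19) + 800) := by
  nlinarith [pow_nonneg hx 2, pow_nonneg hx 3, pow_nonneg hx 4, pow_nonneg hx 5,
    pow_nonneg hx 6, hx]

lemma g6 (x : ℝ) (hx : 0 ≤ x) :
    (96*(x+19)^4 - 144*(x+19)^3 + 270*(x+19)^2 - 540*(x+19) + 800) * (32*(x+20)^4)
    ≤ (96*(x+20)^4 - 144*(x+20)^3 + 270*(x+20)^2 - 540*(x+20) + 1400) * (32*(x+19)^4) := by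
  nlinarith [pow_nonneg hx 2, pow_nonneg hx 3, pow_nonneg hx 4, pow_nonneg hx 5,
    pow_nonneg hx 6, hx]

lemma g7 (x : ℝ) (hx : 0 ≤ x) :
    (96*(x+20)^4 - 144*(x+20)^3 + 270*(x+20)^2 - 540*(x+20) + 1400) * (32*(x+19)^4)
    ≤ 2 * ((96*(x+19)^4 - 144*(x+19)^3 + 270*(x+19)^2 - 540*(x+19) + 800) * (32*(x+20)^4)) := by
  nlinarith [pow_nonneg hx 2, pow_nonneg hx 3, pow_nonneg hx 4, pow_nonneg hx 5,
    pow_nonneg hx 6, pow_nonneg hx 7, pow_nonneg hx 8, hx]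

lemma g5a (x : ℝ) (hx : 0 ≤ x) :
    0 < 2 * ((96*(x+19)^4 - 144*(x+19)^3 + 270*(x+19)^2 - 540*(x+19) + 800) * (32*(x+20)^4))
      - (x+18)*(x+19) * ((96*(x+20)^4 - 144*(x+20)^3 + 270*(x+20)^2 - 540*(x+20) + 1400) * (32*(x+19)^4)
        - (96*(x+19)^4 - 144*(x+19)^3 + 270*(x+19)^2 - 540*(x+19) + 800) * (32*(x+20)^4)) := by
  nlinarith [pow_nonneg hx 2, pow_nonneg hx 3, pow_nonneg hx 4, pow_nonneg hx 5,
    pow_nonneg hx 6, pow_nonneg hx 7, pow_nonneg hx 8, hx]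

lemma g5 (x : ℝ) (hx : 0 ≤ x) :
    4 * (32*(x+19)^4)^3 * (2 * ((96*(x+19)^4 - 144*(x+19)^3 + 270*(x+19)^2 - 540*(x+19) + 800) * (32*(x+20)^4)))
    < (96*(x+19)^4 - 144*(x+19)^3 + 270*(x+19)^2 - 540*(x+19) + 800)^3
      * (2 * ((96*(x+19)^4 - 144*(x+19)^3 + 270*(x+19)^2 - 540*(x+19) + 800) * (32*(x+20)^4))
        - (x+18)*(x+19) * ((96*(x+20)^4 - 144*(x+20)^3 + 270*(x+20)^2 - 540*(x+20) + 1400) * (32*(x+19)^4)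
          - (96*(x+19)^4 - 144*(x+19)^3 + 270*(x+19)^2 - 540*(x+19) + 800) * (32*(x+20)^4))) := by
  nlinarith [pow_nonneg hx 2, pow_nonneg hx 3, pow_nonneg hx 4, pow_nonneg hx 5,
    pow_nonneg hx 6, pow_nonneg hx 7, pow_nonneg hx 8, pow_nonneg hx 9,
    pow_nonneg hx 10, pow_nonneg hx 11, pow_nonneg hx 12, pow_nonneg hx 13,
    pow_nonneg hx 14, pow_nonneg hx 15, pow_nonneg hx 16, pow_nonneg hx 17,
    pow_nonneg hx 18, pow_nonneg hx 19, pow_nonneg hx 20, hx]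

lemma nap (y : ℝ) (hy : 2 ≤ y) : 0 < 96*y^4 - 144*y^3 + 270*y^2 - 540*y + 800 := by
  nlinarith [mul_nonneg (mul_nonneg (mul_nonneg (by linarith : (0:ℝ) ≤ y) (by linarith : (0:ℝ) ≤ y)) (by linarith : (0:ℝ) ≤ y)) (by linarith : (0:ℝ) ≤ 2*y-3), sq_nonneg (y-1), sq_nonneg y]

lemma red (n : ℕ) (hn : 2 ≤ n) (a b c : ℝ) (ha : 0 < a) (hb : 0 < b) (hc : 0 < c)
    (h : a ^ (n*(n-1)) * b ^ (n*(n+1)) < c ^ (2*(n*n-1))) :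
    a ^ (1/((n:ℝ)+1)) * b ^ (1/((n:ℝ)-1)) < (c ^ (1/(n:ℝ)))^2 := by
  have hn2 : (2:ℝ) ≤ (n:ℝ) := by exact_mod_cast hn
  have hn1 : (0:ℝ) < (n:ℝ) - 1 := by linarith
  have hn0 : (0:ℝ) < (n:ℝ) := by linarith
  have hlog := Real.log_lt_log (by positivity) h
  rw [Real.log_mul (by positivity) (by positivity), Real.log_pow, Real.log_pow,
    Real.log_pow] at hlog
  have c1 : ((n*(n-1) : ℕ) : ℝ) = (n:ℝ)*((n:ℝ)-1) := by
    push_cast [Nat.cast_sub (by omega : 1 ≤ n)]; ring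
  have c2 : ((n*(n+1) : ℕ) : ℝ) = (n:ℝ)*((n:ℝ)+1) := by push_cast; ring
  have c3 : ((2*(n*n-1) : ℕ) : ℝ) = 2*((n:ℝ)*(n:ℝ)-1) := by
    push_cast [Nat.cast_sub (by nlinarith : 1 ≤ n*n)]; ring
  rw [c1, c2, c3] at hlog
  rw [show (c ^ (1/(n:ℝ)))^2 = c ^ (1/(n:ℝ)) * c ^ (1/(n:ℝ)) from sq _,
    Real.rpow_def_of_pos ha, Real.rpow_def_of_pos hb, Real.rpow_def_of_pos hc,
    ← Real.exp_add, ← Real.exp_add]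
  apply Real.exp_lt_exp.mpr
  have hpos : (0:ℝ) < (n:ℝ)*((n:ℝ)-1)*((n:ℝ)+1) := by positivity
  have heq : 1/((n:ℝ)+1) * Real.log a + 1/((n:ℝ)-1) * Real.log b
      - (1/(n:ℝ) * Real.log c + 1/(n:ℝ) * Real.log c)
      = ((n:ℝ)*((n:ℝ)-1) * Real.log a + (n:ℝ)*((n:ℝ)+1) * Real.log b
          - 2*((n:ℝ)*(n:ℝ)-1) * Real.log c) / ((n:ℝ)*((n:ℝ)-1)*((n:ℝ)+1)) := by
    field_simp
    ring
  have hneg : ((n:ℝ)*((n:ℝ)-1) * Real.log a + (n:ℝ)*((n:ℝ)+1) * Real.log b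
      - 2*((n:ℝ)*(n:ℝ)-1) * Real.log c) / ((n:ℝ)*((n:ℝ)-1)*((n:ℝ)+1)) < 0 :=
    div_neg_of_neg_of_pos (by linarith) hpos
  linarith [heq ▸ hneg]

theorem stmt_17 (M : ℕ → ℝ) (hM0 : M 0 = 1) (hM1 : M 1 = 1)
    (hrec : ∀ n : ℕ, 2 ≤ n →
      ((n:ℝ) + 2) * M n = (2*(n:ℝ) + 1) * M (n-1) + (3*(n:ℝ) - 3) * M (n-2)) :
    (∀ n : ℕ, 6 ≤ n → M (n+1) * (M (n-1))^3 < (M n)^3 * M (n-2)) ∧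
    (∀ n : ℕ, 2 ≤ n →
      M (n+1) ^ (1/((n:ℝ)+1)) * M (n-1) ^ (1/((n:ℝ)-1)) < (M n ^ (1/(n:ℝ)))^2) := by
  -- positivity
  have hpos2 : ∀ n : ℕ, 0 < M n ∧ 0 < M (n+1) := by
    intro n
    induction n with
    | zero => constructor <;> simp [hM0, hM1]
    | succ k ih =>
      refine ⟨ih.2, ?_⟩
      have h := hrec (k+2) (by omega)
      have i1 : k+2-1 = k+1 := by omega
      have i2 : k+2-2 = k := by omega
      rw [i1, i2] at h
      push_cast at h
      have hk : (0:ℝ) ≤ (k:ℝ) := Nat.cast_nonneg k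
      nlinarith [ih.1, ih.2]
  have hpos : ∀ n : ℕ, 0 < M n := fun n => (hpos2 n).1
  have v0 : M 0 = 1 := hM0
  have v1 : M 1 = 1 := hM1
  have e2 := hrec 2 (by norm_num)
  norm_num at e2
  have v2 : M 2 = 2 := by rw [v1, v0] at e2; linarith
  have e3 := hrec 3 (by norm_num)
  norm_num at e3
  have v3 : M 3 = 4 := by rw [v2, v1] at e3; linarith
  have e4 := hrec 4 (by norm_num)
  norm_num at e4
  have v4 : M 4 = 9 := by rw [v3, v2] at e4; linarith
  have e5 := hrec 5 (by norm_num)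
  norm_num at e5
  have v5 : M 5 = 21 := by rw [v4, v3] at e5; linarith
  have e6 := hrec 6 (by norm_num)
  norm_num at e6
  have v6 : M 6 = 51 := by rw [v5, v4] at e6; linarith
  have e7 := hrec 7 (by norm_num)
  norm_num at e7
  have v7 : M 7 = 127 := by rw [v6, v5] at e7; linarith
  have e8 := hrec 8 (by norm_num)
  norm_num at e8
  have v8 : M 8 = 323 := by rw [v7, v6] at e8; linarith
  have e9 := hrec 9 (by norm_num)
  norm_num at e9
  have v9 : M 9 = 835 := by rw [v8, v7] at e9; linarith
  have e10 := hrec 10 (by norm_num)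
  norm_num at e10
  have v10 : M 10 = 2188 := by rw [v9, v8] at e10; linarith
  have e11 := hrec 11 (by norm_num)
  norm_num at e11
  have v11 : M 11 = 5798 := by rw [v10, v9] at e11; linarith
  have e12 := hrec 12 (by norm_num)
  norm_num at e12
  have v12 : M 12 = 15511 := by rw [v11, v10] at e12; linarith
  have e13 := hrec 13 (by norm_num)
  norm_num at e13
  have v13 : M 13 = 41835 := by rw [v12, v11] at e13; linarith
  have e14 := hrec 14 (by norm_num)
  norm_num at e14
  have v14 : M 14 = 113634 := by rw [v13, v12] at e14; linarith
  have e15 := hrec 15 (by norm_num)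
  norm_num at e15
  have v15 : M 15 = 310572 := by rw [v14, v13] at e15; linarith
  have e16 := hrec 16 (by norm_num)
  norm_num at e16
  have v16 : M 16 = 853467 := by rw [v15, v14] at e16; linarith
  have e17 := hrec 17 (by norm_num)
  norm_num at e17
  have v17 : M 17 = 2356779 := by rw [v16, v15] at e17; linarith
  have e18 := hrec 18 (by norm_num)
  norm_num at e18
  have v18 : M 18 = 6536382 := by rw [v17, v16] at e18; linarith
  have e19 := hrec 19 (by norm_num)
  norm_num at e19
  have v19 : M 19 = 18199284 := by rw [v18, v17] at e19; linarith
  -- the interval bounds, for n = k+18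
  have LB : ∀ k : ℕ,
      (96*((k:ℝ)+18)^4 - 144*((k:ℝ)+18)^3 + 270*((k:ℝ)+18)^2 - 540*((k:ℝ)+18) + 800) * M (k+17)
        ≤ 32*((k:ℝ)+18)^4 * M (k+18) ∧
      32*((k:ℝ)+18)^4 * M (k+18)
        ≤ (96*((k:ℝ)+18)^4 - 144*((k:ℝ)+18)^3 + 270*((k:ℝ)+18)^2 - 540*((k:ℝ)+18) + 1400) * M (k+17) := by
    intro k
    induction k with
    | zero => norm_num [v17, v18]
    | succ k ih =>
      have h := hrec (k+19) (by omega)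
      have i1 : k+19-1 = k+18 := by omega
      have i2 : k+19-2 = k+17 := by omega
      rw [i1, i2] at h
      push_cast at h
      have i3 : k+1+17 = k+18 := by omega
      have i4 : k+1+18 = k+19 := by omega
      rw [i3, i4]
      push_cast
      set x : ℝ := (k:ℝ) with hxdef
      have hx : (0:ℝ) ≤ x := Nat.cast_nonneg k
      have hfix : x+1+18 = x+19 := by ring
      rw [hfix]
      have h' : (x+21) * M (k+19) = (2*x+39) * M (k+18) + (3*x+54) * M (k+17) := by
        linear_combination h
      have hM17 : 0 < M (k+17) := hpos _
      have hM18 : 0 < M (k+18) := hpos _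
      have hM19 : 0 < M (k+19) := hpos _
      have hNA18 : 0 < 96*(x+18)^4 - 144*(x+18)^3 + 270*(x+18)^2 - 540*(x+18) + 800 :=
        nap (x+18) (by linarith)
      have hNB18 : 0 < 96*(x+18)^4 - 144*(x+18)^3 + 270*(x+18)^2 - 540*(x+18) + 1400 := by
        linarith
      have ihl := ih.1
      have ihu := ih.2
      constructor
      · -- lower bound: NA(x+19) * M(k+18) ≤ 32(x+19)^4 * M(k+19)
        have hC : (0:ℝ) < (x+21) * (96*(x+18)^4 - 144*(x+18)^3 + 270*(x+18)^2 - 540*(x+18) + 1400) := by positivity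
        have key : ((x+21) * (96*(x+18)^4 - 144*(x+18)^3 + 270*(x+18)^2 - 540*(x+18) + 1400))
              * ((96*(x+19)^4 - 144*(x+19)^3 + 270*(x+19)^2 - 540*(x+19) + 800) * M (k+18))
            ≤ ((x+21) * (96*(x+18)^4 - 144*(x+18)^3 + 270*(x+18)^2 - 540*(x+18) + 1400))
              * (32*(x+19)^4 * M (k+19)) := by
          have step1 : ((x+21) * (96*(x+18)^4 - 144*(x+18)^3 + 270*(x+18)^2 - 540*(x+18) + 1400))
                * (32*(x+19)^4 * M (k+19))
              = (32*(x+19)^4) * (2*x+39) * ((96*(x+18)^4 - 144*(x+18)^3 + 270*(x+18)^2 - 540*(x+18) + 1400) * M (k+18))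
                + (32*(x+19)^4) * (3*x+54) * ((96*(x+18)^4 - 144*(x+18)^3 + 270*(x+18)^2 - 540*(x+18) + 1400) * M (k+17)) := by
            linear_combination (32*(x+19)^4 * (96*(x+18)^4 - 144*(x+18)^3 + 270*(x+18)^2 - 540*(x+18) + 1400)) * h'
          have step2 : (32*(x+19)^4) * (3*x+54) * (32*(x+18)^4 * M (k+18))
              ≤ (32*(x+19)^4) * (3*x+54) * ((96*(x+18)^4 - 144*(x+18)^3 + 270*(x+18)^2 - 540*(x+18) + 1400) * M (k+17)) := by
            apply mul_le_mul_of_nonneg_left ihu (by positivity)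
          have step3 := mul_le_mul_of_nonneg_right (g1 x hx) hM18.le
          linarith only [step1, step2, step3]
        exact le_of_mul_le_mul_left key hC
      · -- upper bound
        have hC : (0:ℝ) < (x+21) * (96*(x+18)^4 - 144*(x+18)^3 + 270*(x+18)^2 - 540*(x+18) + 800) := by positivity
        have key : ((x+21) * (96*(x+18)^4 - 144*(x+18)^3 + 270*(x+18)^2 - 540*(x+18) + 800))
              * (32*(x+19)^4 * M (k+19))
            ≤ ((x+21) * (96*(x+18)^4 - 144*(x+18)^3 + 270*(x+18)^2 - 540*(x+18) + 800))
              * ((96*(x+19)^4 - 144*(x+19)^3 + 270*(x+19)^2 - 540*(x+19) + 1400) * M (k+18)) := by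
          have step1 : ((x+21) * (96*(x+18)^4 - 144*(x+18)^3 + 270*(x+18)^2 - 540*(x+18) + 800))
                * (32*(x+19)^4 * M (k+19))
              = (32*(x+19)^4) * (2*x+39) * ((96*(x+18)^4 - 144*(x+18)^3 + 270*(x+18)^2 - 540*(x+18) + 800) * M (k+18))
                + (32*(x+19)^4) * (3*x+54) * ((96*(x+18)^4 - 144*(x+18)^3 + 270*(x+18)^2 - 540*(x+18) + 800) * M (k+17)) := by
            linear_combination (32*(x+19)^4 * (96*(x+18)^4 - 144*(x+18)^3 + 270*(x+18)^2 - 540*(x+18) + 800)) * h'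
          have step2 : (32*(x+19)^4) * (3*x+54) * ((96*(x+18)^4 - 144*(x+18)^3 + 270*(x+18)^2 - 540*(x+18) + 800) * M (k+17))
              ≤ (32*(x+19)^4) * (3*x+54) * (32*(x+18)^4 * M (k+18)) := by
            apply mul_le_mul_of_nonneg_left ihl (by positivity)
          have step3 := mul_le_mul_of_nonneg_right (g2 x hx) hM18.le
          linarith only [step1, step2, step3]
        exact le_of_mul_le_mul_left key hC

  -- log-convexity / ratio monotonicity
  have mono : ∀ j : ℕ, M (j+3) * M (j+3) ≤ M (j+4) * M (j+2) := by
    intro j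
    rcases Nat.lt_or_ge j 15 with hj | hj
    · interval_cases j <;>
        norm_num [v2, v3, v4, v5, v6, v7, v8, v9, v10, v11, v12, v13, v14, v15, v16, v17, v18, v19]
    · obtain ⟨l, rfl⟩ := Nat.exists_eq_add_of_le hj
      have i1 : 15+l+3 = l+18 := by omega
      have i2 : 15+l+4 = l+19 := by omega
      have i3 : 15+l+2 = l+17 := by omega
      rw [i1, i2, i3]
      have hu := (LB l).2
      have hlow := (LB (l+1)).1
      have j1 : l+1+17 = l+18 := by omega
      have j2 : l+1+18 = l+19 := by omega
      rw [j1, j2] at hlow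
      push_cast at hlow
      have hfix : ((l:ℝ)+1+18) = (l:ℝ)+19 := by ring
      rw [hfix] at hlow
      set x : ℝ := (l:ℝ) with hxdef
      have hx : (0:ℝ) ≤ x := Nat.cast_nonneg l
      have hM17 : 0 < M (l+17) := hpos _
      have hM18 : 0 < M (l+18) := hpos _
      have hM19 : 0 < M (l+19) := hpos _
      have hNA19 : 0 < 96*(x+19)^4 - 144*(x+19)^3 + 270*(x+19)^2 - 540*(x+19) + 800 :=
        nap (x+19) (by linarith)
      have hNA18 : 0 < 96*(x+18)^4 - 144*(x+18)^3 + 270*(x+18)^2 - 540*(x+18) + 800 :=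
        nap (x+18) (by linarith)
      have hNB18 : 0 < 96*(x+18)^4 - 144*(x+18)^3 + 270*(x+18)^2 - 540*(x+18) + 1400 := by
        linarith
      have p1 : (32*(x+18)^4 * M (l+18)) * ((96*(x+19)^4 - 144*(x+19)^3 + 270*(x+19)^2 - 540*(x+19) + 800) * M (l+18))
          ≤ ((96*(x+18)^4 - 144*(x+18)^3 + 270*(x+18)^2 - 540*(x+18) + 1400) * M (l+17)) * (32*(x+19)^4 * M (l+19)) :=
        mul_le_mul hu hlow (mul_nonneg hNA19.le hM18.le) (mul_nonneg hNB18.le hM17.le)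
      have p2 := mul_le_mul_of_nonneg_right (g4 x hx) (mul_nonneg hM17.le hM19.le)
      have hC : (0:ℝ) < 32*(x+18)^4 * (96*(x+19)^4 - 144*(x+19)^3 + 270*(x+19)^2 - 540*(x+19) + 800) := by
        have : (0:ℝ) < 32*(x+18)^4 := by positivity
        exact mul_pos this hNA19
      have key : (32*(x+18)^4 * (96*(x+19)^4 - 144*(x+19)^3 + 270*(x+19)^2 - 540*(x+19) + 800)) * (M (l+18) * M (l+18))
          ≤ (32*(x+18)^4 * (96*(x+19)^4 - 144*(x+19)^3 + 270*(x+19)^2 - 540*(x+19) + 800)) * (M (l+19) * M (l+17)) := by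
        linarith only [p1, p2]
      exact le_of_mul_le_mul_left key hC
  have TL : ∀ j : ℕ, M (j+3) / M (j+2) ≤ M (j+4) / M (j+3) := by
    intro j
    rw [div_le_div_iff₀ (hpos _) (hpos _)]
    linarith only [mono j]
  have L1 : ∀ j : ℕ, M (j+3) ≤ 4 * (M (j+3) / M (j+2))^j := by
    intro j
    induction j with
    | zero => rw [v3]; norm_num
    | succ p ih =>
      have i1 : p+1+3 = p+4 := by omega
      have i2 : p+1+2 = p+3 := by omega
      rw [i1, i2]
      have h1 : M (p+4) = (M (p+4) / M (p+3)) * M (p+3) :=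
        (div_mul_cancel₀ _ (ne_of_gt (hpos (p+3)))).symm
      have hd : (0:ℝ) ≤ M (p+4) / M (p+3) := le_of_lt (div_pos (hpos _) (hpos _))
      calc M (p+4) = (M (p+4) / M (p+3)) * M (p+3) := h1
        _ ≤ (M (p+4) / M (p+3)) * (4 * (M (p+3) / M (p+2))^p) :=
            mul_le_mul_of_nonneg_left ih hd
        _ ≤ (M (p+4) / M (p+3)) * (4 * (M (p+4) / M (p+3))^p) := by
            have hpow := pow_le_pow_left₀ (le_of_lt (div_pos (hpos (p+3)) (hpos (p+2)))) (TL p) p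
            have : 4 * (M (p+3) / M (p+2))^p ≤ 4 * (M (p+4) / M (p+3))^p := by linarith
            exact mul_le_mul_of_nonneg_left this hd
        _ = 4 * (M (p+4) / M (p+3))^(p+1) := by ring

  have part1 : ∀ n : ℕ, 6 ≤ n → M (n+1) * (M (n-1))^3 < (M n)^3 * M (n-2) := by
    intro n hn
    rcases Nat.lt_or_ge n 19 with h | h
    · interval_cases n <;>
        norm_num [v4, v5, v6, v7, v8, v9, v10, v11, v12, v13, v14, v15, v16, v17, v18, v19]
    · obtain ⟨k, rfl⟩ := Nat.exists_eq_add_of_le h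
      have i1 : 19+k+1 = k+20 := by omega
      have i2 : 19+k-1 = k+18 := by omega
      have i3 : 19+k = k+19 := by omega
      have i4 : 19+k-2 = k+17 := by omega
      rw [i1, i2, i4, i3]
      have b0 := LB k
      have b1 := LB (k+1)
      have b2 := LB (k+2)
      have j1 : k+1+17 = k+18 := by omega
      have j2 : k+1+18 = k+19 := by omega
      have j3 : k+2+17 = k+19 := by omega
      have j4 : k+2+18 = k+20 := by omega
      rw [j1, j2] at b1
      rw [j3, j4] at b2
      push_cast at b1 b2
      have hf1 : ((k:ℝ)+1+18) = (k:ℝ)+19 := by ring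
      have hf2 : ((k:ℝ)+2+18) = (k:ℝ)+20 := by ring
      rw [hf1] at b1
      rw [hf2] at b2
      set x : ℝ := (k:ℝ) with hxdef
      have hx : (0:ℝ) ≤ x := Nat.cast_nonneg k
      have hM17 : 0 < M (k+17) := hpos _
      have hM18 : 0 < M (k+18) := hpos _
      have hM19 : 0 < M (k+19) := hpos _
      have hM20 : 0 < M (k+20) := hpos _
      have hNA19 : 0 < 96*(x+19)^4 - 144*(x+19)^3 + 270*(x+19)^2 - 540*(x+19) + 800 :=
        nap (x+19) (by linarith)
      have hNA18 : 0 < 96*(x+18)^4 - 144*(x+18)^3 + 270*(x+18)^2 - 540*(x+18) + 800 :=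
        nap (x+18) (by linarith)
      have hNA20 : 0 < 96*(x+20)^4 - 144*(x+20)^3 + 270*(x+20)^2 - 540*(x+20) + 800 :=
        nap (x+20) (by linarith)
      have hNB18 : 0 < 96*(x+18)^4 - 144*(x+18)^3 + 270*(x+18)^2 - 540*(x+18) + 1400 := by linarith
      have hNB20 : 0 < 96*(x+20)^4 - 144*(x+20)^3 + 270*(x+20)^2 - 540*(x+20) + 1400 := by linarith
      have q1 : (32*(x+20)^4 * M (k+20)) * ((96*(x+19)^4 - 144*(x+19)^3 + 270*(x+19)^2 - 540*(x+19) + 800) * M (k+18))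
          ≤ ((96*(x+20)^4 - 144*(x+20)^3 + 270*(x+20)^2 - 540*(x+20) + 1400) * M (k+19)) * (32*(x+19)^4 * M (k+19)) :=
        mul_le_mul b2.2 b1.1 (mul_nonneg hNA19.le hM18.le) (mul_nonneg hNB20.le hM19.le)
      have q2 : ((96*(x+19)^4 - 144*(x+19)^3 + 270*(x+19)^2 - 540*(x+19) + 800) * M (k+18)) * (32*(x+18)^4 * M (k+18))
          ≤ (32*(x+19)^4 * M (k+19)) * ((96*(x+18)^4 - 144*(x+18)^3 + 270*(x+18)^2 - 540*(x+18) + 1400) * M (k+17)) :=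
        mul_le_mul b1.1 b0.2 (by positivity) (by positivity)
      have q3 := mul_le_mul q1 q2
        (mul_nonneg (mul_nonneg hNA19.le hM18.le) (by positivity))
        (mul_nonneg (mul_nonneg hNB20.le hM19.le) (by positivity))
      have hD : (0:ℝ) < (32*(x+20)^4) * ((96*(x+19)^4 - 144*(x+19)^3 + 270*(x+19)^2 - 540*(x+19) + 800)^2) * (32*(x+18)^4) := by
        have h1 : (0:ℝ) < 32*(x+20)^4 := by positivity
        have h2 : (0:ℝ) < 32*(x+18)^4 := by positivity
        have h3 : (0:ℝ) < (96*(x+19)^4 - 144*(x+19)^3 + 270*(x+19)^2 - 540*(x+19) + 800)^2 := pow_pos hNA19 2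
        positivity
      have q4 := mul_lt_mul_of_pos_right (g3 x hx)
        (show (0:ℝ) < M (k+19)^3 * M (k+17) by positivity)
      have key : ((32*(x+20)^4) * ((96*(x+19)^4 - 144*(x+19)^3 + 270*(x+19)^2 - 540*(x+19) + 800)^2) * (32*(x+18)^4))
            * (M (k+20) * (M (k+18))^3)
          < ((32*(x+20)^4) * ((96*(x+19)^4 - 144*(x+19)^3 + 270*(x+19)^2 - 540*(x+19) + 800)^2) * (32*(x+18)^4))
            * ((M (k+19))^3 * M (k+17)) := by
        linarith only [q3, q4]
      exact lt_of_mul_lt_mul_left key hD.le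

  have part2 : ∀ n : ℕ, 2 ≤ n → M (n+1) ^ (1/((n:ℝ)+1)) * M (n-1) ^ (1/((n:ℝ)-1)) < (M n ^ (1/(n:ℝ)))^2 := by
    intro n hn
    rcases Nat.lt_or_ge n 19 with hsm | hbig
    · interval_cases n <;>
        exact red _ (by norm_num) _ _ _ (hpos _) (hpos _) (hpos _)
          (by norm_num [v0, v1, v2, v3, v4, v5, v6, v7, v8, v9, v10, v11, v12, v13, v14, v15, v16, v17, v18, v19] <;> set_option maxRecDepth 100000 in norm_cast)
    · obtain ⟨k, rfl⟩ := Nat.exists_eq_add_of_le hbig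
      refine red _ (by omega) _ _ _ (hpos _) (hpos _) (hpos _) ?_
      have i1 : 19+k+1 = k+20 := by omega
      have i2 : 19+k-1 = k+18 := by omega
      have i3 : 19+k = k+19 := by omega
      rw [i1, i2, i3]
      obtain ⟨m, hm⟩ := Nat.even_mul_succ_self (k+18)
      have hm' : (k+19)*(k+18) = m + m := by rw [← hm]; ring
      have hq1 : 1 ≤ (k+19)*(k+19) := Nat.one_le_iff_ne_zero.mpr (by positivity)
      obtain ⟨q, hq⟩ := Nat.exists_eq_add_of_le hq1
      have habs : (k+19)*(k+18) + (k+19)*(k+20) = 2*((k+19)*(k+19)-1) + 2 := by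
        have h1 : (k+19)*(k+18) + (k+19)*(k+20) = 2*(1+q) := by rw [← hq]; ring
        have h2 : 2*((k+19)*(k+19)-1) + 2 = 2*q + 2 := by rw [hq]; omega
        omega
      have hbe : (k+19)*(k+20) = 6 + ((k+19)*(k+18) + 2*(k+16)) := by ring
      have b1 := LB (k+1)
      have b2 := LB (k+2)
      have j1 : k+1+17 = k+18 := by omega
      have j2 : k+1+18 = k+19 := by omega
      have j3 : k+2+17 = k+19 := by omega
      have j4 : k+2+18 = k+20 := by omega
      rw [j1, j2] at b1
      rw [j3, j4] at b2
      push_cast at b1 b2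
      have hf1 : ((k:ℝ)+1+18) = (k:ℝ)+19 := by ring
      have hf2 : ((k:ℝ)+2+18) = (k:ℝ)+20 := by ring
      rw [hf1] at b1
      rw [hf2] at b2
      set x : ℝ := (k:ℝ) with hxdef
      have hx : (0:ℝ) ≤ x := Nat.cast_nonneg k
      have hM18 : 0 < M (k+18) := hpos _
      have hM19 : 0 < M (k+19) := hpos _
      have hM20 : 0 < M (k+20) := hpos _
      have hNA19 : 0 < (96*(x+19)^4 - 144*(x+19)^3 + 270*(x+19)^2 - 540*(x+19) + 800) := nap (x+19) (by linarith)
      have hNA20 : 0 < (96*(x+20)^4 - 144*(x+20)^3 + 270*(x+20)^2 - 540*(x+20) + 800) := nap (x+20) (by linarith)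
      have hNB20 : 0 < (96*(x+20)^4 - 144*(x+20)^3 + 270*(x+20)^2 - 540*(x+20) + 1400) := by linarith
      set u : ℝ := M (k+19) / M (k+18) with hu_def
      set v : ℝ := M (k+20) / M (k+19) with hv_def
      have hu : 0 < u := div_pos hM19 hM18
      have hv0 : 0 ≤ v := le_of_lt (div_pos hM20 hM19)
      set A : ℝ := (96*(x+19)^4 - 144*(x+19)^3 + 270*(x+19)^2 - 540*(x+19) + 800) / (32*(x+19)^4) with hA_def
      set Bp : ℝ := (96*(x+20)^4 - 144*(x+20)^3 + 270*(x+20)^2 - 540*(x+20) + 1400) / (32*(x+20)^4) with hB_def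
      have hApos : 0 < A := by rw [hA_def]; exact div_pos hNA19 (by positivity)
      have hAu : A ≤ u := by
        rw [hA_def, hu_def, div_le_div_iff₀ (by positivity) hM18]
        linarith only [b1.1]
      have hvB : v ≤ Bp := by
        rw [hv_def, hB_def, div_le_div_iff₀ hM19 (by positivity)]
        linarith only [b2.2]
      set w : ℝ := Bp / A with hw_def
      have hw1 : 1 ≤ w := by
        rw [hw_def, le_div_iff₀ hApos, one_mul, hA_def, hB_def,
          div_le_div_iff₀ (by positivity) (by positivity)]
        linarith only [g6 x hx]
      have hw2 : w ≤ 2 := by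
        rw [hw_def, div_le_iff₀ hApos, hA_def, hB_def, ← mul_div_assoc,
          div_le_div_iff₀ (by positivity) (by positivity)]
        linarith only [g7 x hx]
      have hw0 : 0 ≤ w := by linarith
      have hvwu : v ≤ w * u := by
        have h1 : w * A = Bp := by rw [hw_def]; field_simp
        calc v ≤ Bp := hvB
          _ = w * A := h1.symm
          _ ≤ w * u := mul_le_mul_of_nonneg_left hAu hw0
      have hQ : M (k+20) = v * M (k+19) := by
        rw [hv_def]; exact (div_mul_cancel₀ _ (ne_of_gt hM19)).symm
      have hRu : M (k+18) * u = M (k+19) := by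
        rw [hu_def, mul_comm]; exact div_mul_cancel₀ _ (ne_of_gt hM18)
      have hL1 := L1 (k+16)
      rw [show k+16+3 = k+19 by omega, show k+16+2 = k+18 by omega, ← hu_def] at hL1
      have h2m : (x+19)*(x+18) = (m:ℝ) + (m:ℝ) := by
        rw [hxdef]; exact_mod_cast hm'
      set s' : ℝ := 1 - (m:ℝ)*(w-1) with hs_def
      have hwP : (w-1) * ((96*(x+19)^4 - 144*(x+19)^3 + 270*(x+19)^2 - 540*(x+19) + 800)*(32*(x+20)^4)) = ((96*(x+20)^4 - 144*(x+20)^3 + 270*(x+20)^2 - 540*(x+20) + 1400)*(32*(x+19)^4) - (96*(x+19)^4 - 144*(x+19)^3 + 270*(x+19)^2 - 540*(x+19) + 800)*(32*(x+20)^4)) := by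
        rw [hw_def, hB_def, hA_def]
        have h1 := hNA19.ne'
        have h2 : (32*(x+19)^4:ℝ) ≠ 0 := by positivity
        have h3 : (32*(x+20)^4:ℝ) ≠ 0 := by positivity
        generalize 96*(x+19)^4 - 144*(x+19)^3 + 270*(x+19)^2 - 540*(x+19) + 800 = a at h1 h2 h3 ⊢
        generalize 96*(x+20)^4 - 144*(x+20)^3 + 270*(x+20)^2 - 540*(x+20) + 1400 = b at h1 h2 h3 ⊢
        generalize (32*(x+19)^4:ℝ) = c at h1 h2 h3 ⊢
        generalize (32*(x+20)^4:ℝ) = d at h1 h2 h3 ⊢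
        field_simp
      have hs'P : s' * ((96*(x+19)^4 - 144*(x+19)^3 + 270*(x+19)^2 - 540*(x+19) + 800)*(32*(x+20)^4))
          = (96*(x+19)^4 - 144*(x+19)^3 + 270*(x+19)^2 - 540*(x+19) + 800)*(32*(x+20)^4) - (m:ℝ)*((96*(x+20)^4 - 144*(x+20)^3 + 270*(x+20)^2 - 540*(x+20) + 1400)*(32*(x+19)^4) - (96*(x+19)^4 - 144*(x+19)^3 + 270*(x+19)^2 - 540*(x+19) + 800)*(32*(x+20)^4)) := by
        rw [hs_def]; linear_combination (-(m:ℝ)) * hwP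
      have hP' : 0 < (96*(x+19)^4 - 144*(x+19)^3 + 270*(x+19)^2 - 540*(x+19) + 800)*(32*(x+20)^4) := mul_pos hNA19 (by positivity)
      have e0 : 2*(s' * ((96*(x+19)^4 - 144*(x+19)^3 + 270*(x+19)^2 - 540*(x+19) + 800)*(32*(x+20)^4)))
          = 2*((96*(x+19)^4 - 144*(x+19)^3 + 270*(x+19)^2 - 540*(x+19) + 800)*(32*(x+20)^4)) - (x+18)*(x+19)*((96*(x+20)^4 - 144*(x+20)^3 + 270*(x+20)^2 - 540*(x+20) + 1400)*(32*(x+19)^4) - (96*(x+19)^4 - 144*(x+19)^3 + 270*(x+19)^2 - 540*(x+19) + 800)*(32*(x+20)^4)) := by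
        linear_combination 2*hs'P + ((96*(x+20)^4 - 144*(x+20)^3 + 270*(x+20)^2 - 540*(x+20) + 1400)*(32*(x+19)^4) - (96*(x+19)^4 - 144*(x+19)^3 + 270*(x+19)^2 - 540*(x+19) + 800)*(32*(x+20)^4)) * h2m
      have hs'pos : 0 < s' := by
        have h1 : 0 < s' * ((96*(x+19)^4 - 144*(x+19)^3 + 270*(x+19)^2 - 540*(x+19) + 800)*(32*(x+20)^4)) := by linarith only [g5a x hx, e0]
        have h2 : s' = s' * ((96*(x+19)^4 - 144*(x+19)^3 + 270*(x+19)^2 - 540*(x+19) + 800)*(32*(x+20)^4)) / ((96*(x+19)^4 - 144*(x+19)^3 + 270*(x+19)^2 - 540*(x+19) + 800)*(32*(x+20)^4)) :=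
          (mul_div_cancel_right₀ _ (ne_of_gt hP')).symm
        rw [h2]; exact div_pos h1 hP'
      have e2b : (96*(x+19)^4 - 144*(x+19)^3 + 270*(x+19)^2 - 540*(x+19) + 800)^3*(2*(s' * ((96*(x+19)^4 - 144*(x+19)^3 + 270*(x+19)^2 - 540*(x+19) + 800)*(32*(x+20)^4))))
          = (96*(x+19)^4 - 144*(x+19)^3 + 270*(x+19)^2 - 540*(x+19) + 800)^3*(2*((96*(x+19)^4 - 144*(x+19)^3 + 270*(x+19)^2 - 540*(x+19) + 800)*(32*(x+20)^4)) - (x+18)*(x+19)*((96*(x+20)^4 - 144*(x+20)^3 + 270*(x+20)^2 - 540*(x+20) + 1400)*(32*(x+19)^4) - (96*(x+19)^4 - 144*(x+19)^3 + 270*(x+19)^2 - 540*(x+19) + 800)*(32*(x+20)^4))) := by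
        linear_combination (96*(x+19)^4 - 144*(x+19)^3 + 270*(x+19)^2 - 540*(x+19) + 800)^3 * e0
      have hh : (4*((32*(x+19)^4)^3)) * ((96*(x+19)^4 - 144*(x+19)^3 + 270*(x+19)^2 - 540*(x+19) + 800)*(32*(x+20)^4)) < ((96*(x+19)^4 - 144*(x+19)^3 + 270*(x+19)^2 - 540*(x+19) + 800)^3 * s') * ((96*(x+19)^4 - 144*(x+19)^3 + 270*(x+19)^2 - 540*(x+19) + 800)*(32*(x+20)^4)) := by
        linarith only [g5 x hx, e2b]
      have hh2 : 4*((32*(x+19)^4)^3) < (96*(x+19)^4 - 144*(x+19)^3 + 270*(x+19)^2 - 540*(x+19) + 800)^3 * s' := lt_of_mul_lt_mul_right hh hP'.le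
      have hF5 : 4 < A^3 * s' := by
        rw [hA_def, div_pow, div_mul_eq_mul_div, lt_div_iff₀ (by positivity)]
        linarith only [hh2]
      have hber : s' ≤ (2-w)^m := by
        have h1 := one_add_mul_le_pow (by linarith : (-2:ℝ) ≤ 1-w) m
        have h2 : s' = 1 + (m:ℝ)*(1-w) := by rw [hs_def]; ring
        rw [h2, show (2-w) = 1+(1-w) by ring]
        exact h1
      have hwm0 : 0 ≤ w^m := pow_nonneg hw0 m
      have hprod : w^m * (2-w)^m ≤ 1 := by
        rw [← mul_pow]
        exact pow_le_one₀ (mul_nonneg (by linarith only [hw1]) (by linarith only [hw2])) (by nlinarith only [sq_nonneg (w-1)])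
      have hws : w^m * s' ≤ 1 := le_trans (mul_le_mul_of_nonneg_left hber hwm0) hprod
      have h4wm : 4*w^m < A^3 := by
        apply lt_of_mul_lt_mul_right _ hs'pos.le
        have c1 : 4*w^m*s' ≤ 4 := by linarith only [hws]
        have c2 : (4:ℝ) < A^3*s' := hF5
        linarith only [c1, c2]
      have hAle : A^6 ≤ u^6 := pow_le_pow_left₀ hApos.le hAu 6
      have h16 : 16*(w^m*w^m) < u^6 := by
        have hsq := mul_lt_mul'' h4wm h4wm (by positivity) (by positivity)
        linarith only [hsq, hAle]
      have hP2 : M (k+19)^2 ≤ (4*u^(k+16))^2 := pow_le_pow_left₀ hM19.le hL1 2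
      have hva : v^((k+19)*(k+18)) ≤ (w*u)^((k+19)*(k+18)) := pow_le_pow_left₀ hv0 hvwu _
      have key : v^((k+19)*(k+18)) * M (k+19)^2 < u^((k+19)*(k+20)) := by
        have c1 : v^((k+19)*(k+18)) * M (k+19)^2 ≤ (w*u)^((k+19)*(k+18)) * (4*u^(k+16))^2 :=
          mul_le_mul hva hP2 (by positivity) (by positivity)
        have cw : (w*u)^(m+m) = (w^m*w^m)*(u^m*u^m) := by
          rw [pow_add, mul_pow]; ring
        have cu : (4*u^(k+16))^2 = 16*(u^(k+16)*u^(k+16)) := by ring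
        have c2 : (w*u)^((k+19)*(k+18)) * (4*u^(k+16))^2
            = (16*(w^m*w^m)) * ((u^m*u^m) * (u^(k+16)*u^(k+16))) := by
          rw [hm', cw, cu]; ring
        have c3 : (16*(w^m*w^m)) * ((u^m*u^m) * (u^(k+16)*u^(k+16)))
            < u^6 * ((u^m*u^m) * (u^(k+16)*u^(k+16))) := by
          apply mul_lt_mul_of_pos_right h16
          positivity
        have c4 : u^6 * ((u^m*u^m) * (u^(k+16)*u^(k+16))) = u^((k+19)*(k+20)) := by
          rw [hbe, hm', two_mul, pow_add, pow_add, pow_add, pow_add]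
          ring
        exact lt_of_le_of_lt (le_of_le_of_eq c1 c2) (lt_of_lt_of_eq c3 c4)
      have hub : 0 < u^((k+19)*(k+20)) := pow_pos hu _
      rw [← mul_lt_mul_iff_left₀ hub]
      have e3 : M (k+20)^((k+19)*(k+18)) * M (k+18)^((k+19)*(k+20)) * u^((k+19)*(k+20))
          = (v^((k+19)*(k+18)) * M (k+19)^2) * M (k+19)^(2*((k+19)*(k+19)-1)) := by
        rw [hQ, mul_pow, mul_assoc, ← mul_pow (M (k+18)) u ((k+19)*(k+20)), hRu,
          mul_assoc, ← pow_add, habs, pow_add]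
        ring
      rw [e3]
      calc (v^((k+19)*(k+18)) * M (k+19)^2) * M (k+19)^(2*((k+19)*(k+19)-1))
          < u^((k+19)*(k+20)) * M (k+19)^(2*((k+19)*(k+19)-1)) :=
            mul_lt_mul_of_pos_right key (pow_pos hM19 _)
        _ = M (k+19)^(2*((k+19)*(k+19)-1)) * u^((k+19)*(k+20)) := by ring

  exact ⟨part1, part2⟩
end

section
/- The sequence {D(n)}_{n≥0} of central Delannoy numbers is ratio log-concave, i.e., D(n)^3 D(n-2) ≥ D(n+1) D(n-1)^3 for all n ≥ 2; consequently the sequence {D(n)^{1/n}}_{n≥1} is strictly log-concave. -/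
set_option maxHeartbeats 1000000

/-- numeric bounds on sqrt 2 -/
private lemma sqrt2_lb : (1.414:ℝ) ≤ Real.sqrt 2 := by
  nlinarith [Real.sq_sqrt (by norm_num : (2:ℝ) ≥ 0), Real.sqrt_nonneg 2]

private lemma sqrt2_ub : Real.sqrt 2 ≤ 1.4143 := by
  nlinarith [Real.sq_sqrt (by norm_num : (2:ℝ) ≥ 0), Real.sqrt_nonneg 2]

/-- The key endpoint positivity: R(up(x)) * (32x²)⁴ ≥ 0, in homogenized form. -/
private lemma lemE3 (x q : ℝ) (hx : 2 ≤ x) (hq2 : q^2 = 2) (hql : 1.414 ≤ q)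
    (hqu : q ≤ 1.4143) :
    0 ≤ (x+1)*(16*(3+2*q)*x*(2*x-1) - q)^3*((6*x-3)*(32*x^2) - x*(16*(3+2*q)*x*(2*x-1) - q))
      - (6*x+3)*(x-1)*(16*(3+2*q)*x*(2*x-1) - q)*(32*x^2)^3 + x*(x-1)*(32*x^2)^4 := by
  have hEq : (x+1)*(16*(3+2*q)*x*(2*x-1) - q)^3*((6*x-3)*(32*x^2) - x*(16*(3+2*q)*x*(2*x-1) - q))
      - (6*x+3)*(x-1)*(16*(3+2*q)*x*(2*x-1) - q)*(32*x^2)^3 + x*(x-1)*(32*x^2)^4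
      = ((-4)*x + (-516)*x^2 + (-24064)*x^3 + (-449536)*x^4 + (3735552)*x^5
          + (-11042816)*x^6 + (11010048)*x^7)
        + q * ((-192)*x^2 + (-18240)*x^3 + (-312960)*x^4 + (2629632)*x^5
          + (-7888896)*x^6 + (7864320)*x^7) := by
    linear_combination ((-2)*x + (-1)*x*q^2 + (-258)*x^2 + (-96)*x^2*q + (-129)*x^2*q^2
      + (-12032)*x^3 + (-9120)*x^3*q + (-6016)*x^3*q^2 + (-224768)*x^4 + (-267072)*x^4*q
      + (-112384)*x^4*q^2 + (-786432)*x^5 + (-1671168)*x^5*q + (-393216)*x^5*q^2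
      + (13058048)*x^6 + (20213760)*x^6*q + (6529024)*x^6*q^2 + (-34603008)*x^7
      + (-51511296)*x^7*q + (-17301504)*x^7*q^2 + (18874368)*x^8 + (27525120)*x^8*q
      + (9437184)*x^8*q^2 + (33554432)*x^9 + (50331648)*x^9*q + (16777216)*x^9*q^2
      + (-33554432)*x^10 + (-50331648)*x^10*q + (-16777216)*x^10*q^2) * hq2
  rw [hEq]
  have h2 : (0:ℝ) ≤ x - 2 := by linarith
  rcases le_total 0 ((-192)*x^2 + (-18240)*x^3 + (-312960)*x^4 + (2629632)*x^5
      + (-7888896)*x^6 + (7864320)*x^7) with hB | hB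
  · have h1 : (1.414:ℝ) * ((-192)*x^2 + (-18240)*x^3 + (-312960)*x^4 + (2629632)*x^5
        + (-7888896)*x^6 + (7864320)*x^7)
        ≤ q * ((-192)*x^2 + (-18240)*x^3 + (-312960)*x^4 + (2629632)*x^5
        + (-7888896)*x^6 + (7864320)*x^7) := mul_le_mul_of_nonneg_right hql hB
    have h3 : (0:ℝ) ≤ ((-4)*x + (-516)*x^2 + (-24064)*x^3 + (-449536)*x^4 + (3735552)*x^5
        + (-11042816)*x^6 + (11010048)*x^7)
        + 1.414 * ((-192)*x^2 + (-18240)*x^3 + (-312960)*x^4 + (2629632)*x^5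
        + (-7888896)*x^6 + (7864320)*x^7) := by
      linarith [pow_nonneg h2 2, pow_nonneg h2 3, pow_nonneg h2 4, pow_nonneg h2 5,
        pow_nonneg h2 6, pow_nonneg h2 7, h2]
    linarith
  · have h1 : (1.4143:ℝ) * ((-192)*x^2 + (-18240)*x^3 + (-312960)*x^4 + (2629632)*x^5
        + (-7888896)*x^6 + (7864320)*x^7)
        ≤ q * ((-192)*x^2 + (-18240)*x^3 + (-312960)*x^4 + (2629632)*x^5
        + (-7888896)*x^6 + (7864320)*x^7) := mul_le_mul_of_nonpos_right hqu hB
    have h3 : (0:ℝ) ≤ ((-4)*x + (-516)*x^2 + (-24064)*x^3 + (-449536)*x^4 + (3735552)*x^5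
        + (-11042816)*x^6 + (11010048)*x^7)
        + 1.4143 * ((-192)*x^2 + (-18240)*x^3 + (-312960)*x^4 + (2629632)*x^5
        + (-7888896)*x^6 + (7864320)*x^7) := by
      linarith [pow_nonneg h2 2, pow_nonneg h2 3, pow_nonneg h2 4, pow_nonneg h2 5,
        pow_nonneg h2 6, pow_nonneg h2 7, h2]
    linarith

/-- Core ratio log-concavity inequality in homogeneous form. -/
private lemma lemRh (x q c b : ℝ) (hx : 2 ≤ x) (hq2 : q^2 = 2) (hql : 1.414 ≤ q)
    (hqu : q ≤ 1.4143) (hb : 0 < b) (hc : 0 < c)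
    (hlo : ((3+2*q)*x - 3)*b ≤ x*c)
    (hhi : 32*x^2*c ≤ (16*(3+2*q)*x*(2*x-1) - q)*b) :
    0 ≤ (x+1)*c^3*((6*x-3)*b - x*c) - (6*x+3)*(x-1)*c*b^3 + x*(x-1)*b^4 := by
  have hE3 := lemE3 x q hx hq2 hql hqu
  set M : ℝ := 16*(3+2*q)*x*(2*x-1) - q with hM
  set z : ℝ := 32*x^2 with hz
  have hzpos : 0 < z := by rw [hz]; positivity
  have hMpos : 0 < M := by rw [hM]; nlinarith
  have hzc : z*c ≤ M*b := by rw [hz, hM]; nlinarith [hhi]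
  have hzc0 : 0 ≤ z*c := by positivity
  -- S = z²c² + zc·Mb + M²b²
  have hS0 : (0:ℝ) ≤ z^2*c^2 + z*c*(M*b) + M^2*b^2 := by positivity
  have hSub : z^2*c^2 + z*c*(M*b) + M^2*b^2 ≤ 3*M^2*b^2 := by
    nlinarith [hzc, hzc0, mul_pos hMpos hb]
  -- Y ≥ 0
  have he1 : (2*q-3)*x*b ≤ x*c - (6*x-3)*b := by nlinarith [hlo]
  have hzS0 : (0:ℝ) ≤ z*(z^2*c^2 + z*c*(M*b) + M^2*b^2) := by positivity
  have h5 : ((2*q-3)*x*b) * (z*(z^2*c^2 + z*c*(M*b) + M^2*b^2))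
      ≤ (x*c - (6*x-3)*b) * (z*(z^2*c^2 + z*c*(M*b) + M^2*b^2)) :=
    mul_le_mul_of_nonneg_right he1 hzS0
  have hneg : (2*q-3)*x*b ≤ 0 := by nlinarith
  have h6 : ((2*q-3)*x*b) * (z*(3*M^2*b^2)) ≤ ((2*q-3)*x*b) * (z*(z^2*c^2 + z*c*(M*b) + M^2*b^2)) := by
    have : z*(z^2*c^2 + z*c*(M*b) + M^2*b^2) ≤ z*(3*M^2*b^2) :=
      mul_le_mul_of_nonneg_left hSub hzpos.le
    exact mul_le_mul_of_nonpos_left this hneg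
  have hMz : 0 ≤ M - (9-6*q)*z := by rw [hM, hz]; nlinarith
  have h7 : 0 ≤ x*(x+1)*(M^2*b^3)*(M - (9-6*q)*z) :=
    mul_nonneg (by positivity) hMz
  have hY : 0 ≤ (x+1)*(x*c-(6*x-3)*b)*z*(z^2*c^2 + z*c*(M*b) + M^2*b^2)
      + x*(x+1)*M^3*b^3 + (6*x+3)*(x-1)*z^3*b^3 := by
    have hz3b3 : (0:ℝ) ≤ (6*x+3)*(x-1)*z^3*b^3 :=
      mul_nonneg (mul_nonneg (mul_nonneg (by linarith) (by linarith))
        (pow_nonneg hzpos.le 3)) (pow_nonneg hb.le 3)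
    nlinarith [h5, h6, h7, hz3b3, mul_le_mul_of_nonneg_left h5 (by linarith : (0:ℝ) ≤ x+1),
      mul_le_mul_of_nonneg_left h6 (by linarith : (0:ℝ) ≤ x+1)]
  have hRb : 0 ≤ (x+1)*M^3*((6*x-3)*z - x*M) - (6*x+3)*(x-1)*M*z^3 + x*(x-1)*z^4 := hE3
  have hid : z^4 * ((x+1)*c^3*((6*x-3)*b - x*c) - (6*x+3)*(x-1)*c*b^3 + x*(x-1)*b^4)
      = b^4 * ((x+1)*M^3*((6*x-3)*z - x*M) - (6*x+3)*(x-1)*M*z^3 + x*(x-1)*z^4)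
        + (M*b - z*c) * ((x+1)*(x*c-(6*x-3)*b)*z*(z^2*c^2 + z*c*(M*b) + M^2*b^2)
            + x*(x+1)*M^3*b^3 + (6*x+3)*(x-1)*z^3*b^3) := by ring
  have hfinal : 0 ≤ z^4 * ((x+1)*c^3*((6*x-3)*b - x*c) - (6*x+3)*(x-1)*c*b^3 + x*(x-1)*b^4) := by
    rw [hid]
    have h8 : 0 ≤ M*b - z*c := by linarith
    have h9 : 0 ≤ b^4 := by positivity
    nlinarith [mul_nonneg h9 hRb, mul_nonneg h8 hY]
  nlinarith [hfinal, pow_pos hzpos 4]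

/-- Lower-bound preservation step. -/
private lemma step_low (x q a bb c : ℝ) (hx : 3 ≤ x) (hq2 : q^2 = 2) (hql : 1.414 ≤ q)
    (hqu : q ≤ 1.4143) (ha : 0 < a) (hb : 0 < bb)
    (hIH : ((3+2*q)*(x-1) - 3)*a ≤ (x-1)*bb)
    (he : x*c = 3*(2*x-1)*bb - (x-1)*a) :
    ((3+2*q)*x - 3)*bb ≤ x*c := by
  have hu : 0 < (3+2*q)*(x-1) - 3 := by nlinarith
  have hid : (3-2*q)*x*((3+2*q)*(x-1)-3) - (x-1)^2 = (6*q-8)*x - 1 := by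
    linear_combination (-4*x^2+4*x) * hq2
  have hqx : 1.414*x ≤ q*x := mul_le_mul_of_nonneg_right hql (by linarith)
  have hE1 : (x-1)^2 ≤ (3-2*q)*x*((3+2*q)*(x-1)-3) := by nlinarith [hid, hqx]
  have h1 : (x-1)*(((3+2*q)*(x-1) - 3)*a) ≤ (x-1)*((x-1)*bb) :=
    mul_le_mul_of_nonneg_left hIH (by linarith)
  have h2 : (x-1)^2*bb ≤ ((3-2*q)*x*((3+2*q)*(x-1)-3))*bb :=
    mul_le_mul_of_nonneg_right hE1 hb.le
  have h3 : (((3+2*q)*(x-1)-3))*((x-1)*a) ≤ (((3+2*q)*(x-1)-3))*((3-2*q)*x*bb) := by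
    nlinarith [h1, h2]
  have h4 : (x-1)*a ≤ (3-2*q)*x*bb := le_of_mul_le_mul_left h3 hu
  nlinarith [he, h4, hb]

/-- Upper-bound preservation step. -/
private lemma step_up (x q a bb c : ℝ) (hx : 3 ≤ x) (hq2 : q^2 = 2) (hql : 1.414 ≤ q)
    (hqu : q ≤ 1.4143) (ha : 0 < a) (hb : 0 < bb)
    (hIH : 32*(x-1)^2*bb ≤ (16*(3+2*q)*(x-1)*(2*(x-1)-1) - q)*a)
    (he : x*c = 3*(2*x-1)*bb - (x-1)*a) :
    32*x^2*c ≤ (16*(3+2*q)*x*(2*x-1) - q)*bb := by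
  have hqx2 : 1.414*x^2 ≤ q*x^2 := mul_le_mul_of_nonneg_right hql (by positivity)
  have hqx2' : q*x^2 ≤ 1.4143*x^2 := mul_le_mul_of_nonneg_right hqu (by positivity)
  have hqx : 1.414*x ≤ q*x := mul_le_mul_of_nonneg_right hql (by linarith)
  have hqx' : q*x ≤ 1.4143*x := mul_le_mul_of_nonneg_right hqu (by linarith)
  have hx2 : x^2 ≥ 3*x := by nlinarith
  have hN1 : 0 < 16*(3+2*q)*(x-1)*(2*(x-1)-1) - q := by nlinarith
  have hA : 0 ≤ 32*x*(6*x-3) - (16*(3+2*q)*x*(2*x-1) - q) := by nlinarith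
  have hid2 : (16*(3+2*q)*x*(2*x-1) - q)*(16*(3+2*q)*(x-1)*(2*(x-1)-1) - q)
      - 32*x*(6*x-3)*(16*(3+2*q)*(x-1)*(2*(x-1)-1) - q) + 1024*x*(x-1)^3
      = (128*x - 190) + (192*x - 144)*q := by
    linear_combination (4096*x^4 - 12288*x^3 + 11136*x^2 - 2880*x - 95) * hq2
  have hE2 : (32*x*(6*x-3) - (16*(3+2*q)*x*(2*x-1) - q))*(16*(3+2*q)*(x-1)*(2*(x-1)-1) - q)
      ≤ 1024*x*(x-1)^3 := by nlinarith [hid2, hqx]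
  have k1 : (32*x*(6*x-3) - (16*(3+2*q)*x*(2*x-1) - q))*(16*(3+2*q)*(x-1)*(2*(x-1)-1) - q)*bb
      ≤ 1024*x*(x-1)^3*bb := mul_le_mul_of_nonneg_right hE2 hb.le
  have k2 : (32*x*(x-1))*(32*(x-1)^2*bb) ≤ (32*x*(x-1))*((16*(3+2*q)*(x-1)*(2*(x-1)-1) - q)*a) :=
    mul_le_mul_of_nonneg_left hIH (by nlinarith)
  have k3 : (16*(3+2*q)*(x-1)*(2*(x-1)-1) - q)*((32*x*(6*x-3) - (16*(3+2*q)*x*(2*x-1) - q))*bb)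
      ≤ (16*(3+2*q)*(x-1)*(2*(x-1)-1) - q)*(32*x*(x-1)*a) := by nlinarith [k1, k2]
  have k4 : (32*x*(6*x-3) - (16*(3+2*q)*x*(2*x-1) - q))*bb ≤ 32*x*(x-1)*a :=
    le_of_mul_le_mul_left k3 hN1
  have he32 : 32*x^2*c = 32*x*(3*(2*x-1)*bb) - 32*x*((x-1)*a) := by
    linear_combination (32*x) * he
  nlinarith [he32, k4]

theorem stmt_18 (D : ℕ → ℝ) (hD0 : D 0 = 1) (hD1 : D 1 = 3)
    (hrec : ∀ n : ℕ, 2 ≤ n →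
      (n:ℝ) * D n = 3*(2*(n:ℝ) - 1) * D (n-1) - ((n:ℝ) - 1) * D (n-2)) :
    (∀ n : ℕ, 2 ≤ n → D (n+1) * (D (n-1))^3 ≤ (D n)^3 * D (n-2)) ∧
    (∀ n : ℕ, 2 ≤ n →
      D (n+1) ^ (1/((n:ℝ)+1)) * D (n-1) ^ (1/((n:ℝ)-1)) < (D n ^ (1/(n:ℝ)))^2) := by
  set q : ℝ := Real.sqrt 2 with hqdef
  have hq2 : q^2 = 2 := Real.sq_sqrt (by norm_num)
  have hql : (1.414:ℝ) ≤ q := sqrt2_lb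
  have hqu : q ≤ 1.4143 := sqrt2_ub
  have hD2 : D 2 = 13 := by
    have h := hrec 2 (le_refl 2)
    norm_num [hD0, hD1] at h
    linarith
  have hD3 : D 3 = 63 := by
    have h := hrec 3 (by norm_num)
    norm_num [hD1, hD2] at h
    linarith
  have key : ∀ n : ℕ, 2 ≤ n → 0 < D (n-1) ∧ 0 < D n ∧
      ((3+2*q)*(n:ℝ) - 3)*D (n-1) ≤ (n:ℝ)*D n ∧
      32*(n:ℝ)^2*D n ≤ (16*(3+2*q)*(n:ℝ)*(2*(n:ℝ)-1) - q)*D (n-1) := by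
    intro n hn
    induction n, hn using Nat.le_induction with
    | base =>
      refine ⟨by norm_num [hD1], by rw [hD2]; norm_num, ?_, ?_⟩
      · norm_num [hD1, hD2]; nlinarith
      · norm_num [hD1, hD2]; nlinarith
    | succ n hn ih =>
      obtain ⟨ha0, hb0, hlo, hhi⟩ := ih
      have hn2 : (2:ℝ) ≤ (n:ℝ) := by exact_mod_cast hn
      have hx3 : (3:ℝ) ≤ (n:ℝ)+1 := by linarith
      have he : ((n:ℝ)+1)*D (n+1) = 3*(2*((n:ℝ)+1)-1)*D n - (((n:ℝ)+1)-1)*D (n-1) := by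
        have h := hrec (n+1) (by omega)
        rw [show n+1-1 = n from rfl, show n+1-2 = n-1 from rfl] at h
        push_cast at h ⊢
        linarith
      have hIHlo : ((3+2*q)*(((n:ℝ)+1)-1) - 3)*D (n-1) ≤ (((n:ℝ)+1)-1)*D n := by
        simpa using hlo
      have hIHhi : 32*(((n:ℝ)+1)-1)^2*D n
          ≤ (16*(3+2*q)*(((n:ℝ)+1)-1)*(2*(((n:ℝ)+1)-1)-1) - q)*D (n-1) := by
        simpa using hhi
      have hlow' := step_low ((n:ℝ)+1) q (D (n-1)) (D n) (D (n+1)) hx3 hq2 hql hqu ha0 hb0 hIHlo he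
      have hhi' := step_up ((n:ℝ)+1) q (D (n-1)) (D n) (D (n+1)) hx3 hq2 hql hqu ha0 hb0 hIHhi he
      have hcoef : (0:ℝ) < (3+2*q)*((n:ℝ)+1) - 3 := by nlinarith
      have hpos' : 0 < D (n+1) := by nlinarith [hlow', mul_pos hcoef hb0, hn2]
      refine ⟨hb0, hpos', ?_, ?_⟩
      · push_cast
        exact hlow'
      · push_cast
        exact hhi'
  have part1 : ∀ n : ℕ, 2 ≤ n → D (n+1) * (D (n-1))^3 ≤ (D n)^3 * D (n-2) := by
    intro n hn
    obtain ⟨hb, hc, hlo, hhi⟩ := key n hn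
    have hr : (2:ℝ) ≤ (n:ℝ) := by exact_mod_cast hn
    have e2 := hrec n hn
    have e1 : ((n:ℝ)+1)*D (n+1) = 3*(2*((n:ℝ)+1)-1)*D n - (n:ℝ)*D (n-1) := by
      have h := hrec (n+1) (by omega)
      rw [show n+1-1 = n from rfl, show n+1-2 = n-1 from rfl] at h
      push_cast at h ⊢
      linarith
    have hR := lemRh (n:ℝ) q (D n) (D (n-1)) hr hq2 hql hqu hb hc hlo hhi
    have hfac : ((n:ℝ)+1)*(((n:ℝ)-1)*((D n)^3*D (n-2) - D (n+1)*(D (n-1))^3))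
        = ((n:ℝ)+1)*(D n)^3*((6*(n:ℝ)-3)*D (n-1) - (n:ℝ)*D n)
          - (6*(n:ℝ)+3)*((n:ℝ)-1)*(D n)*(D (n-1))^3 + (n:ℝ)*((n:ℝ)-1)*(D (n-1))^4 := by
      linear_combination (((n:ℝ)+1)*(D n)^3) * e2 - (((n:ℝ)-1)*(D (n-1))^3) * e1
    have h0 : 0 ≤ ((n:ℝ)+1)*(((n:ℝ)-1)*((D n)^3*D (n-2) - D (n+1)*(D (n-1))^3)) := by
      rw [hfac]; exact hR
    have hq3 : (0:ℝ) < ((n:ℝ)+1)*((n:ℝ)-1) := by nlinarith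
    nlinarith [h0, hq3]
  refine ⟨part1, ?_⟩
  have hDpos : ∀ k : ℕ, 0 < D k := by
    intro k
    match k with
    | 0 => rw [hD0]; norm_num
    | 1 => rw [hD1]; norm_num
    | (m+2) => exact (key (m+2) (by omega)).2.1
  have hlog : ∀ m : ℕ, 2 ≤ m → Real.log (D (m+1)) + 3*Real.log (D (m-1))
      ≤ 3*Real.log (D m) + Real.log (D (m-2)) := by
    intro m hm
    have h := part1 m hm
    have l1 : Real.log (D (m+1) * (D (m-1))^3) ≤ Real.log ((D m)^3 * D (m-2)) := by
      apply Real.log_le_log _ h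
      exact mul_pos (hDpos _) (pow_pos (hDpos _) 3)
    rw [Real.log_mul (hDpos _).ne' (pow_pos (hDpos _) 3).ne',
        Real.log_mul (pow_pos (hDpos _) 3).ne' (hDpos _).ne',
        Real.log_pow, Real.log_pow] at l1
    push_cast at l1
    linarith
  have hg : ∀ n : ℕ, 2 ≤ n →
      (n:ℝ)*((n:ℝ)-1)*Real.log (D (n+1)) + (n:ℝ)*((n:ℝ)+1)*Real.log (D (n-1))
        - 2*((n:ℝ)^2-1)*Real.log (D n) < 0 := by
    intro n hn
    induction n, hn using Nat.le_induction with
    | base =>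
      norm_num [hD1, hD2, hD3]
      have k1 : Real.log 2893401 < Real.log 4826809 := Real.log_lt_log (by norm_num) (by norm_num)
      have k2 : Real.log (2893401:ℝ) = 2*Real.log 63 + 6*Real.log 3 := by
        rw [show (2893401:ℝ) = 63^2*3^6 by norm_num, Real.log_mul (by norm_num) (by norm_num),
          Real.log_pow, Real.log_pow]
        push_cast
        ring
      have k3 : Real.log (4826809:ℝ) = 6*Real.log 13 := by
        rw [show (4826809:ℝ) = 13^6 by norm_num, Real.log_pow]
        push_cast
        ring
      linarith
    | succ m hm ih =>
      have hstep := hlog (m+1) (by omega)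
      rw [show m+1-1 = m from rfl, show m+1-2 = m-1 from rfl] at hstep
      have hm' : (2:ℝ) ≤ (m:ℝ) := by exact_mod_cast hm
      have hmul : (m:ℝ)*((m:ℝ)+1)*(Real.log (D (m+1+1)) + 3*Real.log (D m)
          - 3*Real.log (D (m+1)) - Real.log (D (m-1))) ≤ 0 :=
        mul_nonpos_of_nonneg_of_nonpos (by positivity) (by linarith)
      rw [show m+1-1 = m from rfl]
      push_cast
      nlinarith [ih, hmul]
  intro n hn
  have hx : (2:ℝ) ≤ (n:ℝ) := by exact_mod_cast hn
  have hgn := hg n hn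
  have hd : (0:ℝ) < (n:ℝ)*((n:ℝ)-1)*((n:ℝ)+1) := by nlinarith
  have hidd : Real.log (D (n+1))/((n:ℝ)+1) + Real.log (D (n-1))/((n:ℝ)-1)
      - 2*(Real.log (D n)/(n:ℝ))
      = ((n:ℝ)*((n:ℝ)-1)*Real.log (D (n+1)) + (n:ℝ)*((n:ℝ)+1)*Real.log (D (n-1))
          - 2*((n:ℝ)^2-1)*Real.log (D n))/((n:ℝ)*((n:ℝ)-1)*((n:ℝ)+1)) := by
    have h1 : ((n:ℝ)-1) ≠ 0 := by linarith
    have h2 : (n:ℝ) ≠ 0 := by linarith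
    have h3 : ((n:ℝ)+1) ≠ 0 := by linarith
    field_simp
    ring
  have hneg := div_neg_of_neg_of_pos hgn hd
  have hsum : Real.log (D (n+1))/((n:ℝ)+1) + Real.log (D (n-1))/((n:ℝ)-1)
      < 2*(Real.log (D n)/(n:ℝ)) := by linarith [hidd, hneg]
  rw [Real.rpow_def_of_pos (hDpos (n+1)), Real.rpow_def_of_pos (hDpos (n-1)),
      Real.rpow_def_of_pos (hDpos n), ← Real.exp_add, sq, ← Real.exp_add]
  apply Real.exp_lt_exp.mpr
  have e1 : Real.log (D (n+1)) * (1/((n:ℝ)+1)) = Real.log (D (n+1))/((n:ℝ)+1) := by ring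
  have e2 : Real.log (D (n-1)) * (1/((n:ℝ)-1)) = Real.log (D (n-1))/((n:ℝ)-1) := by ring
  have e3 : Real.log (D n) * (1/(n:ℝ)) = Real.log (D n)/(n:ℝ) := by ring
  linarith [hsum, e1, e2, e3]
end
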